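/- arXiv:2506.18827 — 8 statements merged into one kernel-verified Lean document; each statement's English description precedes it below -/
import Mathlib

section
/- For every nonempty finite set A ⊆ V and every φ : A → ℝ, there exists a function h : V → ℝ with h|_A = φ such that Energy(h) < ∞ and Energy(h) ≤ Energy(f) for every f : V → ℝ with f|_A = φ. (Existence part of the paper's Proposition 1.3.) -/
open scoped ENNReal

noncomputable section

/-- The Dirichlet energy `(1/2) Σ_{x,y} c(x,y) (f(y) - f(x))²`, valued in `[0,∞]`. -/
def energy {V : Type*} (c : V → V → ℝ) (f : V → ℝ) : ℝ≥0∞ :=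
  (1 / 2 : ℝ≥0∞) * ∑' x : V, ∑' y : V, ENNReal.ofReal (c x y * (f y - f x) ^ 2)

/-- A conductance function: symmetric, nonnegative, vanishing on the diagonal,
connected (via the adjacency relation `0 < c x y`), and with `π(x) = Σ_y c(x,y) < ∞`
for every `x` (expressed as summability of the nonnegative family `c x ·`). -/
def Conductance {V : Type*} (c : V → V → ℝ) : Prop :=
  (∀ x y, c x y = c y x) ∧ (∀ x y, 0 ≤ c x y) ∧ (∀ x, c x x = 0) ∧
  (∀ x y, Relation.ReflTransGen (fun a b => 0 < c a b) x y) ∧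
  (∀ x, Summable fun y => c x y)

namespace EP

variable {V : Type*}

def term (c : V → V → ℝ) (f : V → ℝ) (p : V × V) : ℝ≥0∞ :=
  ENNReal.ofReal (c p.1 p.2 * (f p.2 - f p.1) ^ 2)

lemma tsum_term (c : V → V → ℝ) (f : V → ℝ) :
    ∑' p : V × V, term c f p = 2 * energy c f := by
  simp only [term]
  rw [energy, ENNReal.tsum_prod', ← mul_assoc]
  norm_num [ENNReal.mul_inv_cancel]

lemma ofReal_sum_le (c : V → V → ℝ) (hc0 : ∀ x y, 0 ≤ c x y) (f : V → ℝ)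
    (F : Finset (V × V)) :
    ENNReal.ofReal (∑ p ∈ F, c p.1 p.2 * (f p.2 - f p.1) ^ 2) ≤ 2 * energy c f := by
  rw [ENNReal.ofReal_sum_of_nonneg (fun p _ => mul_nonneg (hc0 _ _) (sq_nonneg _)),
    ← tsum_term]
  exact ENNReal.sum_le_tsum F

lemma two_energy_le (c : V → V → ℝ) (hc0 : ∀ x y, 0 ≤ c x y) (f : V → ℝ) (b : ℝ)
    (h : ∀ F : Finset (V × V), ∑ p ∈ F, c p.1 p.2 * (f p.2 - f p.1) ^ 2 ≤ b) :
    2 * energy c f ≤ ENNReal.ofReal b := by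
  rw [← tsum_term, ENNReal.tsum_eq_iSup_sum]
  refine iSup_le fun F => ?_
  simp only [term]
  rw [← ENNReal.ofReal_sum_of_nonneg (fun p _ => mul_nonneg (hc0 _ _) (sq_nonneg _))]
  exact ENNReal.ofReal_le_ofReal (h F)

lemma edge_sq_le (c : V → V → ℝ) (hc0 : ∀ x y, 0 ≤ c x y) (f : V → ℝ) {E : ℝ≥0∞}
    (hE : E ≠ ⊤) (hf : energy c f ≤ E) {x y : V} (hxy : 0 < c x y) :
    (f y - f x) ^ 2 ≤ (2 * E).toReal / c x y := by
  have h1 : ENNReal.ofReal (c x y * (f y - f x) ^ 2) ≤ 2 * E := by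
    calc ENNReal.ofReal (c x y * (f y - f x) ^ 2) = term c f (x, y) := rfl
      _ ≤ ∑' p : V × V, term c f p := ENNReal.le_tsum _
      _ = 2 * energy c f := tsum_term c f
      _ ≤ 2 * E := by exact mul_le_mul_right hf 2
  have h2 : c x y * (f y - f x) ^ 2 ≤ (2 * E).toReal :=
    (ENNReal.ofReal_le_iff_le_toReal (by finiteness)).mp h1
  rw [le_div_iff₀ hxy]
  linarith [h2]

lemma exists_bound (c : V → V → ℝ) (hc0 : ∀ x y, 0 ≤ c x y) {E : ℝ≥0∞} (hE : E ≠ ⊤)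
    {x y : V} (hxy : Relation.ReflTransGen (fun a b => 0 < c a b) x y) :
    ∃ C : ℝ, ∀ f : V → ℝ, energy c f ≤ E → |f y - f x| ≤ C := by
  induction hxy with
  | refl => exact ⟨0, fun f _ => by simp⟩
  | @tail b y hab hby ih =>
    obtain ⟨C, hC⟩ := ih
    refine ⟨C + Real.sqrt ((2 * E).toReal / c b y), fun f hf => ?_⟩
    have h1 : |f y - f b| ≤ Real.sqrt ((2 * E).toReal / c b y) := by
      rw [← Real.sqrt_sq_eq_abs]
      exact Real.sqrt_le_sqrt (edge_sq_le c hc0 f hE hf hby)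
    calc |f y - f x| = |(f b - f x) + (f y - f b)| := by ring_nf
      _ ≤ |f b - f x| + |f y - f b| := abs_add_le _ _
      _ ≤ C + Real.sqrt ((2 * E).toReal / c b y) := add_le_add (hC f hf) h1


lemma diff_sq_le {K : ℝ} {u v : ℝ} (hu : |u| ≤ K) (hv : |v| ≤ K) :
    (v - u) ^ 2 ≤ (2 * K) ^ 2 := by
  rw [← sq_abs]
  have h1 : |v - u| ≤ 2 * K := by
    calc |v - u| ≤ |v| + |u| := abs_sub _ _
      _ ≤ 2 * K := by linarith
  exact pow_le_pow_left₀ (abs_nonneg _) h1 2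

lemma energy_lt_top_of (c : V → V → ℝ) (hsymm : ∀ x y, c x y = c y x)
    (hc0 : ∀ x y, 0 ≤ c x y) (hsum : ∀ x, Summable fun y => c x y)
    (A : Finset V) (K : ℝ) (g : V → ℝ) (hgK : ∀ x, |g x| ≤ K)
    (hconst : ∀ x ∉ A, ∀ y ∉ A, g x = g y) : energy c g < ⊤ := by
  classical
  set u : V × V → ℝ≥0∞ := fun p =>
    if p.1 ∈ A then ENNReal.ofReal (c p.1 p.2 * (2 * K) ^ 2) else 0 with hu
  set w : V × V → ℝ≥0∞ := fun p =>
    if p.2 ∈ A then ENNReal.ofReal (c p.1 p.2 * (2 * K) ^ 2) else 0 with hw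
  have hbound : ∀ x y : V, term c g (x, y) ≤ ENNReal.ofReal (c x y * (2 * K) ^ 2) :=
    fun x y => ENNReal.ofReal_le_ofReal
      (mul_le_mul_of_nonneg_left (diff_sq_le (hgK x) (hgK y)) (hc0 x y))
  have hterm : ∀ p : V × V, term c g p ≤ u p + w p := by
    rintro ⟨x, y⟩
    by_cases hx : x ∈ A
    · refine le_trans ?_ le_self_add
      simpa only [hu, if_pos hx] using hbound x y
    · by_cases hy : y ∈ A
      · refine le_trans ?_ le_add_self
        simpa only [hw, if_pos hy] using hbound x y
      · have h0 : g y - g x = 0 := by rw [hconst x hx y hy]; ring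
        simp [term, h0]
  have hufin : ∑' p : V × V, u p < ⊤ := by
    rw [ENNReal.tsum_prod']
    have hI : ∀ x, ∑' y : V, u (x, y) =
        if x ∈ A then ENNReal.ofReal (∑' y : V, c x y * (2 * K) ^ 2) else 0 := by
      intro x
      by_cases hx : x ∈ A
      · simp only [hu, if_pos hx]
        rw [ENNReal.ofReal_tsum_of_nonneg (fun y => mul_nonneg (hc0 _ _) (sq_nonneg _))
          ((hsum x).mul_right _)]
      · simp [hu, hx]
    simp only [hI]
    rw [tsum_eq_sum (s := A) (fun x hx => if_neg hx)]
    exact ENNReal.sum_lt_top.mpr fun x _ => by split <;> simp [ENNReal.ofReal_lt_top]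
  have hwfin : ∑' p : V × V, w p < ⊤ := by
    rw [ENNReal.tsum_prod', ENNReal.tsum_comm]
    have hI : ∀ y, ∑' x : V, w (x, y) =
        if y ∈ A then ENNReal.ofReal (∑' x : V, c x y * (2 * K) ^ 2) else 0 := by
      intro y
      by_cases hy : y ∈ A
      · simp only [hw, if_pos hy]
        have hs : Summable fun x => c x y * (2 * K) ^ 2 := by
          have : (fun x => c x y) = fun x => c y x := funext fun x => hsymm x y
          exact Summable.mul_right _ (this ▸ hsum y)
        rw [ENNReal.ofReal_tsum_of_nonneg (fun x => mul_nonneg (hc0 _ _) (sq_nonneg _)) hs]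
      · simp [hw, hy]
    simp only [hI]
    rw [tsum_eq_sum (s := A) (fun y hy => if_neg hy)]
    exact ENNReal.sum_lt_top.mpr fun y _ => by split <;> simp [ENNReal.ofReal_lt_top]
  have h2 : 2 * energy c g < ⊤ := by
    rw [← tsum_term]
    calc ∑' p : V × V, term c g p ≤ ∑' p : V × V, (u p + w p) :=
          ENNReal.tsum_le_tsum hterm
      _ = (∑' p : V × V, u p) + ∑' p : V × V, w p := ENNReal.tsum_add
      _ < ⊤ := ENNReal.add_lt_top.mpr ⟨hufin, hwfin⟩
  have := le_mul_of_one_le_left (zero_le (a := energy c g)) (by norm_num : (1:ℝ≥0∞) ≤ 2)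
  exact lt_of_le_of_lt this h2

end EP

open Topology Filter

/-- Existence of an energy-minimizing extension of boundary data `φ` on a nonempty
finite set `A`: it agrees with `φ` on `A`, has finite energy, and its energy is
minimal among all extensions. -/
theorem stmt0 {V : Type*} [Countable V] [Infinite V]
    (c : V → V → ℝ) (hc : Conductance c)
    (A : Finset V) (hA : A.Nonempty) (φ : V → ℝ) :
    ∃ h : V → ℝ, (∀ a ∈ A, h a = φ a) ∧ energy c h < ⊤ ∧
      ∀ f : V → ℝ, (∀ a ∈ A, f a = φ a) → energy c h ≤ energy c f := by
  classical
  obtain ⟨hsymm, hc0, hdiag, hconn, hsum⟩ := hc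
  obtain ⟨a₀, ha₀⟩ := hA
  set g : V → ℝ := fun x => if x ∈ A then φ x else φ a₀ with hg
  have hgK : ∀ x, |g x| ≤ A.sup' ⟨a₀, ha₀⟩ fun a => |φ a| := by
    intro x
    by_cases hx : x ∈ A
    · simp only [hg, if_pos hx]; exact Finset.le_sup' (fun a => |φ a|) hx
    · simp only [hg, if_neg hx]; exact Finset.le_sup' (fun a => |φ a|) ha₀
  have hgfin : energy c g < ⊤ := EP.energy_lt_top_of c hsymm hc0 hsum A _ g hgK
      (fun x hx y hy => by simp only [hg, if_neg hx, if_neg hy])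
  set m : ℝ≥0∞ := ⨅ (f : V → ℝ) (_ : ∀ a ∈ A, f a = φ a), energy c f with hm
  have hmle : ∀ f, (∀ a ∈ A, f a = φ a) → m ≤ energy c f := fun f hf => iInf₂_le f hf
  have hmfin : m < ⊤ := lt_of_le_of_lt
    (hmle g fun a ha => by simp only [hg, if_pos ha]) hgfin
  have hseq : ∀ n : ℕ, ∃ f : V → ℝ, (∀ a ∈ A, f a = φ a) ∧
      energy c f < m + 1 / ((n : ℝ≥0∞) + 1) := by
    intro n
    have hne : (1 : ℝ≥0∞) / ((n : ℝ≥0∞) + 1) ≠ 0 := by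
      rw [one_div]
      exact ENNReal.inv_ne_zero.mpr (by finiteness)
    have hlt : m < m + 1 / ((n : ℝ≥0∞) + 1) := ENNReal.lt_add_right hmfin.ne hne
    rw [hm] at hlt
    obtain ⟨f, hf⟩ := iInf_lt_iff.mp hlt
    obtain ⟨hfA, hflt⟩ := iInf_lt_iff.mp hf
    exact ⟨f, hfA, hflt⟩
  choose F hFA hFlt using hseq
  have hm1fin : m + 1 ≠ ⊤ := ENNReal.add_ne_top.mpr ⟨hmfin.ne, ENNReal.one_ne_top⟩
  have hFle1 : ∀ n, energy c (F n) ≤ m + 1 := by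
    intro n
    refine le_trans (hFlt n).le (add_le_add_right ?_ m)
    rw [one_div]
    exact ENNReal.inv_le_one.mpr le_add_self
  have hbdd : ∀ x : V, ∃ C : ℝ, ∀ n, |F n x| ≤ C := by
    intro x
    obtain ⟨C, hC⟩ := EP.exists_bound c hc0 hm1fin (hconn a₀ x)
    refine ⟨C + |φ a₀|, fun n => ?_⟩
    have h1 := hC (F n) (hFle1 n)
    have ha : F n a₀ = φ a₀ := hFA n a₀ ha₀
    calc |F n x| = |(F n x - F n a₀) + F n a₀| := by rw [sub_add_cancel]
      _ ≤ |F n x - F n a₀| + |F n a₀| := abs_add_le _ _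
      _ ≤ C + |F n a₀| := add_le_add_left h1 _
      _ = C + |φ a₀| := by rw [ha]
  obtain ⟨U, hU⟩ := Ultrafilter.exists_le (Filter.atTop : Filter ℕ)
  have hlim0 : ∀ x : V, ∃ r : ℝ, Filter.Tendsto (fun n => F n x) ↑U (𝓝 r) := by
    intro x
    obtain ⟨C, hC⟩ := hbdd x
    have hmem : ↑(U.map fun n => F n x) ≤ Filter.principal (Set.Icc (-C) C) := by
      rw [Filter.le_principal_iff, Ultrafilter.coe_map, Filter.mem_map]
      exact Filter.univ_mem' fun n => abs_le.mp (hC n)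
    obtain ⟨r, _, hr⟩ := isCompact_Icc.ultrafilter_le_nhds _ hmem
    exact ⟨r, hr⟩
  choose h hlim using hlim0
  have hhA : ∀ a ∈ A, h a = φ a := by
    intro a ha
    have h1 := hlim a
    rw [show (fun n => F n a) = fun _ => φ a from funext fun n => hFA n a ha] at h1
    exact tendsto_nhds_unique h1 tendsto_const_nhds
  have h2m : 2 * m ≠ ⊤ := ENNReal.mul_ne_top ENNReal.ofNat_ne_top hmfin.ne
  have hsum_le : ∀ Fs : Finset (V × V),
      ∑ p ∈ Fs, c p.1 p.2 * (h p.2 - h p.1) ^ 2 ≤ 2 * m.toReal := by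
    intro Fs
    have htend : Filter.Tendsto
        (fun n => ∑ p ∈ Fs, c p.1 p.2 * (F n p.2 - F n p.1) ^ 2) ↑U
        (𝓝 (∑ p ∈ Fs, c p.1 p.2 * (h p.2 - h p.1) ^ 2)) :=
      tendsto_finset_sum _ fun p _ =>
        (((hlim p.2).sub (hlim p.1)).pow 2).const_mul _
    have hub : ∀ n : ℕ, ∑ p ∈ Fs, c p.1 p.2 * (F n p.2 - F n p.1) ^ 2
        ≤ 2 * m.toReal + 2 / ((n : ℝ) + 1) := by
      intro n
      have h1 := EP.ofReal_sum_le c hc0 (F n) Fs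
      have h2 : 2 * energy c (F n) ≤ 2 * m + 2 / ((n : ℝ≥0∞) + 1) := by
        calc 2 * energy c (F n) ≤ 2 * (m + 1 / ((n : ℝ≥0∞) + 1)) :=
              mul_le_mul_right (hFlt n).le 2
          _ = 2 * m + 2 / ((n : ℝ≥0∞) + 1) := by rw [mul_add, mul_one_div]
      have hdivne : (2 : ℝ≥0∞) / ((n : ℝ≥0∞) + 1) ≠ ⊤ :=
        (ENNReal.div_lt_top ENNReal.ofNat_ne_top (by simp)).ne
      have hfin : 2 * m + 2 / ((n : ℝ≥0∞) + 1) ≠ ⊤ :=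
        ENNReal.add_ne_top.mpr ⟨h2m, hdivne⟩
      have h4 := (ENNReal.ofReal_le_iff_le_toReal hfin).mp (h1.trans h2)
      have heq : (2 * m + 2 / ((n : ℝ≥0∞) + 1)).toReal
          = 2 * m.toReal + 2 / ((n : ℝ) + 1) := by
        rw [ENNReal.toReal_add h2m hdivne, ENNReal.toReal_mul, ENNReal.toReal_div,
          ENNReal.toReal_add (by finiteness) (by finiteness)]
        norm_num
      rwa [heq] at h4
    have hrhs : Filter.Tendsto (fun n : ℕ => 2 * m.toReal + 2 / ((n : ℝ) + 1)) ↑U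
        (𝓝 (2 * m.toReal)) := by
      have h0 : Filter.Tendsto (fun n : ℕ => 2 / ((n : ℝ) + 1)) Filter.atTop (𝓝 0) :=
        Filter.Tendsto.div_atTop tendsto_const_nhds
          (Filter.tendsto_atTop_add_const_right _ 1 tendsto_natCast_atTop_atTop)
      have h1 : Filter.Tendsto (fun n : ℕ => 2 * m.toReal + 2 / ((n : ℝ) + 1))
          Filter.atTop (𝓝 (2 * m.toReal + 0)) := Filter.Tendsto.add tendsto_const_nhds h0
      simpa using h1.mono_left hU
    exact le_of_tendsto_of_tendsto' htend hrhs hub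
  have h2e : 2 * energy c h ≤ ENNReal.ofReal (2 * m.toReal) :=
    EP.two_energy_le c hc0 h _ hsum_le
  have heq2 : ENNReal.ofReal (2 * m.toReal) = 2 * m := by
    rw [show (2 : ℝ) * m.toReal = (2 * m : ℝ≥0∞).toReal from by
      rw [ENNReal.toReal_mul, ENNReal.toReal_ofNat],
      ENNReal.ofReal_toReal h2m]
  have hle : energy c h ≤ m :=
    (ENNReal.mul_le_mul_iff_right two_ne_zero ENNReal.ofNat_ne_top).mp (h2e.trans_eq heq2)
  exact ⟨h, hhA, lt_of_le_of_lt hle hmfin, fun f hf => hle.trans (hmle f hf)⟩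
end
end

section
/- Let A ⊆ V be a nonempty finite set. For all φ, ψ : A → ℝ and all a ∈ ℝ, the energy-minimizing extensions satisfy h^{φ + aψ}(x) = h^φ(x) + a·h^ψ(x) for every x ∈ V; that is, the map φ ↦ h^φ is linear. (Linearity part of the paper's Proposition 1.3.) -/
open scoped ENNReal

noncomputable section

namespace DirichletAux

variable {V : Type*}

/-- Quadratic term of the energy, as a function on pairs. -/
def Q (c : V → V → ℝ) (f : V → ℝ) (p : V × V) : ℝ :=
  c p.1 p.2 * (f p.2 - f p.1) ^ 2

/-- Bilinear cross term. -/
def Bl (c : V → V → ℝ) (f g : V → ℝ) (p : V × V) : ℝ :=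
  c p.1 p.2 * ((f p.2 - f p.1) * (g p.2 - g p.1))

lemma Q_nonneg {c : V → V → ℝ} (hc : ∀ x y, 0 ≤ c x y) (f : V → ℝ) (p : V × V) :
    0 ≤ Q c f p :=
  mul_nonneg (hc _ _) (sq_nonneg _)

lemma energy_eq_tsum_prod (c : V → V → ℝ) (f : V → ℝ) :
    energy c f = (1 / 2 : ℝ≥0∞) * ∑' p : V × V, ENNReal.ofReal (Q c f p) := by
  rw [energy, ENNReal.tsum_prod']
  rfl

lemma energy_eq_ofReal {c : V → V → ℝ} (hc : ∀ x y, 0 ≤ c x y) {f : V → ℝ}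
    (hf : Summable (Q c f)) :
    energy c f = ENNReal.ofReal ((1 / 2) * ∑' p : V × V, Q c f p) := by
  rw [energy_eq_tsum_prod, ← ENNReal.ofReal_tsum_of_nonneg (Q_nonneg hc f) hf,
    ENNReal.ofReal_mul (by norm_num)]
  congr 1
  rw [ENNReal.ofReal_div_of_pos (by norm_num)]
  norm_num

lemma summable_of_energy_ne_top {c : V → V → ℝ} (hc : ∀ x y, 0 ≤ c x y) {f : V → ℝ}
    (hf : energy c f ≠ ⊤) : Summable (Q c f) := by
  rw [energy_eq_tsum_prod] at hf
  have h2 : (∑' p : V × V, ENNReal.ofReal (Q c f p)) ≠ ⊤ := by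
    intro h
    rw [h] at hf
    simp [ENNReal.mul_top] at hf
  have : ∀ p : V × V, ENNReal.ofReal (Q c f p) = ((Q c f p).toNNReal : ℝ≥0∞) := fun p => rfl
  rw [funext this] at h2
  have hs := ENNReal.tsum_coe_ne_top_iff_summable.mp h2
  have := NNReal.summable_coe.mpr hs
  refine this.congr fun p => ?_
  exact Real.coe_toNNReal _ (Q_nonneg hc f p)

lemma energy_le_energy_real {c : V → V → ℝ} (hc : ∀ x y, 0 ≤ c x y) {f g : V → ℝ}
    (hf : Summable (Q c f)) (hg : Summable (Q c g))
    (h : energy c f ≤ energy c g) :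
    (∑' p : V × V, Q c f p) ≤ ∑' p : V × V, Q c g p := by
  rw [energy_eq_ofReal hc hf, energy_eq_ofReal hc hg] at h
  have h' := (ENNReal.ofReal_le_ofReal_iff
    (mul_nonneg (by norm_num) (tsum_nonneg fun p => Q_nonneg hc g p))).mp h
  linarith

lemma energy_le_of_real_le {c : V → V → ℝ} (hc : ∀ x y, 0 ≤ c x y) {f g : V → ℝ}
    (hf : Summable (Q c f)) (hg : Summable (Q c g))
    (h : (∑' p : V × V, Q c f p) ≤ ∑' p : V × V, Q c g p) :
    energy c f ≤ energy c g := by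
  rw [energy_eq_ofReal hc hf, energy_eq_ofReal hc hg]
  exact ENNReal.ofReal_le_ofReal (by linarith)

/-- Summability of the cross term. -/
lemma summable_Bl {c : V → V → ℝ} (hc : ∀ x y, 0 ≤ c x y) {f g : V → ℝ}
    (hf : Summable (Q c f)) (hg : Summable (Q c g)) : Summable (Bl c f g) := by
  apply Summable.of_abs
  refine Summable.of_nonneg_of_le (fun p => abs_nonneg _) (f := fun p =>
      (1 / 2) * Q c f p + (1 / 2) * Q c g p) ?_ ((hf.mul_left _).add (hg.mul_left _))
  intro p
  have habs : |Bl c f g p| = c p.1 p.2 * |(f p.2 - f p.1) * (g p.2 - g p.1)| := by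
    rw [Bl, abs_mul, abs_of_nonneg (hc _ _)]
  rw [habs]
  simp only [Q]
  rw [abs_mul]
  have h1 : |f p.2 - f p.1| * |g p.2 - g p.1| ≤
        (1 / 2) * (f p.2 - f p.1) ^ 2 + (1 / 2) * (g p.2 - g p.1) ^ 2 := by
      nlinarith [sq_nonneg (|f p.2 - f p.1| - |g p.2 - g p.1|), sq_abs (f p.2 - f p.1),
        sq_abs (g p.2 - g p.1)]
  nlinarith [hc p.1 p.2]

lemma Q_combo (c : V → V → ℝ) (f g : V → ℝ) (α β : ℝ) (p : V × V) :
    Q c (fun x => α * f x + β * g x) p =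
      α ^ 2 * Q c f p + (2 * α * β) * Bl c f g p + β ^ 2 * Q c g p := by
  simp only [Q, Bl]
  ring

lemma summable_Q_combo {c : V → V → ℝ} (hc : ∀ x y, 0 ≤ c x y) {f g : V → ℝ}
    (hf : Summable (Q c f)) (hg : Summable (Q c g)) (α β : ℝ) :
    Summable (Q c (fun x => α * f x + β * g x)) := by
  have := ((hf.mul_left (α ^ 2)).add ((summable_Bl hc hf hg).mul_left (2 * α * β))).add
    (hg.mul_left (β ^ 2))
  exact this.congr fun p => (Q_combo c f g α β p).symm

lemma tsum_Q_combo {c : V → V → ℝ} (hc : ∀ x y, 0 ≤ c x y) {f g : V → ℝ}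
    (hf : Summable (Q c f)) (hg : Summable (Q c g)) (α β : ℝ) :
    (∑' p : V × V, Q c (fun x => α * f x + β * g x) p) =
      α ^ 2 * (∑' p : V × V, Q c f p) + (2 * α * β) * (∑' p : V × V, Bl c f g p)
        + β ^ 2 * (∑' p : V × V, Q c g p) := by
  have h1 : (∑' p : V × V, Q c (fun x => α * f x + β * g x) p) =
      ∑' p : V × V, (α ^ 2 * Q c f p + (2 * α * β) * Bl c f g p + β ^ 2 * Q c g p) :=
    tsum_congr fun p => Q_combo c f g α β p
  rw [h1, Summable.tsum_add ((hf.mul_left (α ^ 2)).add ((summable_Bl hc hf hg).mul_left (2 * α * β)))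
    (hg.mul_left (β ^ 2)), Summable.tsum_add (hf.mul_left (α ^ 2))
    ((summable_Bl hc hf hg).mul_left (2 * α * β)), tsum_mul_left, tsum_mul_left, tsum_mul_left]

open scoped Classical in
/-- The trivial extension (boundary values on `A`, zero elsewhere) has finite energy. -/
lemma summable_Q_trivialExt {c : V → V → ℝ} (hsym : ∀ x y, c x y = c y x)
    (hc : ∀ x y, 0 ≤ c x y) (hπ : ∀ x, Summable fun y => c x y)
    (A : Finset V) (β : V → ℝ) :
    Summable (Q c (fun x => if x ∈ A then β x else 0)) := by
  classical
  set f0 : V → ℝ := fun x => if x ∈ A then β x else 0 with hf0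
  obtain ⟨K, hK0, hK⟩ : ∃ K : ℝ, 0 ≤ K ∧ ∀ x, f0 x ^ 2 ≤ K := by
    classical
    refine ⟨(A.sum fun v => β v ^ 2), Finset.sum_nonneg fun v _ => sq_nonneg _, fun x => ?_⟩
    by_cases hx : x ∈ A
    · simp only [hf0, if_pos hx]
      exact Finset.single_le_sum (fun v _ => sq_nonneg (β v)) hx
    · simp only [hf0, if_neg hx]
      simpa using Finset.sum_nonneg fun v _ => sq_nonneg (β v)
  have hrow : Summable fun p : V × V => if p.1 ∈ A then c p.1 p.2 else 0 := by
    rw [summable_prod_of_nonneg (f := fun p : V × V => if p.1 ∈ A then c p.1 p.2 else 0)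
      (fun p => by by_cases h : p.1 ∈ A <;> simp [h, hc _ _])]
    constructor
    · intro x
      by_cases hx : x ∈ A
      · simp only [hx, if_true]; exact hπ x
      · simp only [hx, if_false]; exact summable_zero
    · apply summable_of_ne_finset_zero (s := A)
      intro x hx
      simp [hx]
  have hcol : Summable fun p : V × V => if p.2 ∈ A then c p.1 p.2 else 0 := by
    have := hrow.comp_injective (Equiv.prodComm V V).injective
    refine this.congr fun p => ?_
    simp only [Function.comp, Equiv.prodComm_apply, Prod.snd_swap, Prod.fst_swap]
    rw [hsym]
    exact if_congr Iff.rfl rfl rfl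
  refine Summable.of_nonneg_of_le (Q_nonneg hc f0)
    (f := fun p : V × V => (4 * K) * ((if p.1 ∈ A then c p.1 p.2 else 0) +
      (if p.2 ∈ A then c p.1 p.2 else 0))) ?_ ((hrow.add hcol).mul_left _)
  intro p
  have hQ : Q c f0 p = c p.1 p.2 * (f0 p.2 - f0 p.1) ^ 2 := rfl
  show Q c f0 p ≤ 4 * K * ((if p.1 ∈ A then c p.1 p.2 else 0) +
    if p.2 ∈ A then c p.1 p.2 else 0)
  by_cases h1 : p.1 ∈ A <;> by_cases h2 : p.2 ∈ A <;>
    simp only [h1, h2, if_true, if_false, add_zero, zero_add] <;> rw [hQ]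
  · nlinarith [hc p.1 p.2, hK p.1, hK p.2, sq_nonneg (f0 p.2 - f0 p.1),
      sq_nonneg (f0 p.2 + f0 p.1)]
  · nlinarith [hc p.1 p.2, hK p.1, hK p.2, sq_nonneg (f0 p.2 - f0 p.1),
      sq_nonneg (f0 p.2 + f0 p.1)]
  · nlinarith [hc p.1 p.2, hK p.1, hK p.2, sq_nonneg (f0 p.2 - f0 p.1),
      sq_nonneg (f0 p.2 + f0 p.1)]
  · have e1 : f0 p.1 = 0 := by simp [hf0, h1]
    have e2 : f0 p.2 = 0 := by simp [hf0, h2]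
    rw [e1, e2]
    norm_num

/-- A minimizer over extensions of a boundary function has summable energy. -/
lemma minimizer_summable {c : V → V → ℝ} (hsym : ∀ x y, c x y = c y x)
    (hc : ∀ x y, 0 ≤ c x y) (hπ : ∀ x, Summable fun y => c x y)
    (A : Finset V) (β : V → ℝ) {h : V → ℝ}
    (hm : ∀ f : V → ℝ, (∀ v ∈ A, f v = β v) → energy c h ≤ energy c f) :
    Summable (Q c h) := by
  classical
  have h0 := summable_Q_trivialExt hsym hc hπ A β
  have hfin : energy c (fun x => if x ∈ A then β x else 0) ≠ ⊤ := by
    rw [energy_eq_ofReal hc h0]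
    exact ENNReal.ofReal_ne_top
  apply summable_of_energy_ne_top hc
  exact ne_top_of_le_ne_top hfin (hm _ fun v hv => if_pos hv)

/-- First variation: the cross term of a minimizer against any finite-energy
function vanishing on `A` is zero. -/
lemma cross_eq_zero {c : V → V → ℝ} (hsym : ∀ x y, c x y = c y x)
    (hc : ∀ x y, 0 ≤ c x y) (hπ : ∀ x, Summable fun y => c x y)
    (A : Finset V) (β : V → ℝ) {h u : V → ℝ}
    (hb : ∀ v ∈ A, h v = β v)
    (hm : ∀ f : V → ℝ, (∀ v ∈ A, f v = β v) → energy c h ≤ energy c f)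
    (hu0 : ∀ v ∈ A, u v = 0) (hu : Summable (Q c u)) :
    (∑' p : V × V, Bl c h u p) = 0 := by
  have hh : Summable (Q c h) := minimizer_summable hsym hc hπ A β hm
  set B := ∑' p : V × V, Bl c h u p with hB
  set Eu := ∑' p : V × V, Q c u p with hEu
  have hEu0 : 0 ≤ Eu := tsum_nonneg fun p => Q_nonneg hc u p
  have key : ∀ t : ℝ, 0 ≤ 2 * t * B + t ^ 2 * Eu := by
    intro t
    have hext : ∀ v ∈ A, (fun x => 1 * h x + t * u x) v = β v := by
      intro v hv
      simp [hb v hv, hu0 v hv]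
    have hle := hm _ hext
    have hsum : Summable (Q c (fun x => 1 * h x + t * u x)) := summable_Q_combo hc hh hu 1 t
    have := energy_le_energy_real hc hh hsum hle
    rw [tsum_Q_combo hc hh hu 1 t] at this
    nlinarith [this]
  have hpos : (0 : ℝ) < Eu + 1 := by linarith
  by_contra hBne
  have hB2 : 0 < B ^ 2 := by positivity
  have ht := key (-(B / (Eu + 1)))
  have hexp : 2 * (-(B / (Eu + 1))) * B + (-(B / (Eu + 1))) ^ 2 * Eu
      = (B ^ 2 / (Eu + 1)) * (Eu / (Eu + 1) - 2) := by
    field_simp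
    ring
  rw [hexp] at ht
  have hs1 : Eu / (Eu + 1) < 1 := (div_lt_one hpos).mpr (by linarith)
  have hneg : (B ^ 2 / (Eu + 1)) * (Eu / (Eu + 1) - 2) < 0 :=
    mul_neg_of_pos_of_neg (div_pos hB2 hpos) (by linarith)
  linarith

end DirichletAux

open DirichletAux in
/-- Linearity of `φ ↦ h^φ`: if `hφ`, `hψ` and `hs` are the energy-minimizing
extensions of the boundary values `φ`, `ψ` and `φ + a·ψ` on `A`, respectively,
then `hs = hφ + a·hψ` everywhere. -/
theorem stmt3 {V : Type*} [Countable V] [Infinite V]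
    (c : V → V → ℝ) (hc : Conductance c)
    (A : Finset V) (hA : A.Nonempty) (φ ψ : V → ℝ) (a : ℝ)
    (hφ hψ hs : V → ℝ)
    (hbφ : ∀ v ∈ A, hφ v = φ v)
    (hmφ : ∀ f : V → ℝ, (∀ v ∈ A, f v = φ v) → energy c hφ ≤ energy c f)
    (hbψ : ∀ v ∈ A, hψ v = ψ v)
    (hmψ : ∀ f : V → ℝ, (∀ v ∈ A, f v = ψ v) → energy c hψ ≤ energy c f)
    (hbs : ∀ v ∈ A, hs v = φ v + a * ψ v)
    (hms : ∀ f : V → ℝ, (∀ v ∈ A, f v = φ v + a * ψ v) → energy c hs ≤ energy c f) :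
    ∀ x, hs x = hφ x + a * hψ x := by
  obtain ⟨hsym, hnn, hdiag, hconn, hπ⟩ := hc
  -- summability of all three minimizers
  have hQφ : Summable (Q c hφ) := minimizer_summable hsym hnn hπ A φ hmφ
  have hQψ : Summable (Q c hψ) := minimizer_summable hsym hnn hπ A ψ hmψ
  have hQs : Summable (Q c hs) := minimizer_summable hsym hnn hπ A (fun v => φ v + a * ψ v) hms
  -- the candidate g = hφ + a·hψ
  set g : V → ℝ := fun x => 1 * hφ x + a * hψ x with hgdef
  have hQg : Summable (Q c g) := summable_Q_combo hnn hQφ hQψ 1 a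
  have hgb : ∀ v ∈ A, g v = φ v + a * ψ v := by
    intro v hv
    show 1 * hφ v + a * hψ v = φ v + a * ψ v
    rw [hbφ v hv, hbψ v hv]; ring
  -- g is also a minimizer
  have hgmin : ∀ f : V → ℝ, (∀ v ∈ A, f v = φ v + a * ψ v) → energy c g ≤ energy c f := by
    intro f hf
    by_cases hftop : energy c f = ⊤
    · rw [hftop]; exact le_top
    have hQf : Summable (Q c f) := summable_of_energy_ne_top hnn hftop
    set u : V → ℝ := fun x => 1 * f x + (-1) * g x with hudef
    have hQu : Summable (Q c u) := summable_Q_combo hnn hQf hQg 1 (-1)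
    have hu0 : ∀ v ∈ A, u v = 0 := by
      intro v hv
      show 1 * f v + (-1) * g v = 0
      rw [hf v hv, hgb v hv]; ring
    -- cross terms vanish
    have hcφ : (∑' p : V × V, Bl c hφ u p) = 0 :=
      cross_eq_zero hsym hnn hπ A φ hbφ hmφ hu0 hQu
    have hcψ : (∑' p : V × V, Bl c hψ u p) = 0 :=
      cross_eq_zero hsym hnn hπ A ψ hbψ hmψ hu0 hQu
    have hBgu : (∑' p : V × V, Bl c g u p) = 0 := by
      have hpt : ∀ p : V × V, Bl c g u p = 1 * Bl c hφ u p + a * Bl c hψ u p := by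
        intro p; simp only [Bl, hgdef]; ring
      have hsφ := summable_Bl hnn hQφ hQu
      have hsψ := summable_Bl hnn hQψ hQu
      calc (∑' p : V × V, Bl c g u p)
          = ∑' p : V × V, (1 * Bl c hφ u p + a * Bl c hψ u p) := tsum_congr hpt
        _ = (∑' p : V × V, 1 * Bl c hφ u p) + ∑' p : V × V, a * Bl c hψ u p :=
            Summable.tsum_add (hsφ.mul_left 1) (hsψ.mul_left a)
        _ = 0 := by rw [tsum_mul_left, tsum_mul_left, hcφ, hcψ]; ring
    -- f = g + u, so E f = E g + E u ≥ E g
    have hfeq : f = fun x => 1 * g x + 1 * u x := by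
      funext x
      show f x = 1 * g x + 1 * (1 * f x + (-1) * g x)
      ring
    apply energy_le_of_real_le hnn hQg hQf
    have : (∑' p : V × V, Q c f p) = ∑' p : V × V, Q c (fun x => 1 * g x + 1 * u x) p := by
      rw [← hfeq]
    rw [this, tsum_Q_combo hnn hQg hQu 1 1, hBgu]
    have hEu0 : 0 ≤ ∑' p : V × V, Q c u p := tsum_nonneg fun p => Q_nonneg hnn u p
    nlinarith
  -- now uniqueness: hs = g
  -- midpoint m and half-difference d
  set m : V → ℝ := fun x => (1 / 2) * hs x + (1 / 2) * g x with hmdef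
  set d : V → ℝ := fun x => (1 / 2) * hs x + (-(1 / 2)) * g x with hddef
  have hQm : Summable (Q c m) := summable_Q_combo hnn hQs hQg (1 / 2) (1 / 2)
  have hQd : Summable (Q c d) := summable_Q_combo hnn hQs hQg (1 / 2) (-(1 / 2))
  -- energies of hs and g are equal
  have h1 : (∑' p : V × V, Q c hs p) ≤ ∑' p : V × V, Q c g p :=
    energy_le_energy_real hnn hQs hQg (hms g hgb)
  have h2 : (∑' p : V × V, Q c g p) ≤ ∑' p : V × V, Q c hs p :=
    energy_le_energy_real hnn hQg hQs (hgmin hs hbs)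
  -- m extends the boundary, so E hs ≤ E m
  have hmb : ∀ v ∈ A, m v = φ v + a * ψ v := by
    intro v hv
    show (1 / 2) * hs v + (1 / 2) * g v = φ v + a * ψ v
    rw [hbs v hv, hgb v hv]; ring
  have h3 : (∑' p : V × V, Q c hs p) ≤ ∑' p : V × V, Q c m p :=
    energy_le_energy_real hnn hQs hQm (hms m hmb)
  -- parallelogram identity pointwise
  have hpar : ∀ p : V × V, Q c m p + Q c d p = (1 / 2) * Q c hs p + (1 / 2) * Q c g p := by
    intro p
    simp only [Q, hmdef, hddef]
    ring
  have hparsum : (∑' p : V × V, Q c m p) + (∑' p : V × V, Q c d p) =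
      (1 / 2) * (∑' p : V × V, Q c hs p) + (1 / 2) * (∑' p : V × V, Q c g p) := by
    rw [← Summable.tsum_add hQm hQd, ← tsum_mul_left, ← tsum_mul_left,
      ← Summable.tsum_add (hQs.mul_left _) (hQg.mul_left _)]
    exact tsum_congr hpar
  -- hence E d ≤ 0, so E d = 0
  have hEd : (∑' p : V × V, Q c d p) = 0 := by
    have hEd0 : 0 ≤ ∑' p : V × V, Q c d p := tsum_nonneg fun p => Q_nonneg hnn d p
    linarith
  -- each term is zero
  have hterm : ∀ p : V × V, Q c d p = 0 := by
    intro p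
    have hle : Q c d p ≤ ∑' q : V × V, Q c d q :=
      Summable.le_tsum hQd p fun q _ => Q_nonneg hnn d q
    have := Q_nonneg hnn d p
    linarith [hle.trans_eq hEd]
  -- d is constant along edges
  have hedge : ∀ x y : V, 0 < c x y → d x = d y := by
    intro x y hxy
    have h0 := hterm (x, y)
    simp only [Q] at h0
    have : (d y - d x) ^ 2 = 0 := by
      by_contra hne
      have hpos : 0 < (d y - d x) ^ 2 := lt_of_le_of_ne (sq_nonneg _) (Ne.symm hne)
      nlinarith
    have := pow_eq_zero_iff (n := 2) (by norm_num) |>.mp this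
    linarith [sub_eq_zero.mp this]
  -- d vanishes on A
  obtain ⟨v, hv⟩ := hA
  have hdv : d v = 0 := by
    show (1 / 2) * hs v + (-(1 / 2)) * g v = 0
    rw [hbs v hv, hgb v hv]; ring
  -- connectedness: d is identically zero
  have hconst : ∀ x y : V, d x = d y := by
    intro x y
    have hwalk := hconn x y
    induction hwalk with
    | refl => rfl
    | tail _ hbc ih => rw [ih, hedge _ _ hbc]
  have hdx : ∀ x, d x = 0 := fun x => (hconst x v).trans hdv
  intro x
  have hx := hdx x
  have hx' : (1 / 2) * hs x + (-(1 / 2)) * (1 * hφ x + a * hψ x) = 0 := hx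
  linarith
end
end

section
/- Let A ⊆ V be a nonempty finite set. Suppose (f_n)_{n≥1} is a sequence of functions V → ℝ with f_n|_A ≡ 0 and Energy(f_n) < ∞ for each n, and θ is an edge function with Energy(θ) < ∞ such that Energy(∇f_n − θ) → 0 as n → ∞. Then there exists f : V → ℝ with f|_A ≡ 0 and ∇f = θ. (This is the closedness of the subspace Θ̊_A of gradients of functions vanishing on A, proved in the paper's Lemma 2.1.) -/
open scoped ENNReal

noncomputable section

/-- An edge function: antisymmetric and supported on edges (`c x y > 0`). -/
def IsEdgeFn {V : Type*} (c : V → V → ℝ) (θ : V → V → ℝ) : Prop :=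
  (∀ x y, θ x y = -θ y x) ∧ ∀ x y, c x y = 0 → θ x y = 0

/-- The energy `(1/2) Σ_{x,y : c(x,y)>0} θ(x,y)²/c(x,y)` of an edge function. -/
def edgeEnergy {V : Type*} (c : V → V → ℝ) (θ : V → V → ℝ) : ℝ≥0∞ :=
  (1 / 2 : ℝ≥0∞) *
    ∑' x : V, ∑' y : V, ENNReal.ofReal (if 0 < c x y then θ x y ^ 2 / c x y else 0)

/-- The gradient `∇f(x,y) = c(x,y)(f(y) - f(x))` of a function on vertices. -/
def grad {V : Type*} (c : V → V → ℝ) (f : V → ℝ) : V → V → ℝ :=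
  fun x y => c x y * (f y - f x)

/-- A single edge term is bounded by twice the edge energy. -/
lemma term_le_two_edgeEnergy {V : Type*} (c : V → V → ℝ) (ψ : V → V → ℝ)
    {x y : V} (hxy : 0 < c x y) :
    ENNReal.ofReal (ψ x y ^ 2 / c x y) ≤ 2 * edgeEnergy c ψ := by
  have h1 : ENNReal.ofReal (if 0 < c x y then ψ x y ^ 2 / c x y else 0)
      ≤ ∑' b, ENNReal.ofReal (if 0 < c x b then ψ x b ^ 2 / c x b else 0) :=
    ENNReal.le_tsum y
  have h2 : (∑' b, ENNReal.ofReal (if 0 < c x b then ψ x b ^ 2 / c x b else 0))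
      ≤ ∑' a, ∑' b, ENNReal.ofReal (if 0 < c a b then ψ a b ^ 2 / c a b else 0) :=
    ENNReal.le_tsum x
  rw [if_pos hxy] at h1
  have h3 : (2 : ℝ≥0∞) * edgeEnergy c ψ
      = ∑' a, ∑' b, ENNReal.ofReal (if 0 < c a b then ψ a b ^ 2 / c a b else 0) := by
    rw [edgeEnergy, ← mul_assoc, show (2:ℝ≥0∞) * (1/2) = 1 by
      rw [one_div]; exact ENNReal.mul_inv_cancel two_ne_zero ENNReal.ofNat_ne_top, one_mul]
  rw [h3]
  exact h1.trans h2

/-- Closedness of the space of gradients of functions vanishing on `A`: if the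
gradients `∇f_n` of finite-energy functions vanishing on `A` converge in energy
to a finite-energy edge function `θ`, then `θ = ∇f` for some `f` vanishing on `A`. -/
theorem stmt5 {V : Type*} [Countable V] [Infinite V]
    (c : V → V → ℝ) (hc : Conductance c)
    (A : Finset V) (hA : A.Nonempty)
    (f : ℕ → V → ℝ)
    (hf0 : ∀ n, ∀ a ∈ A, f n a = 0)
    (hfE : ∀ n, energy c (f n) < ⊤)
    (θ : V → V → ℝ) (hθ : IsEdgeFn c θ) (hθE : edgeEnergy c θ < ⊤)
    (hconv : Filter.Tendsto (fun n => edgeEnergy c (fun x y => grad c (f n) x y - θ x y))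
      Filter.atTop (nhds 0)) :
    ∃ g : V → ℝ, (∀ a ∈ A, g a = 0) ∧ grad c g = θ := by
  obtain ⟨hsym, hnn, hdiag, hconn, hsum⟩ := hc
  obtain ⟨a0, ha0⟩ := hA
  -- pointwise convergence of differences along edges
  have key : ∀ x y, 0 < c x y →
      Filter.Tendsto (fun n => f n y - f n x) Filter.atTop (nhds (θ x y / c x y)) := by
    intro x y hxy
    set d : ℕ → ℝ := fun n => grad c (f n) x y - θ x y with hd
    have hE2 : Filter.Tendsto
        (fun n => 2 * edgeEnergy c (fun a b => grad c (f n) a b - θ a b))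
        Filter.atTop (nhds 0) := by
      have := ENNReal.Tendsto.const_mul hconv (Or.inr (ENNReal.ofNat_ne_top (n := 2)))
      simpa using this
    have hofReal : Filter.Tendsto (fun n => ENNReal.ofReal (d n ^ 2 / c x y))
        Filter.atTop (nhds 0) := by
      apply tendsto_of_tendsto_of_tendsto_of_le_of_le tendsto_const_nhds hE2
      · intro n; exact zero_le
      · intro n
        exact term_le_two_edgeEnergy c (fun a b => grad c (f n) a b - θ a b) hxy
    have hdivnn : ∀ n, 0 ≤ d n ^ 2 / c x y := fun n =>
      div_nonneg (sq_nonneg _) hxy.le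
    have hq : Filter.Tendsto (fun n => d n ^ 2 / c x y) Filter.atTop (nhds 0) := by
      have := (ENNReal.tendsto_toReal (by norm_num : (0:ℝ≥0∞) ≠ ⊤)).comp hofReal
      simpa [Function.comp_def, ENNReal.toReal_ofReal (hdivnn _)] using this
    have hsq : Filter.Tendsto (fun n => d n ^ 2) Filter.atTop (nhds 0) := by
      have := hq.mul_const (c x y)
      have heq : ∀ n, d n ^ 2 / c x y * c x y = d n ^ 2 := fun n => by
        field_simp
      simpa [heq] using this
    have habs : Filter.Tendsto (abs ∘ d) Filter.atTop (nhds 0) := by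
      have := (Real.continuous_sqrt.tendsto 0).comp hsq
      simpa [Function.comp_def, Real.sqrt_sq_eq_abs] using this
    have hd0 : Filter.Tendsto d Filter.atTop (nhds 0) :=
      (tendsto_zero_iff_abs_tendsto_zero d).mpr habs
    have : Filter.Tendsto (fun n => (d n + θ x y) / c x y)
        Filter.atTop (nhds ((0 + θ x y) / c x y)) :=
      ((hd0.add tendsto_const_nhds).div_const _)
    have heq : ∀ n, (d n + θ x y) / c x y = f n y - f n x := fun n => by
      simp only [hd, grad]
      field_simp
      ring
    simp only [heq, zero_add] at this
    exact this
  -- existence of pointwise limits by connectedness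
  have hlim : ∀ x, ∃ L, Filter.Tendsto (fun n => f n x) Filter.atTop (nhds L) := by
    intro x
    induction hconn a0 x with
    | refl =>
      refine ⟨0, ?_⟩
      have : (fun n => f n a0) = fun _ => (0:ℝ) := funext fun n => hf0 n a0 ha0
      rw [this]; exact tendsto_const_nhds
    | tail hr hedge ih =>
      obtain ⟨L, hL⟩ := ih
      rename_i b y
      refine ⟨θ b y / c b y + L, ?_⟩
      have h1 := (key b y hedge).add hL
      have heq : ∀ n, (f n y - f n b) + f n b = f n y := fun n => by ring
      simpa [heq] using h1
  choose g hg using hlim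
  refine ⟨g, ?_, ?_⟩
  · intro a ha
    have h0 : Filter.Tendsto (fun n => f n a) Filter.atTop (nhds 0) := by
      have : (fun n => f n a) = fun _ => (0:ℝ) := funext fun n => hf0 n a ha
      rw [this]; exact tendsto_const_nhds
    exact tendsto_nhds_unique (hg a) h0
  · funext x y
    rcases (hnn x y).lt_or_eq with h | h
    · have h1 : Filter.Tendsto (fun n => f n y - f n x) Filter.atTop
          (nhds (g y - g x)) := (hg y).sub (hg x)
      have h2 := key x y h
      have heq : g y - g x = θ x y / c x y := tendsto_nhds_unique h1 h2
      rw [grad, heq]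
      field_simp
    · rw [grad, ← h, zero_mul, (hθ.2 x y h.symm)]
end
end

section
/- Let A ⊆ V be a nonempty finite set and let θ be an edge function with Energy(θ) < ∞. Then ⟨θ, η⟩ = 0 for every cycle η modulo A if and only if there exists f : V → ℝ with f|_A ≡ 0 and ∇f = θ. (This is the characterization of the orthogonal complement of the cycles modulo A proved in the paper's Lemma 2.1.) -/
open scoped ENNReal

noncomputable section

open scoped Classical

/-- The inner product `(1/2) Σ_{x,y : c(x,y)>0} θ(x,y)η(x,y)/c(x,y)` of edge functions. -/
def edgeInner {V : Type*} (c : V → V → ℝ) (θ η : V → V → ℝ) : ℝ :=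
  (1 / 2 : ℝ) * ∑' x : V, ∑' y : V, (if 0 < c x y then θ x y * η x y / c x y else 0)

/-- A cycle modulo `A`: an edge function arising from a finite path whose consecutive
vertices are adjacent, which either closes up or has both endpoints in `A`, where
`η(x,y)` counts signed traversals of the oriented edge `(x,y)` by the path. -/
def IsCycleModulo {V : Type*} (c : V → V → ℝ) (A : Finset V) (η : V → V → ℝ) : Prop :=
  IsEdgeFn c η ∧
    ∃ (N : ℕ) (P : ℕ → V),
      (∀ i < N, 0 < c (P i) (P (i + 1))) ∧
      (P 0 = P N ∨ (P 0 ∈ A ∧ P N ∈ A)) ∧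
      ∀ x y, 0 < c x y →
        η x y =
          (((Finset.range N).filter fun i => P i = x ∧ P (i + 1) = y).card : ℝ) -
            (((Finset.range N).filter fun i => P i = y ∧ P (i + 1) = x).card : ℝ)

section Aux

open Finset

variable {V : Type*}

/-- The weight of a path: sum of `θ/c` along its edges. -/
private noncomputable def pathW (c θ : V → V → ℝ) (P : ℕ → V) (N : ℕ) : ℝ :=
  ∑ i ∈ Finset.range N, θ (P i) (P (i + 1)) / c (P i) (P (i + 1))

private lemma myCollapse (T : Finset V) {a b : V} (ha : a ∈ T) (hb : b ∈ T)
    (h : V → V → ℝ) :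
    ∑ x ∈ T, ∑ y ∈ T, (if a = x ∧ b = y then h x y else 0) = h a b := by
  rw [Finset.sum_eq_single a]
  · simp [Finset.sum_ite_eq, hb]
  · intro x hx hxa
    apply Finset.sum_eq_zero
    intro y hy
    exact if_neg (by rintro ⟨rfl, -⟩; exact hxa rfl)
  · intro hna; exact absurd ha hna

private lemma myCollapse' (T : Finset V) {a b : V} (ha : a ∈ T) (hb : b ∈ T)
    (h : V → V → ℝ) :
    ∑ x ∈ T, ∑ y ∈ T, (if a = y ∧ b = x then h x y else 0) = h b a := by
  rw [Finset.sum_comm]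
  exact myCollapse T ha hb (fun y x => h x y)

private lemma mySumIteConst {N : ℕ} (p : ℕ → Prop) [DecidablePred p] (r : ℝ) :
    ∑ i ∈ Finset.range N, (if p i then r else 0)
      = (((Finset.range N).filter fun i => p i).card : ℝ) * r := by
  rw [Finset.card_filter]
  push_cast
  rw [Finset.sum_mul]
  simp [ite_mul]

private lemma exists_path (c : V → V → ℝ) {x y : V}
    (h : Relation.ReflTransGen (fun a b => 0 < c a b) x y) :
    ∃ (N : ℕ) (P : ℕ → V), P 0 = x ∧ P N = y ∧ ∀ i < N, 0 < c (P i) (P (i + 1)) := by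
  induction h with
  | refl => exact ⟨0, fun _ => x, rfl, rfl, fun i hi => absurd hi (Nat.not_lt_zero i)⟩
  | @tail b z hab hbz ih =>
    obtain ⟨N, P, h0, hN, hE⟩ := ih
    refine ⟨N + 1, fun i => if i ≤ N then P i else z, by simp [h0], by simp, fun i hi => ?_⟩
    simp only
    split_ifs with h1 h2 h2
    · exact hE i (by omega)
    · have : i = N := by omega
      subst this
      rw [hN]
      exact hbz
    · exact absurd h2 (by omega)
    · exact absurd hi (by omega)

end Aux
private lemma edgeInner_cycle {V : Type*} (c : V → V → ℝ)
    (hsym : ∀ x y, c x y = c y x)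
    (θ : V → V → ℝ) (hθa : ∀ x y, θ x y = -θ y x)
    (N : ℕ) (P : ℕ → V) (hP : ∀ i < N, 0 < c (P i) (P (i + 1)))
    (η : V → V → ℝ)
    (hη : ∀ x y, 0 < c x y → η x y =
      (((Finset.range N).filter fun i => P i = x ∧ P (i + 1) = y).card : ℝ) -
        (((Finset.range N).filter fun i => P i = y ∧ P (i + 1) = x).card : ℝ)) :
    edgeInner c θ η = pathW c θ P N := by
  classical
  set T : Finset V := (Finset.range (N + 1)).image P with hT
  have hPT : ∀ i, i ≤ N → P i ∈ T := fun i hi =>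
    Finset.mem_image.mpr ⟨i, Finset.mem_range.mpr (by omega), rfl⟩
  set g : V → V → ℝ := fun x y => if 0 < c x y then θ x y * η x y / c x y else 0 with hg
  have hzero : ∀ x y, (x ∉ T ∨ y ∉ T) → g x y = 0 := by
    intro x y hxy
    simp only [hg]
    split_ifs with hcxy
    · rw [hη x y hcxy]
      have h1 : ((Finset.range N).filter fun i => P i = x ∧ P (i + 1) = y) = ∅ := by
        rw [Finset.filter_eq_empty_iff]
        rintro i hi ⟨rfl, rfl⟩
        have hi' := Finset.mem_range.mp hi
        rcases hxy with hx | hy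
        · exact hx (hPT i (by omega))
        · exact hy (hPT (i + 1) (by omega))
      have h2 : ((Finset.range N).filter fun i => P i = y ∧ P (i + 1) = x) = ∅ := by
        rw [Finset.filter_eq_empty_iff]
        rintro i hi ⟨rfl, rfl⟩
        have hi' := Finset.mem_range.mp hi
        rcases hxy with hx | hy
        · exact hx (hPT (i + 1) (by omega))
        · exact hy (hPT i (by omega))
      simp [h1, h2]
    · rfl
  have houter : ∑' x, ∑' y, g x y = ∑ x ∈ T, ∑ y ∈ T, g x y := by
    have inner_eq : ∀ x : V, ∑' y, g x y = ∑ y ∈ T, g x y := fun x =>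
      tsum_eq_sum (fun y hy => hzero x y (Or.inr hy))
    rw [tsum_eq_sum (s := T) (fun x hx => by
      rw [inner_eq x]; exact Finset.sum_eq_zero fun y _ => hzero x y (Or.inl hx))]
    exact Finset.sum_congr rfl fun x _ => inner_eq x
  set h : V → V → ℝ := fun x y => if 0 < c x y then θ x y / c x y else 0 with hh
  have gsum : ∀ x y, g x y = ∑ i ∈ Finset.range N,
      ((if P i = x ∧ P (i + 1) = y then h x y else 0) -
        (if P i = y ∧ P (i + 1) = x then h x y else 0)) := by
    intro x y
    rw [Finset.sum_sub_distrib, mySumIteConst, mySumIteConst]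
    simp only [hg, hh]
    split_ifs with hcxy
    · rw [hη x y hcxy]; ring
    · simp
  have main : ∑ x ∈ T, ∑ y ∈ T, g x y
      = ∑ i ∈ Finset.range N, 2 * (θ (P i) (P (i + 1)) / c (P i) (P (i + 1))) := by
    calc ∑ x ∈ T, ∑ y ∈ T, g x y
        = ∑ x ∈ T, ∑ y ∈ T, ∑ i ∈ Finset.range N,
            ((if P i = x ∧ P (i + 1) = y then h x y else 0) -
              (if P i = y ∧ P (i + 1) = x then h x y else 0)) :=
          Finset.sum_congr rfl fun x _ => Finset.sum_congr rfl fun y _ => gsum x y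
      _ = ∑ x ∈ T, ∑ i ∈ Finset.range N, ∑ y ∈ T,
            ((if P i = x ∧ P (i + 1) = y then h x y else 0) -
              (if P i = y ∧ P (i + 1) = x then h x y else 0)) :=
          Finset.sum_congr rfl fun x _ => Finset.sum_comm
      _ = ∑ i ∈ Finset.range N, ∑ x ∈ T, ∑ y ∈ T,
            ((if P i = x ∧ P (i + 1) = y then h x y else 0) -
              (if P i = y ∧ P (i + 1) = x then h x y else 0)) := Finset.sum_comm
      _ = ∑ i ∈ Finset.range N, 2 * (θ (P i) (P (i + 1)) / c (P i) (P (i + 1))) := by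
          apply Finset.sum_congr rfl
          intro i hi
          have hi' := Finset.mem_range.mp hi
          have hci := hP i hi'
          have hci' : 0 < c (P (i + 1)) (P i) := by rw [hsym]; exact hci
          have m1 := hPT i (by omega)
          have m2 := hPT (i + 1) (by omega)
          simp only [Finset.sum_sub_distrib]
          rw [myCollapse T m1 m2 h, myCollapse' T m1 m2 h]
          simp only [hh, if_pos hci, if_pos hci']
          rw [hθa (P (i + 1)) (P i), hsym (P (i + 1)) (P i)]
          ring
  calc edgeInner c θ η = (1 / 2 : ℝ) * ∑' x, ∑' y, g x y := by simp only [edgeInner, hg]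
    _ = (1 / 2 : ℝ) * ∑ i ∈ Finset.range N,
          2 * (θ (P i) (P (i + 1)) / c (P i) (P (i + 1))) := by rw [houter, main]
    _ = pathW c θ P N := by
        simp only [pathW, Finset.mul_sum]
        exact Finset.sum_congr rfl fun i _ => by ring
/-- A finite-energy edge function `θ` is orthogonal to every cycle modulo `A`
if and only if `θ = ∇f` for some `f : V → ℝ` vanishing on `A`. -/
theorem stmt6 {V : Type*} [Countable V] [Infinite V]
    (c : V → V → ℝ) (hc : Conductance c)
    (A : Finset V) (hA : A.Nonempty)
    (θ : V → V → ℝ) (hθ : IsEdgeFn c θ) (hθE : edgeEnergy c θ < ⊤) :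
    (∀ η : V → V → ℝ, IsCycleModulo c A η → edgeInner c θ η = 0) ↔
      ∃ f : V → ℝ, (∀ a ∈ A, f a = 0) ∧ grad c f = θ := by
  obtain ⟨hsym, hnn, hdiag, hconn, hsummable⟩ := hc
  constructor
  · intro h
    obtain ⟨a₀, ha₀⟩ := hA
    have hpath : ∀ x : V, ∃ (N : ℕ) (P : ℕ → V),
        P 0 = a₀ ∧ P N = x ∧ ∀ i < N, 0 < c (P i) (P (i + 1)) :=
      fun x => exists_path c (hconn a₀ x)
    choose Nf Pf h0f hNf hEf using hpath
    have key : ∀ (N : ℕ) (P : ℕ → V), (∀ i < N, 0 < c (P i) (P (i + 1))) →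
        (P 0 = P N ∨ (P 0 ∈ A ∧ P N ∈ A)) → pathW c θ P N = 0 := by
      intro N P hE hends
      set η : V → V → ℝ := fun x y =>
        (((Finset.range N).filter fun i => P i = x ∧ P (i + 1) = y).card : ℝ) -
          (((Finset.range N).filter fun i => P i = y ∧ P (i + 1) = x).card : ℝ) with hηdef
      have hedge : IsEdgeFn c η := by
        constructor
        · intro x y
          simp only [hηdef]
          ring
        · intro x y hcxy
          simp only [hηdef]
          have e1 : ((Finset.range N).filter fun i => P i = x ∧ P (i + 1) = y) = ∅ := by
            rw [Finset.filter_eq_empty_iff]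
            rintro i hi ⟨rfl, rfl⟩
            exact absurd hcxy (ne_of_gt (hE i (Finset.mem_range.mp hi)))
          have e2 : ((Finset.range N).filter fun i => P i = y ∧ P (i + 1) = x) = ∅ := by
            rw [Finset.filter_eq_empty_iff]
            rintro i hi ⟨rfl, rfl⟩
            have := hE i (Finset.mem_range.mp hi)
            rw [hsym] at this
            exact absurd hcxy (ne_of_gt this)
          simp [e1, e2]
      have hz := h η ⟨hedge, N, P, hE, hends, fun x y _ => rfl⟩
      rwa [edgeInner_cycle c hsym θ hθ.1 N P hE η (fun x y _ => rfl)] at hz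
    set f : V → ℝ := fun x => pathW c θ (Pf x) (Nf x) with hf
    have hfA : ∀ a ∈ A, f a = 0 := by
      intro a ha
      exact key (Nf a) (Pf a) (hEf a)
        (Or.inr ⟨by rw [h0f a]; exact ha₀, by rw [hNf a]; exact ha⟩)
    have hedgerel : ∀ x y, 0 < c x y → f y = f x + θ x y / c x y := by
      intro x y hcxy
      set Q : ℕ → V := fun i =>
        if i ≤ Nf x then Pf x i else Pf y (Nf y - (i - (Nf x + 1))) with hQ
      have hQle : ∀ i, i ≤ Nf x → Q i = Pf x i := fun i hi => if_pos hi
      have hQval : ∀ j, Q (Nf x + 1 + j) = Pf y (Nf y - j) := by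
        intro j
        simp only [hQ]
        rw [if_neg (by omega)]
        congr 1
        omega
      have hQ0 : Q 0 = a₀ := by rw [hQle 0 (Nat.zero_le _), h0f x]
      have ex : Q (Nf x) = x := by rw [hQle (Nf x) le_rfl, hNf x]
      have ey : Q (Nf x + 1) = y := by
        have h' := hQval 0
        rw [show Nf x + 1 + 0 = Nf x + 1 by omega,
          show Nf y - 0 = Nf y by omega, hNf y] at h'
        exact h' 
      have hQM : Q (Nf x + 1 + Nf y) = a₀ := by
        rw [hQval (Nf y), show Nf y - Nf y = 0 by omega, h0f y]
      have hQE : ∀ i < Nf x + 1 + Nf y, 0 < c (Q i) (Q (i + 1)) := by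
        intro i hi
        rcases Nat.lt_or_ge i (Nf x) with h1 | h1
        · rw [hQle i (by omega), hQle (i + 1) (by omega)]
          exact hEf x i h1
        · rcases Nat.lt_or_ge i (Nf x + 1) with h2 | h2
          · have hiN : i = Nf x := by omega
            rw [hiN, ex, ey]
            exact hcxy
          · have hjlt : i - (Nf x + 1) < Nf y := by omega
            have e1 : Q i = Pf y (Nf y - (i - (Nf x + 1))) := by
              have h' := hQval (i - (Nf x + 1))
              rw [show Nf x + 1 + (i - (Nf x + 1)) = i by omega] at h'
              exact h' 
            have e2 : Q (i + 1) = Pf y (Nf y - (i - (Nf x + 1)) - 1) := by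
              have h' := hQval (i - (Nf x + 1) + 1)
              rw [show Nf x + 1 + (i - (Nf x + 1) + 1) = i + 1 by omega,
                show Nf y - (i - (Nf x + 1) + 1) = Nf y - (i - (Nf x + 1)) - 1 by omega] at h'
              exact h' 
            rw [e1, e2, hsym]
            have := hEf y (Nf y - (i - (Nf x + 1)) - 1) (by omega)
            rw [show Nf y - (i - (Nf x + 1)) - 1 + 1 = Nf y - (i - (Nf x + 1)) by omega] at this
            exact this
      have hfx : f x = ∑ i ∈ Finset.range (Nf x),
          θ (Pf x i) (Pf x (i + 1)) / c (Pf x i) (Pf x (i + 1)) := rfl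
      have hfy : f y = ∑ i ∈ Finset.range (Nf y),
          θ (Pf y i) (Pf y (i + 1)) / c (Pf y i) (Pf y (i + 1)) := rfl
      have hW : pathW c θ Q (Nf x + 1 + Nf y) = f x + θ x y / c x y + -(f y) := by
        simp only [pathW]
        rw [Finset.sum_range_add, Finset.sum_range_succ]
        have eq1 : ∑ i ∈ Finset.range (Nf x), θ (Q i) (Q (i + 1)) / c (Q i) (Q (i + 1))
            = f x := by
          rw [hfx]
          apply Finset.sum_congr rfl
          intro i hi
          have hi' := Finset.mem_range.mp hi
          rw [hQle i (by omega), hQle (i + 1) (by omega)]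
        have eq2 : θ (Q (Nf x)) (Q (Nf x + 1)) / c (Q (Nf x)) (Q (Nf x + 1))
            = θ x y / c x y := by
          rw [ex, ey]
        have eq3 : ∑ i ∈ Finset.range (Nf y),
            θ (Q (Nf x + 1 + i)) (Q (Nf x + 1 + i + 1)) /
              c (Q (Nf x + 1 + i)) (Q (Nf x + 1 + i + 1))
            = -(f y) := by
          calc ∑ i ∈ Finset.range (Nf y),
              θ (Q (Nf x + 1 + i)) (Q (Nf x + 1 + i + 1)) /
                c (Q (Nf x + 1 + i)) (Q (Nf x + 1 + i + 1))
              = ∑ j ∈ Finset.range (Nf y),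
                  -(θ (Pf y (Nf y - 1 - j)) (Pf y (Nf y - 1 - j + 1)) /
                    c (Pf y (Nf y - 1 - j)) (Pf y (Nf y - 1 - j + 1))) := by
                apply Finset.sum_congr rfl
                intro j hj
                have hj' := Finset.mem_range.mp hj
                have e1 : Q (Nf x + 1 + j) = Pf y (Nf y - j) := hQval j
                have e2 : Q (Nf x + 1 + j + 1) = Pf y (Nf y - j - 1) := by
                  have h' := hQval (j + 1)
                  rw [show Nf x + 1 + (j + 1) = Nf x + 1 + j + 1 by omega,
                    show Nf y - (j + 1) = Nf y - j - 1 by omega] at h'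
                  exact h' 
                rw [e1, e2, show Nf y - 1 - j = Nf y - j - 1 by omega,
                  show Nf y - j - 1 + 1 = Nf y - j by omega,
                  hθ.1 (Pf y (Nf y - j)) (Pf y (Nf y - j - 1)),
                  hsym (Pf y (Nf y - j)) (Pf y (Nf y - j - 1))]
                ring
            _ = -∑ j ∈ Finset.range (Nf y),
                  θ (Pf y (Nf y - 1 - j)) (Pf y (Nf y - 1 - j + 1)) /
                    c (Pf y (Nf y - 1 - j)) (Pf y (Nf y - 1 - j + 1)) := by
                rw [Finset.sum_neg_distrib]
            _ = -∑ k ∈ Finset.range (Nf y),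
                  θ (Pf y k) (Pf y (k + 1)) / c (Pf y k) (Pf y (k + 1)) := by
                rw [Finset.sum_range_reflect
                  (fun k => θ (Pf y k) (Pf y (k + 1)) / c (Pf y k) (Pf y (k + 1)))]
            _ = -(f y) := by rw [hfy]
        rw [eq1, eq2, eq3]
      have hzero := key (Nf x + 1 + Nf y) Q hQE (Or.inl (hQ0.trans hQM.symm))
      rw [hW] at hzero
      linarith
    refine ⟨f, hfA, ?_⟩
    funext x y
    show c x y * (f y - f x) = θ x y
    by_cases hcxy : 0 < c x y
    · rw [hedgerel x y hcxy]
      field_simp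
      ring
    · have hc0 : c x y = 0 := le_antisymm (not_lt.mp hcxy) (hnn x y)
      rw [hc0, hθ.2 x y hc0, zero_mul]
  · rintro ⟨f, hfA, hgrad⟩ η ⟨hηE, N, P, hP, hend, hηval⟩
    rw [edgeInner_cycle c hsym θ hθ.1 N P hP η hηval]
    have hterm : ∀ i ∈ Finset.range N,
        θ (P i) (P (i + 1)) / c (P i) (P (i + 1)) = f (P (i + 1)) - f (P i) := by
      intro i hi
      have hci := hP i (Finset.mem_range.mp hi)
      rw [← hgrad]
      show c (P i) (P (i + 1)) * (f (P (i + 1)) - f (P i)) / c (P i) (P (i + 1)) = _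
      exact mul_div_cancel_left₀ _ (ne_of_gt hci)
    simp only [pathW]
    rw [Finset.sum_congr rfl hterm, Finset.sum_range_sub (fun i => f (P i))]
    rcases hend with heq | ⟨h1, h2⟩
    · rw [heq]; ring
    · rw [hfA _ h1, hfA _ h2]; ring
end
end

section
/- Let A ⊆ V be a nonempty finite set, φ : A → ℝ, and let (W_n, E_n)_{n≥1} be an exhaustion of the graph by finite connected subgraphs with A ⊆ W_n for every n. For each n, let h_n : W_n → ℝ be any function with h_n|_A = φ that is (W_n,E_n)-harmonic at every x ∈ W_n ∖ A (such h_n exists and is unique). Then for every x ∈ V, h_n(x) → h^φ(x) as n → ∞ (the limit taken over n large enough that x ∈ W_n), where h^φ is the energy-minimizing function on V with boundary values φ on A. (The paper's Proposition 2.5.) -/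
open scoped ENNReal
open Filter Topology
open scoped Classical

noncomputable section

namespace Stmt10Aux

variable {V : Type*}

/-- conductance of the `n`-th finite subgraph -/
def en (c : V → V → ℝ) (E : ℕ → Set (V × V)) (n : ℕ) (x y : V) : ℝ :=
  if (x, y) ∈ E n then c x y else 0

/-- Dirichlet energy of the `n`-th finite subgraph (without the 1/2 factor) -/
def Q (c : V → V → ℝ) (W : ℕ → Finset V) (E : ℕ → Set (V × V)) (n : ℕ) (f : V → ℝ) : ℝ :=
  ∑ x ∈ W n, ∑ y ∈ W n, en c E n x y * (f y - f x) ^ 2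

/-- total Dirichlet sum (without the 1/2 factor) -/
def S (c : V → V → ℝ) (f : V → ℝ) : ℝ≥0∞ :=
  ∑' x, ∑' y, ENNReal.ofReal (c x y * (f y - f x) ^ 2)

section basic

variable (c : V → V → ℝ) (W : ℕ → Finset V) (E : ℕ → Set (V × V))

lemma en_nonneg (hnn : ∀ x y, 0 ≤ c x y) (n : ℕ) (x y : V) : 0 ≤ en c E n x y := by
  unfold en; split <;> simp [hnn x y]

lemma en_symm (hsym : ∀ x y, c x y = c y x)
    (hEsym : ∀ n x y, (x, y) ∈ E n → (y, x) ∈ E n) (n : ℕ) (x y : V) :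
    en c E n x y = en c E n y x := by
  unfold en
  by_cases hxy : (x, y) ∈ E n
  · rw [if_pos hxy, if_pos (hEsym n x y hxy), hsym]
  · rw [if_neg hxy, if_neg (fun hyx => hxy (hEsym n y x hyx))]

lemma en_le (hnn : ∀ x y, 0 ≤ c x y) (n : ℕ) (x y : V) : en c E n x y ≤ c x y := by
  unfold en; split <;> simp [hnn x y]

lemma en_mono (hnn : ∀ x y, 0 ≤ c x y) {n m : ℕ} (hE : E n ⊆ E m) (x y : V) :
    en c E n x y ≤ en c E m x y := by
  unfold en
  by_cases hxy : (x, y) ∈ E n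
  · rw [if_pos hxy, if_pos (hE hxy)]
  · rw [if_neg hxy]; split <;> simp [hnn x y]

lemma Q_nonneg (hnn : ∀ x y, 0 ≤ c x y) (n : ℕ) (f : V → ℝ) : 0 ≤ Q c W E n f :=
  Finset.sum_nonneg fun x _ => Finset.sum_nonneg fun y _ =>
    mul_nonneg (en_nonneg c E hnn n x y) (sq_nonneg _)

lemma term_le_Q (hnn : ∀ x y, 0 ≤ c x y) (n : ℕ) (f : V → ℝ) {x y : V}
    (hx : x ∈ W n) (hy : y ∈ W n) :
    en c E n x y * (f y - f x) ^ 2 ≤ Q c W E n f := by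
  calc en c E n x y * (f y - f x) ^ 2
      ≤ ∑ z ∈ W n, en c E n x z * (f z - f x) ^ 2 :=
        Finset.single_le_sum (f := fun z => en c E n x z * (f z - f x) ^ 2)
          (fun z _ => mul_nonneg (en_nonneg c E hnn n x z) (sq_nonneg _)) hy
    _ ≤ Q c W E n f :=
        Finset.single_le_sum (f := fun w => ∑ z ∈ W n, en c E n w z * (f z - f w) ^ 2)
          (fun w _ => Finset.sum_nonneg fun z _ =>
            mul_nonneg (en_nonneg c E hnn n w z) (sq_nonneg _)) hx

lemma Q_mono (hnn : ∀ x y, 0 ≤ c x y) {n m : ℕ} (hW : W n ⊆ W m) (hE : E n ⊆ E m)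
    (f : V → ℝ) : Q c W E n f ≤ Q c W E m f := by
  calc Q c W E n f
      ≤ ∑ x ∈ W n, ∑ y ∈ W n, en c E m x y * (f y - f x) ^ 2 :=
        Finset.sum_le_sum fun x _ => Finset.sum_le_sum fun y _ =>
          mul_le_mul_of_nonneg_right (en_mono c E hnn hE x y) (sq_nonneg _)
    _ ≤ ∑ x ∈ W n, ∑ y ∈ W m, en c E m x y * (f y - f x) ^ 2 :=
        Finset.sum_le_sum fun x _ =>
          Finset.sum_le_sum_of_subset_of_nonneg hW
            (fun y _ _ => mul_nonneg (en_nonneg c E hnn m x y) (sq_nonneg _))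
    _ ≤ Q c W E m f :=
        Finset.sum_le_sum_of_subset_of_nonneg hW
          (fun x _ _ => Finset.sum_nonneg fun y _ =>
            mul_nonneg (en_nonneg c E hnn m x y) (sq_nonneg _))

lemma ofReal_Q_le_S (hnn : ∀ x y, 0 ≤ c x y) (n : ℕ) (f : V → ℝ) :
    ENNReal.ofReal (Q c W E n f) ≤ S c f := by
  unfold Q S
  rw [ENNReal.ofReal_sum_of_nonneg (fun x _ => Finset.sum_nonneg fun y _ =>
    mul_nonneg (en_nonneg c E hnn n x y) (sq_nonneg _))]
  calc ∑ x ∈ W n, ENNReal.ofReal (∑ y ∈ W n, en c E n x y * (f y - f x) ^ 2)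
      ≤ ∑ x ∈ W n, ∑' y, ENNReal.ofReal (c x y * (f y - f x) ^ 2) := by
        apply Finset.sum_le_sum
        intro x _
        rw [ENNReal.ofReal_sum_of_nonneg (fun y _ =>
          mul_nonneg (en_nonneg c E hnn n x y) (sq_nonneg _))]
        calc ∑ y ∈ W n, ENNReal.ofReal (en c E n x y * (f y - f x) ^ 2)
            ≤ ∑ y ∈ W n, ENNReal.ofReal (c x y * (f y - f x) ^ 2) :=
              Finset.sum_le_sum fun y _ => ENNReal.ofReal_le_ofReal
                (mul_le_mul_of_nonneg_right (en_le c E hnn n x y) (sq_nonneg _))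
          _ ≤ ∑' y, ENNReal.ofReal (c x y * (f y - f x) ^ 2) :=
              ENNReal.sum_le_tsum _
    _ ≤ ∑' x, ∑' y, ENNReal.ofReal (c x y * (f y - f x) ^ 2) :=
        ENNReal.sum_le_tsum _

end basic


section pyth

variable (c : V → V → ℝ) (W : ℕ → Finset V) (E : ℕ → Set (V × V))

/-- Pythagoras identity for the harmonic function on a finite subgraph. -/
lemma pyth (hsym : ∀ x y, c x y = c y x)
    (hEsym : ∀ n x y, (x, y) ∈ E n → (y, x) ∈ E n)
    (n : ℕ) (A : Finset V) (h' f : V → ℝ)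
    (hharm : ∀ x ∈ W n, x ∉ A → ∑ y ∈ W n, en c E n x y * (h' y - h' x) = 0)
    (hf : ∀ a ∈ A, f a = h' a) :
    Q c W E n f = Q c W E n h' + Q c W E n (fun z => f z - h' z) := by
  have hbdry : ∀ z ∈ W n, f z - h' z = 0 ∨
      ∑ y ∈ W n, en c E n z y * (h' y - h' z) = 0 := by
    intro z hz
    by_cases hzA : z ∈ A
    · exact Or.inl (by rw [hf z hzA, sub_self])
    · exact Or.inr (hharm z hz hzA)
  have hT2 : ∑ x ∈ W n, ∑ y ∈ W n,
      (f x - h' x) * (en c E n x y * (h' y - h' x)) = 0 := by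
    apply Finset.sum_eq_zero
    intro x hx
    rw [← Finset.mul_sum]
    rcases hbdry x hx with h1 | h1
    · rw [h1, zero_mul]
    · rw [h1, mul_zero]
  have hT1 : ∑ x ∈ W n, ∑ y ∈ W n,
      (f y - h' y) * (en c E n x y * (h' y - h' x)) = 0 := by
    rw [Finset.sum_comm]
    apply Finset.sum_eq_zero
    intro y hy
    have hstep : ∀ x ∈ W n, (f y - h' y) * (en c E n x y * (h' y - h' x))
        = -((f y - h' y) * (en c E n y x * (h' x - h' y))) := by
      intro x _
      rw [en_symm c E hsym hEsym n x y]
      ring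
    rw [Finset.sum_congr rfl hstep]
    rcases hbdry y hy with h1 | h1
    · apply Finset.sum_eq_zero; intro x _; rw [h1, zero_mul, neg_zero]
    · rw [Finset.sum_neg_distrib, ← Finset.mul_sum, h1, mul_zero, neg_zero]
  have key : Q c W E n f = Q c W E n h' + Q c W E n (fun z => f z - h' z)
      + 2 * ∑ x ∈ W n, ∑ y ∈ W n, (f y - h' y) * (en c E n x y * (h' y - h' x))
      - 2 * ∑ x ∈ W n, ∑ y ∈ W n, (f x - h' x) * (en c E n x y * (h' y - h' x)) := by
    unfold Q
    simp only [Finset.mul_sum, ← Finset.sum_add_distrib, ← Finset.sum_sub_distrib]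
    apply Finset.sum_congr rfl
    intro x _
    apply Finset.sum_congr rfl
    intro y _
    ring
  rw [key, hT1, hT2]
  ring

/-- bound on the value at `x` via a path to `b`, in terms of the energy. -/
lemma path_bound (hnn : ∀ x y, 0 ≤ c x y)
    (hEadj : ∀ n x y, (x, y) ∈ E n → 0 < c x y ∧ x ∈ W n ∧ y ∈ W n)
    (hEmono : ∀ {n m : ℕ}, n ≤ m → E n ⊆ E m)
    (N0 : ℕ) (x b : V)
    (hreach : Relation.ReflTransGen (fun p q => (p, q) ∈ E N0) x b) :
    ∃ C : ℝ, 0 ≤ C ∧ ∀ n, N0 ≤ n → ∀ u : V → ℝ,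
      |u x - u b| ≤ C * Real.sqrt (Q c W E n u) := by
  induction hreach with
  | refl => exact ⟨0, le_refl _, fun n _ u => by simp⟩
  | @tail p q hxp hpq ih =>
    obtain ⟨C, hC0, hC⟩ := ih
    have hcpos : 0 < c p q := (hEadj N0 p q hpq).1
    refine ⟨C + 1 / Real.sqrt (c p q), by positivity, ?_⟩
    intro n hn u
    have hedge : (p, q) ∈ E n := hEmono hn hpq
    obtain ⟨-, hpW, hqW⟩ := hEadj n p q hedge
    have hQnn : 0 ≤ Q c W E n u := Q_nonneg c W E hnn n u
    have hterm : c p q * (u q - u p) ^ 2 ≤ Q c W E n u := by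
      have h1 := term_le_Q c W E hnn n u hpW hqW
      rwa [show en c E n p q = c p q from if_pos hedge] at h1
    have hsq : (u q - u p) ^ 2 ≤ Q c W E n u / c p q :=
      (le_div_iff₀ hcpos).mpr (by rw [mul_comm]; exact hterm)
    have hd : |u q - u p| ≤ Real.sqrt (Q c W E n u) / Real.sqrt (c p q) := by
      rw [← Real.sqrt_sq_eq_abs, ← Real.sqrt_div hQnn]
      exact Real.sqrt_le_sqrt hsq
    have htri : |u x - u q| ≤ |u x - u p| + |u p - u q| := abs_sub_le _ _ _
    have h2 : |u p - u q| = |u q - u p| := abs_sub_comm _ _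
    have h3 := hC n hn u
    have hsqrtc : 0 < Real.sqrt (c p q) := Real.sqrt_pos.mpr hcpos
    calc |u x - u q| ≤ C * Real.sqrt (Q c W E n u)
        + Real.sqrt (Q c W E n u) / Real.sqrt (c p q) := by
          rw [h2] at htri; linarith
      _ = (C + 1 / Real.sqrt (c p q)) * Real.sqrt (Q c W E n u) := by
          field_simp

/-- finiteness of the energy of the basic extension `f0`. -/
lemma S_f0_ne_top (hsym : ∀ x y, c x y = c y x) (hnn : ∀ x y, 0 ≤ c x y)
    (hsum : ∀ x, Summable fun y => c x y)
    (A : Finset V) (a0 : V) (ha0 : a0 ∈ A) (φ : V → ℝ) :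
    S c (fun z => if z ∈ A then φ z else φ a0) ≠ ⊤ := by
  set f0 : V → ℝ := fun z => if z ∈ A then φ z else φ a0 with hf0
  set Mφ : ℝ := A.sup' ⟨a0, ha0⟩ fun a => |φ a| with hMφ
  have hMnn : 0 ≤ Mφ := by
    rw [hMφ]
    exact le_trans (abs_nonneg (φ a0)) (Finset.le_sup' (fun a => |φ a|) ha0)
  set K : ℝ := (2 * Mφ) ^ 2 with hK
  have hKnn : 0 ≤ K := sq_nonneg _
  have hf0b : ∀ z, |f0 z| ≤ Mφ := by
    intro z
    rw [hMφ, hf0]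
    by_cases hz : z ∈ A
    · simp only [if_pos hz]
      exact Finset.le_sup' (fun a => |φ a|) hz
    · simp only [if_neg hz]
      exact Finset.le_sup' (fun a => |φ a|) ha0
  have hf0d : ∀ x y : V, (f0 y - f0 x) ^ 2 ≤ K := by
    intro x y
    have h1 : |f0 y - f0 x| ≤ 2 * Mφ := by
      have := abs_sub (f0 y) (f0 x)
      have h2 := hf0b x; have h3 := hf0b y
      linarith
    calc (f0 y - f0 x) ^ 2 = |f0 y - f0 x| ^ 2 := (sq_abs _).symm
      _ ≤ (2 * Mφ) ^ 2 := by
          apply pow_le_pow_left₀ (abs_nonneg _) h1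
  have hbound : ∀ x y : V, ENNReal.ofReal (c x y * (f0 y - f0 x) ^ 2) ≤
      (if x ∈ A then ENNReal.ofReal (c x y * K) else 0)
      + (if y ∈ A then ENNReal.ofReal (c x y * K) else 0) := by
    intro x y
    by_cases hx : x ∈ A
    · rw [if_pos hx]
      exact le_trans (ENNReal.ofReal_le_ofReal
        (mul_le_mul_of_nonneg_left (hf0d x y) (hnn x y))) le_self_add
    by_cases hy : y ∈ A
    · rw [if_neg hx, if_pos hy, zero_add]
      exact ENNReal.ofReal_le_ofReal (mul_le_mul_of_nonneg_left (hf0d x y) (hnn x y))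
    · have hz : f0 y - f0 x = 0 := by simp [hf0, hx, hy]
      simp [hz]
  have hfin1 : ∀ x, (∑' y, ENNReal.ofReal (c x y * K)) ≠ ⊤ := by
    intro x
    rw [← ENNReal.ofReal_tsum_of_nonneg (fun y => mul_nonneg (hnn x y) hKnn)
      ((hsum x).mul_right K)]
    exact ENNReal.ofReal_ne_top
  have hmain : S c f0 ≤
      (∑' x, ∑' y, (if x ∈ A then ENNReal.ofReal (c x y * K) else 0))
      + ∑' x, ∑' y, (if y ∈ A then ENNReal.ofReal (c x y * K) else 0) := by
    rw [← ENNReal.tsum_add]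
    unfold S
    refine Summable.tsum_le_tsum (fun x => ?_) ENNReal.summable ENNReal.summable
    rw [← ENNReal.tsum_add]
    exact Summable.tsum_le_tsum (fun y => hbound x y) ENNReal.summable ENNReal.summable
  have hfirst : (∑' x, ∑' y, (if x ∈ A then ENNReal.ofReal (c x y * K) else 0)) ≠ ⊤ := by
    have heq : ∀ x : V, (∑' y, (if x ∈ A then ENNReal.ofReal (c x y * K) else 0))
        = if x ∈ A then (∑' y, ENNReal.ofReal (c x y * K)) else 0 := by
      intro x; by_cases hx : x ∈ A <;> simp [hx]
    rw [tsum_congr heq]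
    rw [tsum_eq_sum (s := A) (fun x hx => if_neg hx)]
    rw [Finset.sum_ite_of_true (fun x hx => hx)]
    exact (ENNReal.sum_lt_top.mpr (fun x _ => (hfin1 x).lt_top)).ne
  have hsecond : (∑' x, ∑' y, (if y ∈ A then ENNReal.ofReal (c x y * K) else 0)) ≠ ⊤ := by
    have heq : ∀ x : V, (∑' y, (if y ∈ A then ENNReal.ofReal (c x y * K) else 0))
        = ∑ y ∈ A, ENNReal.ofReal (c x y * K) := by
      intro x
      rw [tsum_eq_sum (s := A) (fun y hy => if_neg hy)]
      exact Finset.sum_ite_of_true (fun y hy => hy) _ _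
    rw [tsum_congr heq, Summable.tsum_finsetSum (fun y _ => ENNReal.summable)]
    refine (ENNReal.sum_lt_top.mpr (fun y _ => ?_)).ne
    have heq2 : ∀ x : V, ENNReal.ofReal (c x y * K) = ENNReal.ofReal (c y x * K) := by
      intro x; rw [hsym x y]
    rw [tsum_congr heq2]
    exact (hfin1 y).lt_top
  intro htop
  rw [htop] at hmain
  exact (ENNReal.add_lt_top.mpr ⟨hfirst.lt_top, hsecond.lt_top⟩).ne (top_le_iff.mp hmain)

/-- parallelogram identity for `S`. -/
lemma S_parallelogram (hnn : ∀ x y, 0 ≤ c x y) (g h : V → ℝ) :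
    S c (fun z => (g z + h z) / 2) + S c (fun z => (g z - h z) / 2)
      = S c g / 2 + S c h / 2 := by
  have hterm : ∀ x y : V,
      ENNReal.ofReal (c x y * ((g y + h y) / 2 - (g x + h x) / 2) ^ 2)
      + ENNReal.ofReal (c x y * ((g y - h y) / 2 - (g x - h x) / 2) ^ 2)
      = ENNReal.ofReal (c x y * (g y - g x) ^ 2) / 2
      + ENNReal.ofReal (c x y * (h y - h x) ^ 2) / 2 := by
    intro x y
    rw [← ENNReal.ofReal_add (mul_nonneg (hnn x y) (sq_nonneg _))
      (mul_nonneg (hnn x y) (sq_nonneg _))]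
    have h2 : ENNReal.ofReal (c x y * (g y - g x) ^ 2) / 2
        = ENNReal.ofReal (c x y * (g y - g x) ^ 2 / 2) := by
      rw [ENNReal.ofReal_div_of_pos two_pos, ENNReal.ofReal_ofNat]
    have h3 : ENNReal.ofReal (c x y * (h y - h x) ^ 2) / 2
        = ENNReal.ofReal (c x y * (h y - h x) ^ 2 / 2) := by
      rw [ENNReal.ofReal_div_of_pos two_pos, ENNReal.ofReal_ofNat]
    rw [h2, h3, ← ENNReal.ofReal_add
      (div_nonneg (mul_nonneg (hnn x y) (sq_nonneg _)) two_pos.le)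
      (div_nonneg (mul_nonneg (hnn x y) (sq_nonneg _)) two_pos.le)]
    congr 1
    ring
  unfold S
  rw [← ENNReal.tsum_add]
  have hL : ∀ x : V,
      (∑' y, ENNReal.ofReal (c x y * ((g y + h y) / 2 - (g x + h x) / 2) ^ 2))
      + ∑' y, ENNReal.ofReal (c x y * ((g y - h y) / 2 - (g x - h x) / 2) ^ 2)
      = (∑' y, ENNReal.ofReal (c x y * (g y - g x) ^ 2)) / 2
        + (∑' y, ENNReal.ofReal (c x y * (h y - h x) ^ 2)) / 2 := by
    intro x
    rw [← ENNReal.tsum_add, tsum_congr (hterm x), ENNReal.tsum_add]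
    congr 1
    · simp only [div_eq_mul_inv, ENNReal.tsum_mul_right]
    · simp only [div_eq_mul_inv, ENNReal.tsum_mul_right]
  rw [tsum_congr hL, ENNReal.tsum_add]
  congr 1
  · simp only [div_eq_mul_inv, ENNReal.tsum_mul_right]
  · simp only [div_eq_mul_inv, ENNReal.tsum_mul_right]

end pyth

end Stmt10Aux

open Stmt10Aux

open scoped Classical

/-- Finite-subgraph approximation of the energy-minimizing extension
(the paper's Proposition 2.5): given an exhaustion `(W n, E n)` of the graph by
finite connected subgraphs all containing `A`, the functions `hfin n` that agree
with `φ` on `A` and are `(W n, E n)`-harmonic on `W n ∖ A` converge pointwise to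
the energy-minimizing extension `h` of `φ`. -/
theorem stmt10 {V : Type*} [Countable V] [Infinite V]
    (c : V → V → ℝ) (hc : Conductance c)
    (A : Finset V) (hA : A.Nonempty) (φ : V → ℝ)
    -- the exhaustion by finite connected subgraphs
    (W : ℕ → Finset V) (E : ℕ → Set (V × V))
    (hEsym : ∀ n x y, (x, y) ∈ E n → (y, x) ∈ E n)
    (hEadj : ∀ n x y, (x, y) ∈ E n → 0 < c x y ∧ x ∈ W n ∧ y ∈ W n)
    (hWconn : ∀ n, ∀ x ∈ W n, ∀ y ∈ W n,
      Relation.ReflTransGen (fun a b => (a, b) ∈ E n) x y)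
    (hWmono : ∀ n, W n ⊆ W (n + 1)) (hEmono : ∀ n, E n ⊆ E (n + 1))
    (hWcov : ∀ x, ∃ n, x ∈ W n)
    (hEcov : ∀ x y, 0 < c x y → ∃ n, (x, y) ∈ E n)
    (hAW : ∀ n, A ⊆ W n)
    -- the finite-subgraph harmonic functions (values outside `W n` are irrelevant)
    (hfin : ℕ → V → ℝ)
    (hfinb : ∀ n, ∀ a ∈ A, hfin n a = φ a)
    (hfinharm : ∀ n, ∀ x ∈ W n, x ∉ A →
      ∑ y ∈ W n, (if (x, y) ∈ E n then c x y * (hfin n y - hfin n x) else 0) = 0)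
    -- the energy-minimizing extension of `φ` from `A`
    (h : V → ℝ)
    (hb : ∀ a ∈ A, h a = φ a)
    (hm : ∀ f : V → ℝ, (∀ a ∈ A, f a = φ a) → energy c h ≤ energy c f) :
    ∀ x, Filter.Tendsto (fun n => hfin n x) Filter.atTop (nhds (h x)) := by
  obtain ⟨hsym, hnn, -, hconn, hsum⟩ := hc
  obtain ⟨a0, ha0⟩ := hA
  have hWm : ∀ {n m : ℕ}, n ≤ m → W n ⊆ W m := fun {n m} hnm =>
    monotone_nat_of_le_succ hWmono hnm
  have hEm : ∀ {n m : ℕ}, n ≤ m → E n ⊆ E m := fun {n m} hnm =>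
    monotone_nat_of_le_succ hEmono hnm
  have energyS : ∀ f : V → ℝ, energy c f = (1 / 2 : ℝ≥0∞) * S c f := fun f => rfl
  have SleS : ∀ f : V → ℝ, (∀ a ∈ A, f a = φ a) → S c h ≤ S c f := by
    intro f hf
    have h1 := hm f hf
    rw [energyS, energyS] at h1
    exact (ENNReal.mul_le_mul_iff_right (by norm_num) (by norm_num)).mp h1
  have harm : ∀ n, ∀ x ∈ W n, x ∉ A →
      ∑ y ∈ W n, en c E n x y * (hfin n y - hfin n x) = 0 := by
    intro n x hx hxA
    rw [← hfinharm n x hx hxA]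
    apply Finset.sum_congr rfl
    intro y _
    simp [en, ite_mul]
  have pyth' : ∀ n (f : V → ℝ), (∀ a ∈ A, f a = φ a) →
      Q c W E n f = Q c W E n (hfin n) + Q c W E n (fun z => f z - hfin n z) := by
    intro n f hf
    exact pyth c W E hsym hEsym n A (hfin n) f (harm n)
      (fun a ha => by rw [hf a ha, hfinb n a ha])
  set D : ℕ → ℝ := fun n => Q c W E n (hfin n) with hD
  have Dmono : Monotone D := by
    apply monotone_nat_of_le_succ
    intro n
    have h1 := pyth' n (hfin (n + 1)) (hfinb (n + 1))
    have h2 : Q c W E n (hfin (n + 1)) ≤ Q c W E (n + 1) (hfin (n + 1)) :=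
      Q_mono c W E hnn (hWmono n) (hEmono n) _
    have h3 : 0 ≤ Q c W E n (fun z => hfin (n + 1) z - hfin n z) := Q_nonneg c W E hnn n _
    simp only [hD]
    linarith
  have hSh : S c h ≠ ⊤ := by
    intro htop
    have h1 := SleS (fun z => if z ∈ A then φ z else φ a0) (fun a ha => if_pos ha)
    rw [htop] at h1
    exact S_f0_ne_top c hsym hnn hsum A a0 ha0 φ (top_le_iff.mp h1)
  have hDS : ∀ n, ENNReal.ofReal (D n) ≤ S c h := by
    intro n
    have h1 := pyth' n h hb
    have h2 : 0 ≤ Q c W E n (fun z => h z - hfin n z) := Q_nonneg c W E hnn n _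
    have h3 : D n ≤ Q c W E n h := by simp only [hD]; linarith
    exact (ENNReal.ofReal_le_ofReal h3).trans (ofReal_Q_le_S c W E hnn n h)
  have hDle : ∀ n, D n ≤ (S c h).toReal := fun n =>
    (ENNReal.ofReal_le_iff_le_toReal hSh).mp (hDS n)
  have hDbdd : BddAbove (Set.range D) := ⟨(S c h).toReal, by rintro _ ⟨n, rfl⟩; exact hDle n⟩
  set L : ℝ := ⨆ n, D n with hL
  have hDtend : Filter.Tendsto D Filter.atTop (nhds L) := tendsto_atTop_ciSup Dmono hDbdd
  have hDleL : ∀ n, D n ≤ L := fun n => le_ciSup hDbdd n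
  have Qdiff : ∀ {n m : ℕ}, n ≤ m →
      Q c W E n (fun z => hfin m z - hfin n z) ≤ L - D n := by
    intro n m hnm
    have h1 := pyth' n (hfin m) (hfinb m)
    have h2 : Q c W E n (hfin m) ≤ Q c W E m (hfin m) :=
      Q_mono c W E hnn (hWm hnm) (hEm hnm) _
    have h3 := hDleL m
    simp only [hD] at h1 h2 h3 ⊢
    linarith
  -- existence of pointwise limits
  have hex : ∀ x : V, ∃ l, Filter.Tendsto (fun n => hfin n x) Filter.atTop (nhds l) := by
    intro x
    obtain ⟨N0, hxW⟩ := hWcov x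
    obtain ⟨C, hC0, hC⟩ := path_bound c W E hnn hEadj (fun {n m} h' => hEm h') N0 x a0
      (hWconn N0 x hxW a0 (hAW N0 ha0))
    have key : ∀ p q, N0 ≤ p → p ≤ q →
        |hfin q x - hfin p x| ≤ C * Real.sqrt (L - D p) := by
      intro p q hp hpq
      have h1 := hC p hp (fun z => hfin q z - hfin p z)
      rw [show hfin q a0 - hfin p a0 = 0 from by
        rw [hfinb q a0 ha0, hfinb p a0 ha0, sub_self], sub_zero] at h1
      have h2 : Q c W E p (fun z => hfin q z - hfin p z) ≤ L - D p := Qdiff hpq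
      calc |hfin q x - hfin p x|
          ≤ C * Real.sqrt (Q c W E p (fun z => hfin q z - hfin p z)) := h1
        _ ≤ C * Real.sqrt (L - D p) :=
            mul_le_mul_of_nonneg_left (Real.sqrt_le_sqrt h2) hC0
    suffices hcs : CauchySeq (fun k => hfin (k + N0) x) by
      obtain ⟨l, hl⟩ := cauchySeq_tendsto_of_complete hcs
      exact ⟨l, (Filter.tendsto_add_atTop_iff_nat N0).mp hl⟩
    apply cauchySeq_of_le_tendsto_0 (fun N => C * Real.sqrt (L - D (N + N0)))
    · intro p q N hp hq
      rw [Real.dist_eq]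
      rcases le_total p q with hpq | hqp
      · have h1 := key (p + N0) (q + N0) (Nat.le_add_left N0 p) (by omega)
        rw [abs_sub_comm] at h1
        refine h1.trans (mul_le_mul_of_nonneg_left (Real.sqrt_le_sqrt ?_) hC0)
        have h2 := Dmono (show N + N0 ≤ p + N0 by omega)
        linarith
      · have h1 := key (q + N0) (p + N0) (Nat.le_add_left N0 q) (by omega)
        refine h1.trans (mul_le_mul_of_nonneg_left (Real.sqrt_le_sqrt ?_) hC0)
        have h2 := Dmono (show N + N0 ≤ q + N0 by omega)
        linarith
    · have h1 : Filter.Tendsto (fun N => D (N + N0)) Filter.atTop (nhds L) :=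
        hDtend.comp (tendsto_add_atTop_nat N0)
      have h2 : Filter.Tendsto (fun N => L - D (N + N0)) Filter.atTop (nhds 0) := by
        simpa using (tendsto_const_nhds (x := L)).sub h1
      have h3 : Filter.Tendsto (fun N => Real.sqrt (L - D (N + N0))) Filter.atTop (nhds 0) := by
        have h4 := (Real.continuous_sqrt.tendsto 0).comp h2
        simpa [Function.comp_def] using h4
      simpa using h3.const_mul C
  choose g hg using hex
  have hgA : ∀ a ∈ A, g a = φ a := by
    intro a ha
    have h1 : (fun n => hfin n a) = fun _ => φ a := funext fun n => hfinb n a ha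
    exact tendsto_nhds_unique (h1 ▸ hg a) tendsto_const_nhds
  have hofL : ENNReal.ofReal L ≤ S c h := by
    have h1 : Filter.Tendsto (fun n => ENNReal.ofReal (D n)) Filter.atTop
        (nhds (ENNReal.ofReal L)) := (ENNReal.continuous_ofReal.tendsto L).comp hDtend
    exact le_of_tendsto h1 (Filter.Eventually.of_forall hDS)
  have hSg : S c g ≤ ENNReal.ofReal L := by
    have hprod : S c g = ∑' p : V × V, ENNReal.ofReal (c p.1 p.2 * (g p.2 - g p.1) ^ 2) := by
      unfold S
      exact Eq.symm ENNReal.tsum_prod'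
    rw [hprod, ENNReal.tsum_eq_iSup_sum]
    apply iSup_le
    intro Fs
    set n0 : ℕ := Fs.sup (fun p => if hp : 0 < c p.1 p.2 then (hEcov p.1 p.2 hp).choose else 0)
      with hn0
    have hFsub : ∀ p ∈ Fs, 0 < c p.1 p.2 → ∀ n, n0 ≤ n → (p.1, p.2) ∈ E n := by
      intro p hp hcp n hn
      have h1 : (p.1, p.2) ∈ E (hEcov p.1 p.2 hcp).choose := (hEcov p.1 p.2 hcp).choose_spec
      have h2 := Finset.le_sup
        (f := fun p => if hp : 0 < c p.1 p.2 then (hEcov p.1 p.2 hp).choose else 0) hp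
      simp only [dif_pos hcp] at h2
      exact hEm (h2.trans hn) h1
    have hreal : ∀ n, n0 ≤ n →
        ∑ p ∈ Fs, c p.1 p.2 * (hfin n p.2 - hfin n p.1) ^ 2 ≤ D n := by
      intro n hn
      have hfil : ∑ p ∈ Fs.filter (fun p => 0 < c p.1 p.2),
          c p.1 p.2 * (hfin n p.2 - hfin n p.1) ^ 2
          = ∑ p ∈ Fs, c p.1 p.2 * (hfin n p.2 - hfin n p.1) ^ 2 := by
        apply Finset.sum_filter_of_ne
        intro p hp hne
        by_contra hc0
        exact hne (by rw [le_antisymm (not_lt.mp hc0) (hnn p.1 p.2), zero_mul])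
      rw [← hfil]
      have hcongr : ∑ p ∈ Fs.filter (fun p => 0 < c p.1 p.2),
          c p.1 p.2 * (hfin n p.2 - hfin n p.1) ^ 2
          = ∑ p ∈ Fs.filter (fun p => 0 < c p.1 p.2),
            en c E n p.1 p.2 * (hfin n p.2 - hfin n p.1) ^ 2 := by
        apply Finset.sum_congr rfl
        intro p hp
        rw [Finset.mem_filter] at hp
        rw [show en c E n p.1 p.2 = c p.1 p.2 from if_pos (hFsub p hp.1 hp.2 n hn)]
      rw [hcongr]
      have hsub : Fs.filter (fun p => 0 < c p.1 p.2) ⊆ W n ×ˢ W n := by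
        intro p hp
        rw [Finset.mem_filter] at hp
        obtain ⟨-, h2, h3⟩ := hEadj n p.1 p.2 (hFsub p hp.1 hp.2 n hn)
        exact Finset.mem_product.mpr ⟨h2, h3⟩
      calc ∑ p ∈ Fs.filter (fun p => 0 < c p.1 p.2),
            en c E n p.1 p.2 * (hfin n p.2 - hfin n p.1) ^ 2
          ≤ ∑ p ∈ W n ×ˢ W n, en c E n p.1 p.2 * (hfin n p.2 - hfin n p.1) ^ 2 :=
            Finset.sum_le_sum_of_subset_of_nonneg hsub
              (fun p _ _ => mul_nonneg (en_nonneg c E hnn n _ _) (sq_nonneg _))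
        _ = D n := by
            simp only [hD]
            unfold Q
            exact Finset.sum_product' (W n) (W n)
              (fun a b => en c E n a b * (hfin n b - hfin n a) ^ 2)
    have hlim : Filter.Tendsto
        (fun n => ∑ p ∈ Fs, ENNReal.ofReal (c p.1 p.2 * (hfin n p.2 - hfin n p.1) ^ 2))
        Filter.atTop
        (nhds (∑ p ∈ Fs, ENNReal.ofReal (c p.1 p.2 * (g p.2 - g p.1) ^ 2))) := by
      apply tendsto_finset_sum
      intro p _
      exact (ENNReal.continuous_ofReal.tendsto _).comp
        ((((hg p.2).sub (hg p.1)).pow 2).const_mul _)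
    refine le_of_tendsto hlim ?_
    filter_upwards [Filter.eventually_ge_atTop n0] with n hn
    rw [← ENNReal.ofReal_sum_of_nonneg (fun p _ => mul_nonneg (hnn _ _) (sq_nonneg _))]
    exact ENNReal.ofReal_le_ofReal ((hreal n hn).trans (hDleL n))
  have hSgh : S c g = S c h := le_antisymm (hSg.trans hofL) (SleS g hgA)
  -- uniqueness of the minimizer
  have hghx : ∀ x, g x = h x := by
    have hmidb : ∀ a ∈ A, (fun z => (g z + h z) / 2) a = φ a := by
      intro a ha
      simp only
      rw [hgA a ha, hb a ha]
      ring
    have hpar := S_parallelogram c hnn g h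
    rw [hSgh, ENNReal.add_halves] at hpar
    have hmidge : S c h ≤ S c (fun z => (g z + h z) / 2) := SleS _ hmidb
    have hmidne : S c (fun z => (g z + h z) / 2) ≠ ⊤ := by
      intro htop
      rw [htop] at hpar
      exact hSh (top_le_iff.mp (hpar ▸ le_self_add))
    have hd0 : S c (fun z => (g z - h z) / 2) = 0 := by
      have h1 : S c (fun z => (g z + h z) / 2) = S c h :=
        le_antisymm (by rw [← hpar]; exact le_self_add) hmidge
      have h2 : S c (fun z => (g z + h z) / 2) + S c (fun z => (g z - h z) / 2)
          = S c (fun z => (g z + h z) / 2) + 0 := by rw [add_zero, hpar, h1]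
      exact (ENNReal.add_right_inj hmidne).mp h2
    have hedge : ∀ x y, 0 < c x y → (g y - h y) / 2 = (g x - h x) / 2 := by
      intro x y hcxy
      have h1 : ENNReal.ofReal (c x y * ((g y - h y) / 2 - (g x - h x) / 2) ^ 2)
          ≤ S c (fun z => (g z - h z) / 2) := by
        have ha1 : ENNReal.ofReal (c x y * ((g y - h y) / 2 - (g x - h x) / 2) ^ 2)
            ≤ ∑' y', ENNReal.ofReal (c x y' * ((g y' - h y') / 2 - (g x - h x) / 2) ^ 2) :=
          ENNReal.le_tsum y
        have ha2 : (∑' y', ENNReal.ofReal (c x y' * ((g y' - h y') / 2 - (g x - h x) / 2) ^ 2))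
            ≤ S c (fun z => (g z - h z) / 2) := by
          unfold S
          exact ENNReal.le_tsum x
        exact ha1.trans ha2
      rw [hd0] at h1
      have h2 : c x y * ((g y - h y) / 2 - (g x - h x) / 2) ^ 2 ≤ 0 :=
        ENNReal.ofReal_eq_zero.mp (le_antisymm h1 zero_le)
      have h3 : ((g y - h y) / 2 - (g x - h x) / 2) ^ 2 = 0 := by
        nlinarith [sq_nonneg ((g y - h y) / 2 - (g x - h x) / 2)]
      have h4 := pow_eq_zero_iff (n := 2) (by norm_num) |>.mp h3
      linarith [sub_eq_zero.mp h4]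
    have hconst : ∀ y z : V, Relation.ReflTransGen (fun a b => 0 < c a b) y z →
        (g y - h y) / 2 = (g z - h z) / 2 := by
      intro y z hpath
      induction hpath with
      | refl => rfl
      | @tail p q hxp hpq ih =>
        rw [hedge p q hpq]
        exact ih
    intro x
    have h1 := hconst x a0 (hconn x a0)
    have h2 : g a0 = h a0 := by rw [hgA a0 ha0, hb a0 ha0]
    rw [h2, sub_self] at h1
    have h3 : g x - h x = 0 := by linarith
    linarith
  intro x
  have h1 := hg x
  rwa [hghx x] at h1
end
end

section
/- Let W ⊆ V be a finite nonempty set, A ⊆ W nonempty, and B₁W := W ∪ {x ∈ V : x ∼ y for some y ∈ W}. Suppose g : B₁W → ℝ is bounded and satisfies: g(a) = 0 for every a ∈ A; g(x) = π(x)⁻¹ Σ_{y ∼ x} c(x,y)·g(y) for every x ∈ W ∖ A (every neighbor of a vertex of W lies in B₁W, and the sum converges absolutely since g is bounded and π(x) < ∞); and g(x) = Σ_{y ∈ W} hm_W^x(y)·g(y) for every x ∈ B₁W ∖ W. Then g ≡ 0 on B₁W. (The deterministic uniqueness step established in the proof of the paper's Lemma 3.2.) -/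
open scoped ENNReal Classical

noncomputable section

/-- The `1`-neighborhood `B₁W = W ∪ {x : x ∼ y for some y ∈ W}` of a finite set `W`. -/
def B1 {V : Type*} (c : V → V → ℝ) (W : Finset V) : Set V :=
  ↑W ∪ {x | ∃ y ∈ W, 0 < c x y}

namespace Stmt11Aux

variable {V : Type*}

/-- energy summand over pairs -/
def ed (c : V → V → ℝ) (f : V → ℝ) (p : V × V) : ℝ := c p.1 p.2 * (f p.2 - f p.1) ^ 2

/-- bilinear summand -/
def sb (c : V → V → ℝ) (f u : V → ℝ) (p : V × V) : ℝ :=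
  c p.1 p.2 * (f p.2 - f p.1) * (u p.2 - u p.1)

/-- Dirichlet bilinear form (no 1/2) -/
def bb (c : V → V → ℝ) (f u : V → ℝ) : ℝ := ∑' p : V × V, sb c f u p

open Classical in
/-- indicator -/
def chi (w : V) : V → ℝ := fun x => if x = w then (1:ℝ) else 0

variable {c : V → V → ℝ}

lemma ed_nonneg (hnn : ∀ x y, 0 ≤ c x y) (f : V → ℝ) (p : V × V) : 0 ≤ ed c f p :=
  mul_nonneg (hnn _ _) (sq_nonneg _)

lemma abs_sb_le (hnn : ∀ x y, 0 ≤ c x y) (f u : V → ℝ) (p : V × V) :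
    |sb c f u p| ≤ (ed c f p + ed c u p) / 2 := by
  have h := hnn p.1 p.2
  unfold sb ed
  rw [abs_mul, abs_mul, abs_of_nonneg h]
  nlinarith [mul_nonneg h (sq_nonneg (|f p.2 - f p.1| - |u p.2 - u p.1|)),
    sq_abs (f p.2 - f p.1), sq_abs (u p.2 - u p.1)]

lemma summable_sb (hnn : ∀ x y, 0 ≤ c x y) {f u : V → ℝ}
    (hf : Summable (ed c f)) (hu : Summable (ed c u)) : Summable (sb c f u) := by
  have hb : Summable fun p => (ed c f p + ed c u p) / 2 := (hf.add hu).div_const 2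
  exact summable_abs_iff.mp (hb.of_nonneg_of_le (fun p => abs_nonneg _)
    (fun p => abs_sb_le hnn f u p))

lemma energy_eq (c : V → V → ℝ) (f : V → ℝ) :
    energy c f = (1 / 2 : ℝ≥0∞) * ∑' p : V × V, ENNReal.ofReal (ed c f p) := by
  rw [energy, ENNReal.tsum_prod']
  rfl

lemma summable_ed_of_energy_ne_top (hnn : ∀ x y, 0 ≤ c x y) {f : V → ℝ}
    (h : energy c f ≠ ⊤) : Summable (ed c f) := by
  rw [energy_eq] at h
  have h2 : ∑' p : V × V, ENNReal.ofReal (ed c f p) ≠ ⊤ := by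
    intro ht
    rw [ht] at h
    simp [ENNReal.mul_top] at h
  exact (ENNReal.summable_toReal h2).congr fun p => ENNReal.toReal_ofReal (ed_nonneg hnn f p)

lemma energy_eq_ofReal (hnn : ∀ x y, 0 ≤ c x y) {f : V → ℝ} (hf : Summable (ed c f)) :
    energy c f = (1 / 2 : ℝ≥0∞) * ENNReal.ofReal (∑' p, ed c f p) := by
  rw [energy_eq, ENNReal.ofReal_tsum_of_nonneg (fun p => ed_nonneg hnn f p) hf]


lemma summable_lineR (hnn : ∀ x y, 0 ≤ c x y) {w : V} (hs : Summable fun x => c x w) :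
    Summable fun p : V × V => if p.2 = w then c p.1 p.2 else 0 := by
  rw [summable_prod_of_nonneg (by intro p; dsimp; split <;> [exact hnn _ _; rfl])]
  constructor
  · intro x
    apply summable_of_ne_finset_zero (s := {w})
    intro z hz
    simp only [Finset.mem_singleton] at hz
    simp [hz]
  · apply hs.congr
    intro x
    rw [tsum_eq_single w]
    · simp
    · intro z hz; simp [hz]

lemma summable_lineL (hnn : ∀ x y, 0 ≤ c x y) {w : V} (hs : ∀ x, Summable (c x)) :
    Summable fun p : V × V => if p.1 = w then c p.1 p.2 else 0 := by
  rw [summable_prod_of_nonneg (by intro p; dsimp; split <;> [exact hnn _ _; rfl])]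
  constructor
  · intro x
    by_cases hx : x = w
    · simpa [hx] using hs x
    · simpa [hx] using summable_zero
  · apply Summable.congr (f := fun x => if x = w then ∑' z, c w z else 0)
    · apply summable_of_ne_finset_zero (s := {w})
      intro z hz
      simp only [Finset.mem_singleton] at hz
      simp [hz]
    · intro x
      by_cases hx : x = w
      · subst hx; simp
      · simp [hx]

lemma summable_ed_chi (hnn : ∀ x y, 0 ≤ c x y) {w : V}
    (hs : ∀ x, Summable (c x)) (hsw : Summable fun x => c x w) :
    Summable (ed c (chi w)) := by
  refine Summable.of_nonneg_of_le (fun p => ed_nonneg hnn _ p) (fun p => ?_)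
    ((summable_lineR hnn hsw).add (summable_lineL hnn (w := w) hs))
  have h := hnn p.1 p.2
  unfold ed chi
  by_cases h2 : p.2 = w <;> by_cases h1 : p.1 = w <;> simp [h1, h2] <;> nlinarith [hnn w w, hnn p.1 w, hnn w p.2]

lemma summable_ed_add (hnn : ∀ x y, 0 ≤ c x y) {f u : V → ℝ}
    (hf : Summable (ed c f)) (hu : Summable (ed c u)) :
    Summable (ed c fun x => f x + u x) := by
  refine Summable.of_nonneg_of_le (fun p => ed_nonneg hnn _ p) (fun p => ?_)
    ((hf.add hu).mul_left 2)
  have h := hnn p.1 p.2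
  unfold ed
  dsimp only
  nlinarith [mul_nonneg h (sq_nonneg ((f p.2 - f p.1) - (u p.2 - u p.1)))]

lemma summable_ed_smul (hnn : ∀ x y, 0 ≤ c x y) {f : V → ℝ} (a : ℝ)
    (hf : Summable (ed c f)) : Summable (ed c fun x => a * f x) := by
  apply ((hf.mul_left (a ^ 2)).congr)
  intro p
  unfold ed
  ring

lemma summable_ed_zero : Summable (ed c fun _ : V => (0 : ℝ)) := by
  apply summable_zero.congr
  intro p
  unfold ed
  ring

lemma summable_ed_sum (hnn : ∀ x y, 0 ≤ c x y) {ι : Type*} {s : Finset ι} {F : ι → V → ℝ}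
    (h : ∀ i ∈ s, Summable (ed c (F i))) :
    Summable (ed c fun x => ∑ i ∈ s, F i x) := by
  classical
  induction s using Finset.induction_on with
  | empty => simpa using summable_ed_zero
  | insert a s hni ih =>
    have h1 : Summable (ed c fun x => F a x + ∑ i ∈ s, F i x) :=
      summable_ed_add hnn (h a (Finset.mem_insert_self a s))
        (ih fun i hi => h i (Finset.mem_insert_of_mem hi))
    apply h1.congr
    intro p
    unfold ed
    simp [Finset.sum_insert hni]

lemma ed_expand (f u : V → ℝ) (t : ℝ) (p : V × V) :
    ed c (fun x => f x + t * u x) p = ed c f p + 2 * t * sb c f u p + t ^ 2 * ed c u p := by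
  unfold ed sb
  ring


lemma S_expand (hnn : ∀ x y, 0 ≤ c x y) {f u : V → ℝ} (t : ℝ)
    (hf : Summable (ed c f)) (hu : Summable (ed c u)) :
    ∑' p, ed c (fun x => f x + t * u x) p
      = (∑' p, ed c f p) + 2 * t * bb c f u + t ^ 2 * ∑' p, ed c u p := by
  have hsb := summable_sb hnn hf hu
  calc ∑' p, ed c (fun x => f x + t * u x) p
      = ∑' p, (ed c f p + (2 * t * sb c f u p + t ^ 2 * ed c u p)) := by
        refine tsum_congr fun p => ?_
        rw [ed_expand]
        ring
    _ = (∑' p, ed c f p) + ∑' p, (2 * t * sb c f u p + t ^ 2 * ed c u p) :=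
        Summable.tsum_add hf ((hsb.mul_left _).add (hu.mul_left _))
    _ = (∑' p, ed c f p) + (∑' p, 2 * t * sb c f u p) + ∑' p, t ^ 2 * ed c u p := by
        rw [Summable.tsum_add (hsb.mul_left _) (hu.mul_left _)]; ring
    _ = (∑' p, ed c f p) + 2 * t * bb c f u + t ^ 2 * ∑' p, ed c u p := by
        rw [tsum_mul_left, tsum_mul_left]; rfl

lemma orth (hnn : ∀ x y, 0 ≤ c x y) {f u : V → ℝ}
    (hf : Summable (ed c f)) (hu : Summable (ed c u))
    (hmin : ∀ t : ℝ, energy c f ≤ energy c (fun x => f x + t * u x)) :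
    bb c f u = 0 := by
  have key : ∀ t : ℝ, 0 ≤ 2 * t * bb c f u + t ^ 2 * ∑' p, ed c u p := by
    intro t
    have hsum : Summable (ed c fun x => f x + t * u x) := by
      have := summable_ed_add hnn hf (summable_ed_smul hnn t hu)
      exact this
    have h1 := hmin t
    rw [energy_eq_ofReal hnn hf, energy_eq_ofReal hnn hsum] at h1
    have h2 : ENNReal.ofReal (∑' p, ed c f p)
        ≤ ENNReal.ofReal (∑' p, ed c (fun x => f x + t * u x) p) := by
      have h12 : (1 / 2 : ℝ≥0∞) ≠ 0 := by norm_num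
      have h12' : (1 / 2 : ℝ≥0∞) ≠ ⊤ := by norm_num
      exact (ENNReal.mul_le_mul_iff_right h12 h12').mp h1
    have h3 := (ENNReal.ofReal_le_ofReal_iff
      (tsum_nonneg fun p => ed_nonneg hnn _ p)).mp h2
    rw [S_expand hnn t hf hu] at h3
    linarith
  set B := bb c f u with hB
  set q := ∑' p, ed c u p with hq
  have hq0 : 0 ≤ q := tsum_nonneg fun p => ed_nonneg hnn _ p
  have hq1 : (0:ℝ) < q + 1 := by linarith
  have h := key (-(B / (q + 1)))
  have e : B / (q + 1) * (q + 1) = B := div_mul_cancel₀ B (ne_of_gt hq1)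
  have e2 : B / (q + 1) * B = (B / (q + 1)) ^ 2 * (q + 1) := by
    have hne : q + 1 ≠ 0 := ne_of_gt hq1
    field_simp
  have hr2 : (B / (q + 1)) ^ 2 * (q + 2) ≤ 0 := by nlinarith [h, e2]
  have hr0 : B / (q + 1) = 0 := by
    have h1 := sq_nonneg (B / (q + 1))
    have : (B / (q + 1)) ^ 2 = 0 := by nlinarith
    exact (pow_eq_zero_iff two_ne_zero).mp this
  rw [← e, hr0, zero_mul]

lemma bb_comm (f u : V → ℝ) : bb c f u = bb c u f :=
  tsum_congr fun p => by unfold sb; ring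

lemma bb_add_right (hnn : ∀ x y, 0 ≤ c x y) {f u v : V → ℝ}
    (hf : Summable (ed c f)) (hu : Summable (ed c u)) (hv : Summable (ed c v)) :
    bb c f (fun x => u x + v x) = bb c f u + bb c f v := by
  unfold bb
  rw [← Summable.tsum_add (summable_sb hnn hf hu) (summable_sb hnn hf hv)]
  refine tsum_congr fun p => ?_
  unfold sb
  ring

lemma bb_smul_right {f u : V → ℝ} (a : ℝ) :
    bb c f (fun x => a * u x) = a * bb c f u := by
  unfold bb
  rw [← tsum_mul_left]
  refine tsum_congr fun p => ?_
  unfold sb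
  ring

lemma bb_zero_right (f : V → ℝ) : bb c f (fun _ => (0:ℝ)) = 0 := by
  unfold bb
  convert tsum_zero with p
  unfold sb
  ring

lemma bb_sum_right (hnn : ∀ x y, 0 ≤ c x y) {ι : Type*} {s : Finset ι}
    {f : V → ℝ} {F : ι → V → ℝ}
    (hf : Summable (ed c f)) (h : ∀ i ∈ s, Summable (ed c (F i))) :
    bb c f (fun x => ∑ i ∈ s, F i x) = ∑ i ∈ s, bb c f (F i) := by
  classical
  induction s using Finset.induction_on with
  | empty => simpa using bb_zero_right f
  | insert a s hni ih =>
    have h1 : bb c f (fun x => ∑ i ∈ insert a s, F i x)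
        = bb c f (fun x => F a x + ∑ i ∈ s, F i x) := by
      congr 1
      funext x
      rw [Finset.sum_insert hni]
    rw [h1, bb_add_right hnn hf (h a (Finset.mem_insert_self a s))
        (summable_ed_sum hnn fun i hi => h i (Finset.mem_insert_of_mem hi)),
      Finset.sum_insert hni, ih fun i hi => h i (Finset.mem_insert_of_mem hi)]


lemma bb_chi (hsym : ∀ x y, c x y = c y x) (hnn : ∀ x y, 0 ≤ c x y)
    {f : V → ℝ} (hf : Summable (ed c f)) (hs : ∀ x, Summable (c x)) (w : V)
    (hsw : Summable fun x => c x w) :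
    bb c f (chi w) = 2 * ∑' z, c w z * (f w - f z) := by
  set F : V × V → ℝ := fun p => if p.2 = w then c p.1 p.2 * (f p.2 - f p.1) else 0 with hF
  set G : V × V → ℝ := fun p => if p.1 = w then -(c p.1 p.2 * (f p.2 - f p.1)) else 0 with hG
  have hFabs : ∀ p, |F p| ≤ (ed c f p + (if p.2 = w then c p.1 p.2 else 0)) / 2 := by
    intro p
    have h := hnn p.1 p.2
    rw [hF]
    dsimp only
    by_cases h2 : p.2 = w
    · rw [if_pos h2, if_pos h2, abs_mul, abs_of_nonneg h]
      unfold ed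
      nlinarith [mul_nonneg h (sq_nonneg (|f p.2 - f p.1| - 1)), sq_abs (f p.2 - f p.1),
        abs_nonneg (f p.2 - f p.1)]
    · rw [if_neg h2, if_neg h2, abs_zero]
      have := ed_nonneg hnn f p
      linarith
  have hGabs : ∀ p, |G p| ≤ (ed c f p + (if p.1 = w then c p.1 p.2 else 0)) / 2 := by
    intro p
    have h := hnn p.1 p.2
    rw [hG]
    dsimp only
    by_cases h1 : p.1 = w
    · rw [if_pos h1, if_pos h1, abs_neg, abs_mul, abs_of_nonneg h]
      unfold ed
      nlinarith [mul_nonneg h (sq_nonneg (|f p.2 - f p.1| - 1)), sq_abs (f p.2 - f p.1),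
        abs_nonneg (f p.2 - f p.1)]
    · rw [if_neg h1, if_neg h1, abs_zero]
      have := ed_nonneg hnn f p
      linarith
  have hFs : Summable F := by
    refine summable_abs_iff.mp (Summable.of_nonneg_of_le (fun p => abs_nonneg _) hFabs ?_)
    exact (hf.add (summable_lineR hnn hsw)).div_const 2
  have hGs : Summable G := by
    refine summable_abs_iff.mp (Summable.of_nonneg_of_le (fun p => abs_nonneg _) hGabs ?_)
    exact (hf.add (summable_lineL hnn (w := w) hs)).div_const 2
  have hsplit : ∀ p, sb c f (chi w) p = F p + G p := by
    intro p
    rw [hF, hG]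
    unfold sb chi
    dsimp only
    by_cases h2 : p.2 = w <;> by_cases h1 : p.1 = w <;> simp [h1, h2] <;> ring
  have hFsum : ∑' p, F p = ∑' z, c w z * (f w - f z) := by
    rw [Summable.tsum_prod' hFs fun x => hFs.prod_factor x]
    have hin : ∀ x, ∑' z, F (x, z) = c w x * (f w - f x) := by
      intro x
      rw [tsum_eq_single w]
      · rw [hF]; simp [hsym x w]
      · intro z hz; rw [hF]; simp [hz]
    rw [tsum_congr hin]
  have hGsum : ∑' p, G p = ∑' z, c w z * (f w - f z) := by
    rw [Summable.tsum_prod' hGs fun x => hGs.prod_factor x]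
    have hin : ∀ x, ∑' z, G (x, z) = if x = w then ∑' z, c w z * (f w - f z) else 0 := by
      intro x
      by_cases hx : x = w
      · rw [if_pos hx]
        subst hx
        refine tsum_congr fun z => ?_
        rw [hG]
        dsimp only
        rw [if_pos rfl]
        ring
      · rw [if_neg hx]
        convert tsum_zero with z
        rw [hG]
        simp [hx]
    rw [tsum_congr hin, tsum_ite_eq]
  unfold bb
  rw [tsum_congr hsplit, Summable.tsum_add hFs hGs, hFsum, hGsum]
  ring

end Stmt11Aux

open Stmt11Aux

/-- Deterministic uniqueness step from the proof of the paper's Lemma 3.2: a bounded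
function `g` on `B₁W` vanishing on `A ⊆ W`, discrete harmonic on `W ∖ A`, and equal
on `B₁W ∖ W` to its harmonic-measure average over `W`, vanishes identically on `B₁W`.
Here `H y` (for `y ∈ W`) is the energy-minimizing extension of `𝟙_y` from `W`, so that
`hm_W^x(y) = H y x`. -/
theorem stmt11 {V : Type*} [Countable V] [Infinite V]
    (c : V → V → ℝ) (hc : Conductance c)
    (W A : Finset V) (hW : W.Nonempty) (hA : A.Nonempty) (hAW : A ⊆ W)
    -- the harmonic-measure functions for the boundary set `W`
    (H : V → V → ℝ)
    (hHb : ∀ y ∈ W, H y y = 1 ∧ ∀ a ∈ W, a ≠ y → H y a = 0)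
    (hHm : ∀ y ∈ W, ∀ f : V → ℝ,
      (f y = 1 ∧ ∀ a ∈ W, a ≠ y → f a = 0) → energy c (H y) ≤ energy c f)
    -- the function `g`
    (g : V → ℝ) (M : ℝ)
    (hgbdd : ∀ x ∈ B1 c W, |g x| ≤ M)
    (hg0 : ∀ a ∈ A, g a = 0)
    (hgharm : ∀ x ∈ W, x ∉ A → g x = (∑' y, c x y * g y) / (∑' y, c x y))
    (hghm : ∀ x ∈ B1 c W, x ∉ W → g x = ∑ y ∈ W, H y x * g y) :
    ∀ x ∈ B1 c W, g x = 0 := by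
  classical
  obtain ⟨hsym, hnn, hdiag, hconn, hsum⟩ := hc
  -- basic: neighbors of W-vertices lie in B1
  have hnbr : ∀ w ∈ W, ∀ z : V, 0 < c w z → z ∈ B1 c W := by
    intro w hw z hz
    right
    exact ⟨w, hw, by rw [hsym z w]; exact hz⟩
  have hWB1 : ∀ w ∈ W, (w : V) ∈ B1 c W := fun w hw => Or.inl hw
  -- each H y has summable energy density
  have hHed : ∀ y ∈ W, Summable (ed c (H y)) := by
    intro y hy
    have hsy : Summable fun x => c x y := by
      apply (hsum y).congr
      intro x
      exact (hsym x y).symm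
    have hchi : energy c (chi y) ≠ ⊤ := by
      rw [energy_eq_ofReal hnn (summable_ed_chi hnn hsum hsy)]
      exact ENNReal.mul_ne_top (by norm_num) ENNReal.ofReal_ne_top
    have hbd : chi y y = 1 ∧ ∀ a ∈ W, a ≠ y → chi y a = 0 := by
      constructor
      · unfold chi; rw [if_pos rfl]
      · intro a _ hay; unfold chi; rw [if_neg hay]
    exact summable_ed_of_energy_ne_top hnn (ne_top_of_le_ne_top hchi (hHm y hy (chi y) hbd))
  -- the global extension ḡ
  set gb : V → ℝ := fun x => ∑ y ∈ W, g y * H y x with hgb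
  have hgbed : Summable (ed c gb) := by
    apply summable_ed_sum hnn
    intro y hy
    exact summable_ed_smul hnn (g y) (hHed y hy)
  -- gb agrees with g on B1
  have hgbg : ∀ x ∈ B1 c W, gb x = g x := by
    intro x hx
    by_cases hxW : x ∈ W
    · rw [hgb]
      dsimp only
      rw [Finset.sum_eq_single x]
      · rw [(hHb x hxW).1, mul_one]
      · intro y hy hyx
        rw [(hHb y hy).2 x hxW (fun h => hyx h.symm), mul_zero]
      · intro h; exact absurd hxW h
    · rw [hgb, hghm x hx hxW]
      exact Finset.sum_congr rfl fun y _ => mul_comm _ _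
  -- real harmonicity of g at points of W \ A
  have hharm : ∀ w ∈ W, w ∉ A → ∑' z, c w z * (g w - g z) = 0 := by
    intro w hw hwA
    have hM0 : 0 ≤ M := le_trans (abs_nonneg _) (hgbdd w (hWB1 w hw))
    have hTsum : Summable fun z => c w z * g z := by
      refine summable_abs_iff.mp (Summable.of_nonneg_of_le (fun z => abs_nonneg _)
        (fun z => ?_) ((hsum w).mul_right M))
      rw [abs_mul, abs_of_nonneg (hnn w z)]
      rcases (hnn w z).lt_or_eq with h | h
      · exact mul_le_mul_of_nonneg_left (hgbdd z (hnbr w hw z h)) (le_of_lt h)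
      · rw [← h]; simp
    have hP : 0 < ∑' z, c w z := by
      obtain ⟨z', hz'⟩ := exists_ne w
      rcases (Relation.ReflTransGen.cases_head (hconn w z')) with h | ⟨b, hb, _⟩
      · exact absurd h.symm hz'
      · calc (0:ℝ) < c w b := hb
          _ ≤ ∑' z, c w z := Summable.le_tsum (hsum w) b fun z _ => hnn w z
    have hgw : g w * (∑' z, c w z) = ∑' z, c w z * g z := by
      rw [hgharm w hw hwA, div_mul_cancel₀ _ (ne_of_gt hP)]
    calc ∑' z, c w z * (g w - g z)
        = ∑' z, (c w z * g w - c w z * g z) := tsum_congr fun z => by ring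
      _ = (∑' z, c w z * g w) - ∑' z, c w z * g z :=
          Summable.tsum_sub ((hsum w).mul_right (g w)) hTsum
      _ = g w * (∑' z, c w z) - ∑' z, c w z * g z := by rw [tsum_mul_right, mul_comm]
      _ = 0 := by rw [hgw, sub_self]
  -- bb of gb against chi w vanishes for w ∈ W \ A
  have hbbchi : ∀ w ∈ W, w ∉ A → bb c gb (chi w) = 0 := by
    intro w hw hwA
    have hsw : Summable fun x => c x w := by
      apply (hsum w).congr
      intro x
      exact (hsym x w).symm
    rw [bb_chi hsym hnn hgbed hsum w hsw]
    have : ∑' z, c w z * (gb w - gb z) = ∑' z, c w z * (g w - g z) := by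
      refine tsum_congr fun z => ?_
      rcases (hnn w z).lt_or_eq with h | h
      · rw [hgbg w (hWB1 w hw), hgbg z (hnbr w hw z h)]
      · rw [← h]; ring
    rw [this, hharm w hw hwA, mul_zero]
  -- decompose gb = u1 + u2
  set u2 : V → ℝ := fun x => ∑ w ∈ W \ A, gb w * chi w x with hu2
  set u1 : V → ℝ := fun x => gb x - u2 x with hu1
  have hu2ed : Summable (ed c u2) := by
    apply summable_ed_sum hnn
    intro w hw
    apply summable_ed_smul hnn
    have hsw : Summable fun x => c x w := by
      apply (hsum w).congr
      intro x
      exact (hsym x w).symm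
    exact summable_ed_chi hnn hsum hsw
  have hu1ed : Summable (ed c u1) := by
    have h := summable_ed_add hnn hgbed (summable_ed_smul hnn (-1) hu2ed)
    apply h.congr
    intro p
    unfold ed
    rw [hu1]
    dsimp only
    ring
  -- u1 vanishes on W
  have hu1W : ∀ w ∈ W, u1 w = 0 := by
    intro w hw
    have hu2w : u2 w = if w ∈ W \ A then gb w else 0 := by
      rw [hu2]
      dsimp only
      by_cases hmem : w ∈ W \ A
      · rw [if_pos hmem, Finset.sum_eq_single w]
        · unfold chi; rw [if_pos rfl, mul_one]
        · intro y hy hyw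
          unfold chi; rw [if_neg (fun h => hyw h.symm), mul_zero]
        · intro h; exact absurd hmem h
      · rw [if_neg hmem]
        apply Finset.sum_eq_zero
        intro y hy
        have hyw : y ≠ w := fun h => hmem (h ▸ hy)
        unfold chi; rw [if_neg (fun h => hyw h.symm), mul_zero]
    rw [hu1]
    dsimp only
    rw [hu2w]
    by_cases hwA : w ∈ A
    · rw [if_neg (fun h => (Finset.mem_sdiff.mp h).2 hwA), sub_zero,
        hgbg w (hWB1 w hw), hg0 w hwA]
    · rw [if_pos (Finset.mem_sdiff.mpr ⟨hw, hwA⟩), sub_self]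
  -- orthogonality: bb (H y) u1 = 0
  have horth : ∀ y ∈ W, bb c (H y) u1 = 0 := by
    intro y hy
    refine orth hnn (hHed y hy) hu1ed fun t => ?_
    apply hHm y hy
    constructor
    · rw [hu1W y hy, mul_zero, add_zero, (hHb y hy).1]
    · intro a ha hay
      rw [hu1W a ha, mul_zero, add_zero, (hHb y hy).2 a ha hay]
  -- bb gb u1 = 0
  have hbbu1 : bb c gb u1 = 0 := by
    rw [bb_comm]
    have hgbfun : gb = fun x => ∑ y ∈ W, (fun y => fun x => g y * H y x) y x := rfl
    rw [hgbfun, bb_sum_right hnn hu1ed fun y hy => summable_ed_smul hnn (g y) (hHed y hy)]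
    apply Finset.sum_eq_zero
    intro y hy
    rw [bb_smul_right, bb_comm, horth y hy, mul_zero]
  -- bb gb u2 = 0
  have hbbu2 : bb c gb u2 = 0 := by
    have hu2fun : u2 = fun x => ∑ w ∈ W \ A, (fun w => fun x => gb w * chi w x) w x := rfl
    rw [hu2fun, bb_sum_right hnn hgbed]
    · apply Finset.sum_eq_zero
      intro w hw
      obtain ⟨hwW, hwA⟩ := Finset.mem_sdiff.mp hw
      rw [bb_smul_right, hbbchi w hwW hwA, mul_zero]
    · intro w hw
      apply summable_ed_smul hnn
      have hsw : Summable fun x => c x w := by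
        apply (hsum w).congr
        intro x
        exact (hsym x w).symm
      exact summable_ed_chi hnn hsum hsw
  -- bb gb gb = 0
  have hbbgb : bb c gb gb = 0 := by
    have hsplit : bb c gb gb = bb c gb (fun x => u1 x + u2 x) := by
      congr 1
      funext x
      rw [hu1]
      ring
    rw [hsplit, bb_add_right hnn hgbed hu1ed hu2ed, hbbu1, hbbu2, add_zero]
  -- energy density of gb vanishes
  have hed0 : ∀ p : V × V, ed c gb p = 0 := by
    have hS : ∑' p, ed c gb p = 0 := by
      rw [← hbbgb]
      refine tsum_congr fun p => ?_
      unfold ed sb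
      ring
    intro p
    have h1 : ed c gb p ≤ 0 := hS ▸ Summable.le_tsum hgbed p fun q _ => ed_nonneg hnn gb q
    exact le_antisymm h1 (ed_nonneg hnn gb p)
  -- gb is constant along edges, hence constant
  have hedge : ∀ x z : V, 0 < c x z → gb z = gb x := by
    intro x z hxz
    have h := hed0 (x, z)
    unfold ed at h
    dsimp only at h
    rcases mul_eq_zero.mp h with h | h
    · exact absurd h (ne_of_gt hxz)
    · have := pow_eq_zero_iff two_ne_zero |>.mp h
      linarith [sub_eq_zero.mp this]
  obtain ⟨a0, ha0⟩ := hA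
  have hconst : ∀ x : V, gb x = gb a0 := by
    intro x
    have h := hconn a0 x
    induction h with
    | refl => rfl
    | tail hab hbc ih => rw [hedge _ _ hbc, ih]
  intro x hx
  rw [← hgbg x hx, hconst x, hgbg a0 (hWB1 a0 (hAW ha0)), hg0 a0 ha0]
end
end

section
/- Let ∂ = {y_1, …, y_m} ⊆ V be a finite set with m ≥ 1 and a fixed enumeration, and let x̂ ∈ V ∖ ∂. Define H : V → ℂ by: for k = 1,…,m, H(y_k) := exp(2πi Σ_{j=1}^k h^{𝟙_{y_j}}(x̂)), where h^{𝟙_y} is the unique energy-minimizing function on V equal to 1 at y and 0 on ∂ ∖ {y}; and on V ∖ ∂, the real and imaginary parts of H are the energy-minimizing extensions of their boundary values on ∂. Let (W_n, E_n)_{n≥1} be an exhaustion of the graph by finite connected subgraphs with ∂ ∪ {x̂} ⊆ W_n for all n, and define H_n : W_n → ℂ analogously inside (W_n,E_n): H_n(y_k) := exp(2πi Σ_{j=1}^k h_n^{y_j}(x̂)), where h_n^{y_j} : W_n → ℝ equals 𝟙_{y_j} on ∂ and is (W_n,E_n)-harmonic at every x ∈ W_n ∖ ∂, and the real and imaginary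 parts of H_n are (W_n,E_n)-harmonic on W_n ∖ ∂ with boundary values H_n|_∂. Then for every x ∈ V, H_n(x) → H(x) as n → ∞. (The paper's Lemma 5.5: the Tutte embeddings of the finite subgraphs converge pointwise to the Tutte embedding of the infinite graph; in the paper, the enumeration of ∂ is the counterclockwise boundary order of a planar map, which here is a fixed given enumeration.) -/
open scoped ENNReal

noncomputable section

open scoped Classical

section Aux
variable {V : Type*} {c : V → V → ℝ}

/-- finite Dirichlet energy of subgraph (Wn, Es) (no 1/2, counts both directions). -/
def En' {V : Type*} (c : V → V → ℝ) (Wn : Finset V) (Es : Set (V × V)) (f : V → ℝ) : ℝ :=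
  ∑ p ∈ Wn ×ˢ Wn, if p ∈ Es then c p.1 p.2 * (f p.2 - f p.1) ^ 2 else 0

variable {V : Type*} {c : V → V → ℝ}

lemma En'_term_nonneg (hc0 : ∀ x y, 0 ≤ c x y) (Es : Set (V × V)) (f : V → ℝ) (p : V × V) :
    0 ≤ (if p ∈ Es then c p.1 p.2 * (f p.2 - f p.1) ^ 2 else 0) := by
  split
  · exact mul_nonneg (hc0 _ _) (sq_nonneg _)
  · exact le_refl 0

lemma En'_nonneg (hc0 : ∀ x y, 0 ≤ c x y) (Wn : Finset V) (Es : Set (V × V)) (f : V → ℝ) :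
    0 ≤ En' c Wn Es f :=
  Finset.sum_nonneg fun p _ => En'_term_nonneg hc0 Es f p

lemma En'_mono (hc0 : ∀ x y, 0 ≤ c x y) {W1 W2 : Finset V} {E1 E2 : Set (V × V)}
    (hW : W1 ⊆ W2) (hE : E1 ⊆ E2) (f : V → ℝ) :
    En' c W1 E1 f ≤ En' c W2 E2 f := by
  have h1 : En' c W1 E1 f ≤ En' c W1 E2 f := by
    refine Finset.sum_le_sum fun p _ => ?_
    by_cases h : p ∈ E1
    · simp [h, hE h]
    · simpa [h] using En'_term_nonneg hc0 E2 f p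
  refine h1.trans (Finset.sum_le_sum_of_subset_of_nonneg
    (Finset.product_subset_product hW hW) fun p _ _ => En'_term_nonneg hc0 E2 f p)

/-- Dirichlet principle on a finite subgraph: a function harmonic off the boundary
minimizes finite energy among functions with the same boundary values. -/
lemma En'_min (hcs : ∀ x y, c x y = c y x) (hc0 : ∀ x y, 0 ≤ c x y)
    (Wn : Finset V) (Es : Set (V × V))
    (hEsym : ∀ a b, (a, b) ∈ Es → (b, a) ∈ Es)
    {m : ℕ} (y : Fin m → V)
    (h g : V → ℝ)
    (hharm : ∀ x ∈ Wn, (∀ j, x ≠ y j) →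
      ∑ w ∈ Wn, (if (x, w) ∈ Es then c x w * (h w - h x) else 0) = 0)
    (hag : ∀ j, g (y j) = h (y j)) :
    En' c Wn Es h ≤ En' c Wn Es g := by
  set u : V → ℝ := fun v => g v - h v with hu
  set t : V → V → ℝ := fun x w => if (x, w) ∈ Es then c x w * (h w - h x) else 0 with ht
  have htanti : ∀ x w, t w x = - t x w := by
    intro x w
    by_cases hE : (x, w) ∈ Es
    · have hE' : (w, x) ∈ Es := hEsym _ _ hE
      simp only [ht, hE, hE', if_true, hcs w x]
      ring
    · have hE' : (w, x) ∉ Es := fun hh => hE (hEsym _ _ hh)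
      simp [ht, hE, hE']
  have hX : ∑ x ∈ Wn, ∑ w ∈ Wn, t x w * (u w - u x) = 0 := by
    have h1 : ∑ x ∈ Wn, ∑ w ∈ Wn, t x w * u w
        = - ∑ x ∈ Wn, ∑ w ∈ Wn, t x w * u x := by
      rw [Finset.sum_comm]
      rw [← Finset.sum_neg_distrib]
      refine Finset.sum_congr rfl fun w _ => ?_
      rw [← Finset.sum_neg_distrib]
      refine Finset.sum_congr rfl fun x _ => ?_
      rw [htanti w x]; ring
    have h2 : ∀ x ∈ Wn, ∑ w ∈ Wn, t x w * u x = 0 := by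
      intro x hx
      rw [← Finset.sum_mul]
      by_cases hb : ∀ j, x ≠ y j
      · rw [hharm x hx hb]; ring
      · push_neg at hb
        obtain ⟨j, hj⟩ := hb
        have : u x = 0 := by simp [hu, hj, hag j]
        rw [this]; ring
    calc ∑ x ∈ Wn, ∑ w ∈ Wn, t x w * (u w - u x)
        = ∑ x ∈ Wn, (∑ w ∈ Wn, t x w * u w - ∑ w ∈ Wn, t x w * u x) := by
          refine Finset.sum_congr rfl fun x _ => ?_
          rw [← Finset.sum_sub_distrib]
          exact Finset.sum_congr rfl fun w _ => by ring
      _ = ∑ x ∈ Wn, ∑ w ∈ Wn, t x w * u w - ∑ x ∈ Wn, ∑ w ∈ Wn, t x w * u x := Finset.sum_sub_distrib _ _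
      _ = - ∑ x ∈ Wn, ∑ w ∈ Wn, t x w * u x - ∑ x ∈ Wn, ∑ w ∈ Wn, t x w * u x := by rw [h1]
      _ = -2 * ∑ x ∈ Wn, ∑ w ∈ Wn, t x w * u x := by ring
      _ = -2 * ∑ x ∈ Wn, (0 : ℝ) := by
          congr 1
          exact Finset.sum_congr rfl h2
      _ = 0 := by simp
  have haux : ∑ x ∈ Wn, ∑ w ∈ Wn, 2 * (t x w * (u w - u x)) = 0 := by
    rw [show (0:ℝ) = 2 * ∑ x ∈ Wn, ∑ w ∈ Wn, t x w * (u w - u x) by rw [hX]; ring]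
    simp [Finset.mul_sum]
  have key : En' c Wn Es g - En' c Wn Es h - En' c Wn Es u
      = ∑ x ∈ Wn, ∑ w ∈ Wn, 2 * (t x w * (u w - u x)) := by
    simp only [En', Finset.sum_product, ← Finset.sum_sub_distrib]
    refine Finset.sum_congr rfl fun x _ => Finset.sum_congr rfl fun w _ => ?_
    have hgv : g w - g x = (h w - h x) + (u w - u x) := by simp [hu]; ring
    by_cases hE : (x, w) ∈ Es <;> simp only [ht, hE, if_true, if_false, hgv] <;> ring
  have hu0 : 0 ≤ En' c Wn Es u := En'_nonneg hc0 Wn Es u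
  rw [haux] at key
  linarith

lemma two_energy (f : V → ℝ) :
    2 * energy c f = ∑' p : V × V, ENNReal.ofReal (c p.1 p.2 * (f p.2 - f p.1) ^ 2) := by
  rw [energy, ← mul_assoc, ← ENNReal.tsum_prod,
    show (2 : ℝ≥0∞) * (1/2) = 1 by
      rw [one_div, ENNReal.mul_inv_cancel (by norm_num) (by norm_num)], one_mul]

lemma ofReal_En'_le (hc0 : ∀ x y, 0 ≤ c x y) (Wn : Finset V) (Es : Set (V × V)) (f : V → ℝ) :
    ENNReal.ofReal (En' c Wn Es f) ≤ 2 * energy c f := by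
  rw [two_energy, En']
  rw [ENNReal.ofReal_sum_of_nonneg (fun p _ => by
    split
    · exact mul_nonneg (hc0 _ _) (sq_nonneg _)
    · exact le_refl 0)]
  refine le_trans (Finset.sum_le_sum fun p _ => ?_) (ENNReal.sum_le_tsum _)
  split
  · exact le_refl _
  · simp

lemma energy_ne_top (hcs : ∀ x y, c x y = c y x) (hc0 : ∀ x y, 0 ≤ c x y)
    (hπ : ∀ x, Summable fun z => c x z) (f : V → ℝ)
    (hf : (Function.support f).Finite) : energy c f ≠ ⊤ := by
  have hfin1 : ∀ g : V → ℝ, (∀ x, 0 ≤ g x) →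
      (∀ x, ∑' z : V, ENNReal.ofReal (c x z) = ENNReal.ofReal (∑' z, c x z)) := by
    intro g hg x
    exact (ENNReal.ofReal_tsum_of_nonneg (fun z => hc0 x z) (hπ x)).symm
  -- bound a single "column" sum
  have col : ∀ x : V, ∑' z : V, ENNReal.ofReal (2 * c x z * f x ^ 2) ≠ ⊤ := by
    intro x
    have : ∀ z, ENNReal.ofReal (2 * c x z * f x ^ 2)
        = ENNReal.ofReal (2 * f x ^ 2) * ENNReal.ofReal (c x z) := by
      intro z
      rw [← ENNReal.ofReal_mul (by positivity)]
      ring_nf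
    simp only [this]
    rw [ENNReal.tsum_mul_left, ← ENNReal.ofReal_tsum_of_nonneg (fun z => hc0 x z) (hπ x)]
    exact ENNReal.mul_ne_top ENNReal.ofReal_ne_top ENNReal.ofReal_ne_top
  have hmain : ∀ (F : V → V → ℝ), (∀ x z, F x z = 2 * c x z * f x ^ 2) →
      ∑' x : V, ∑' z : V, ENNReal.ofReal (F x z) ≠ ⊤ := by
    intro F hF
    have hz : ∀ x ∉ hf.toFinset, ∑' z : V, ENNReal.ofReal (F x z) = 0 := by
      intro x hx
      have hfx : f x = 0 := by
        by_contra hne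
        exact hx (hf.mem_toFinset.mpr hne)
      simp [hF, hfx]
    rw [tsum_eq_sum hz]
    refine (ENNReal.sum_lt_top.mpr fun x _ => ?_).ne
    simp only [hF]
    exact (col x).lt_top
  have hsplit : ∀ x z : V, ENNReal.ofReal (c x z * (f z - f x) ^ 2)
      ≤ ENNReal.ofReal (2 * c x z * f z ^ 2) + ENNReal.ofReal (2 * c x z * f x ^ 2) := by
    intro x z
    have n1 : (0:ℝ) ≤ 2 * c x z * f z ^ 2 := mul_nonneg (mul_nonneg (by norm_num) (hc0 x z)) (sq_nonneg _)
    have n2 : (0:ℝ) ≤ 2 * c x z * f x ^ 2 := mul_nonneg (mul_nonneg (by norm_num) (hc0 x z)) (sq_nonneg _)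
    rw [← ENNReal.ofReal_add n1 n2]
    refine ENNReal.ofReal_le_ofReal ?_
    nlinarith [hc0 x z, sq_nonneg (f z + f x), sq_nonneg (f z - f x)]
  rw [energy]
  refine ENNReal.mul_ne_top (by norm_num) ?_
  have hle : ∑' x : V, ∑' z : V, ENNReal.ofReal (c x z * (f z - f x) ^ 2)
      ≤ (∑' x : V, ∑' z : V, ENNReal.ofReal (2 * c x z * f z ^ 2))
        + ∑' x : V, ∑' z : V, ENNReal.ofReal (2 * c x z * f x ^ 2) := by
    rw [← ENNReal.tsum_add]
    refine ENNReal.tsum_le_tsum fun x => ?_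
    rw [← ENNReal.tsum_add]
    exact ENNReal.tsum_le_tsum fun z => hsplit x z
  refine ne_top_of_le_ne_top ?_ hle
  refine ENNReal.add_ne_top.mpr ⟨?_, hmain _ fun x z => rfl⟩
  calc ∑' x : V, ∑' z : V, ENNReal.ofReal (2 * c x z * f z ^ 2)
      = ∑' z : V, ∑' x : V, ENNReal.ofReal (2 * c x z * f z ^ 2) := ENNReal.tsum_comm
    _ ≠ ⊤ := hmain (fun a b => 2 * c b a * f a ^ 2) (fun a b => by rw [hcs])

/-- linearity of the finite harmonicity condition. -/
lemma harm_sum (Wn : Finset V) (Es : Set (V × V)) {m : ℕ} (β : Fin m → ℝ)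
    (h : Fin m → V → ℝ) (x : V)
    (hh : ∀ k, ∑ w ∈ Wn, (if (x, w) ∈ Es then c x w * (h k w - h k x) else 0) = 0) :
    ∑ w ∈ Wn, (if (x, w) ∈ Es then
      c x w * ((∑ k, β k * h k w) - ∑ k, β k * h k x) else 0) = 0 := by
  have key : ∀ w, (if (x, w) ∈ Es then
      c x w * ((∑ k, β k * h k w) - ∑ k, β k * h k x) else 0)
      = ∑ k, β k * (if (x, w) ∈ Es then c x w * (h k w - h k x) else 0) := by
    intro w
    by_cases hE : (x, w) ∈ Es
    · simp only [hE, if_true, ← Finset.sum_sub_distrib, Finset.mul_sum]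
      exact Finset.sum_congr rfl fun k _ => by ring
    · simp [hE]
  simp only [key]
  rw [Finset.sum_comm]
  refine Finset.sum_eq_zero fun k _ => ?_
  rw [← Finset.mul_sum, hh k, mul_zero]

/-- uniqueness of the solution of the Dirichlet problem on a finite connected subgraph. -/
lemma finite_unique (hcs : ∀ x y, c x y = c y x) (hc0 : ∀ x y, 0 ≤ c x y)
    (Wn : Finset V) (Es : Set (V × V))
    (hEsym : ∀ a b, (a, b) ∈ Es → (b, a) ∈ Es)
    (hEadj : ∀ a b, (a, b) ∈ Es → 0 < c a b ∧ a ∈ Wn ∧ b ∈ Wn)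
    {m : ℕ} (hm : 1 ≤ m) (y : Fin m → V) (hyW : ∀ k, y k ∈ Wn)
    (hconn : ∀ x ∈ Wn, ∀ z ∈ Wn, Relation.ReflTransGen (fun a b => (a, b) ∈ Es) x z)
    (h1 h2 : V → ℝ)
    (hh1 : ∀ x ∈ Wn, (∀ j, x ≠ y j) →
      ∑ w ∈ Wn, (if (x, w) ∈ Es then c x w * (h1 w - h1 x) else 0) = 0)
    (hh2 : ∀ x ∈ Wn, (∀ j, x ≠ y j) →
      ∑ w ∈ Wn, (if (x, w) ∈ Es then c x w * (h2 w - h2 x) else 0) = 0)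
    (heq : ∀ j, h1 (y j) = h2 (y j)) :
    ∀ x ∈ Wn, h1 x = h2 x := by
  set d : V → ℝ := fun v => h1 v - h2 v with hd
  have hdharm : ∀ x ∈ Wn, (∀ j, x ≠ y j) →
      ∑ w ∈ Wn, (if (x, w) ∈ Es then c x w * (d w - d x) else 0) = 0 := by
    intro x hx hb
    have := hh1 x hx hb
    have h2' := hh2 x hx hb
    calc ∑ w ∈ Wn, (if (x, w) ∈ Es then c x w * (d w - d x) else 0)
        = ∑ w ∈ Wn, ((if (x, w) ∈ Es then c x w * (h1 w - h1 x) else 0)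
          - (if (x, w) ∈ Es then c x w * (h2 w - h2 x) else 0)) := by
          refine Finset.sum_congr rfl fun w _ => ?_
          by_cases hE : (x, w) ∈ Es <;> simp only [hd, hE, if_true, if_false] <;> ring
      _ = 0 := by rw [Finset.sum_sub_distrib, this, h2', sub_zero]
  have hEzero : En' c Wn Es d = 0 := by
    have hle : En' c Wn Es d ≤ En' c Wn Es (fun _ => 0) :=
      En'_min hcs hc0 Wn Es hEsym y d (fun _ => 0) hdharm
        (fun j => by simp [hd, heq j])
    have hz : En' c Wn Es (fun _ => 0) = 0 := by
      rw [En']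
      refine Finset.sum_eq_zero fun p _ => ?_
      split <;> simp
    have hge : 0 ≤ En' c Wn Es d :=
      Finset.sum_nonneg fun p _ => by
        split
        · exact mul_nonneg (hc0 _ _) (sq_nonneg _)
        · exact le_refl 0
    linarith [hle.trans hz.le]
  have hterm : ∀ a b, (a, b) ∈ Es → d b = d a := by
    intro a b hE
    obtain ⟨hcab, haW, hbW⟩ := hEadj a b hE
    have hmem : (a, b) ∈ Wn ×ˢ Wn := Finset.mem_product.mpr ⟨haW, hbW⟩
    have h0 : (if (a, b) ∈ Es then c a b * (d b - d a) ^ 2 else 0) = 0 := by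
      have := (Finset.sum_eq_zero_iff_of_nonneg (fun p _ => by
        split
        · exact mul_nonneg (hc0 _ _) (sq_nonneg _)
        · exact le_refl 0)).mp hEzero (a, b) hmem
      exact this
    rw [if_pos hE] at h0
    have : (d b - d a) ^ 2 = 0 := by
      rcases mul_eq_zero.mp h0 with h | h
      · exact absurd h hcab.ne'
      · exact h
    have := pow_eq_zero_iff (n := 2) (by norm_num) |>.mp this
    linarith
  intro x hx
  have hpath := hconn (y ⟨0, hm⟩) (hyW _) x hx
  have : d x = d (y ⟨0, hm⟩) := by
    induction hpath with
    | refl => rfl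
    | tail _ step ih => rw [hterm _ _ step, ih (hEadj _ _ step).2.1]
  have hz : d (y ⟨0, hm⟩) = 0 := by simp [hd, heq]
  have : d x = 0 := this.trans hz
  simpa [hd, sub_eq_zero] using this

/-- uniqueness of finite-energy minimizers with given boundary values. -/
lemma min_unique (hc0 : ∀ x y, 0 ≤ c x y)
    (hconn : ∀ x z, Relation.ReflTransGen (fun a b => 0 < c a b) x z)
    {m : ℕ} (hm : 1 ≤ m) (y : Fin m → V) (φ : Fin m → ℝ)
    (f g : V → ℝ)
    (hfb : ∀ j, f (y j) = φ j) (hgb : ∀ j, g (y j) = φ j)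
    (hfm : ∀ f' : V → ℝ, (∀ j, f' (y j) = φ j) → energy c f ≤ energy c f')
    (hgm : ∀ f' : V → ℝ, (∀ j, f' (y j) = φ j) → energy c g ≤ energy c f')
    (hfe : energy c f ≠ ⊤) : f = g := by
  set mid : V → ℝ := fun v => (f v + g v) / 2 with hmid
  set d : V → ℝ := fun v => (f v - g v) / 2 with hd
  have hmidb : ∀ j, mid (y j) = φ j := fun j => by simp [hmid, hfb j, hgb j]
  have hfg : energy c f = energy c g := le_antisymm (hfm g hgb) (hgm f hfb)
  set A := 2 * energy c f with hA
  set B := 2 * energy c g with hB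
  set M := 2 * energy c mid with hM
  set D := 2 * energy c d with hD
  have hAB : A = B := by rw [hA, hB, hfg]
  have hAM : A ≤ M := mul_le_mul_right (hfm mid hmidb) 2
  have hAtop : A ≠ ⊤ := ENNReal.mul_ne_top (by norm_num) hfe
  have point : ∀ p : V × V,
      ENNReal.ofReal (c p.1 p.2 * (f p.2 - f p.1) ^ 2)
        + ENNReal.ofReal (c p.1 p.2 * (g p.2 - g p.1) ^ 2)
      = 2 * ENNReal.ofReal (c p.1 p.2 * (mid p.2 - mid p.1) ^ 2)
        + 2 * ENNReal.ofReal (c p.1 p.2 * (d p.2 - d p.1) ^ 2) := by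
    intro p
    have n1 : (0:ℝ) ≤ c p.1 p.2 * (f p.2 - f p.1) ^ 2 := mul_nonneg (hc0 _ _) (sq_nonneg _)
    have n2 : (0:ℝ) ≤ c p.1 p.2 * (g p.2 - g p.1) ^ 2 := mul_nonneg (hc0 _ _) (sq_nonneg _)
    have n3 : (0:ℝ) ≤ 2 * (c p.1 p.2 * (mid p.2 - mid p.1) ^ 2) :=
      mul_nonneg (by norm_num) (mul_nonneg (hc0 _ _) (sq_nonneg _))
    have n4 : (0:ℝ) ≤ 2 * (c p.1 p.2 * (d p.2 - d p.1) ^ 2) :=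
      mul_nonneg (by norm_num) (mul_nonneg (hc0 _ _) (sq_nonneg _))
    rw [show (2:ℝ≥0∞) = ENNReal.ofReal 2 from (by norm_num),
      ← ENNReal.ofReal_mul (by norm_num), ← ENNReal.ofReal_mul (by norm_num),
      ← ENNReal.ofReal_add n1 n2, ← ENNReal.ofReal_add n3 n4]
    refine congrArg _ ?_
    simp only [hmid, hd]
    ring
  have par : A + B = 2 * M + 2 * D := by
    rw [hA, hB, hM, hD, two_energy, two_energy, two_energy, two_energy,
      ← ENNReal.tsum_mul_left, ← ENNReal.tsum_mul_left, ← ENNReal.tsum_add, ← ENNReal.tsum_add]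
    exact tsum_congr point
  have hD0 : D = 0 := by
    by_contra hne
    have h1 : A + B < 2 * M + 2 * D := by
      calc A + B < A + B + 2 * D :=
            ENNReal.lt_add_right (by simp [ENNReal.add_ne_top, hAtop, hAB ▸ hAtop])
              (by simp [hne])
        _ ≤ 2 * M + 2 * D := by
            gcongr
            calc A + B = A + A := by rw [hAB]
              _ = 2 * A := (two_mul A).symm
              _ ≤ 2 * M := mul_le_mul_right hAM 2
    exact absurd par h1.ne
  -- D = 0 forces d constant along edges
  have hTd : ∑' p : V × V, ENNReal.ofReal (c p.1 p.2 * (d p.2 - d p.1) ^ 2) = 0 := by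
    rw [← two_energy, ← hD, hD0]
  have hedge : ∀ a b, 0 < c a b → d b = d a := by
    intro a b hcab
    have := ENNReal.tsum_eq_zero.mp hTd (a, b)
    rw [ENNReal.ofReal_eq_zero] at this
    have hsq : (d b - d a) ^ 2 ≤ 0 := by
      by_contra hpos
      push_neg at hpos
      nlinarith
    have : (d b - d a) ^ 2 = 0 := le_antisymm hsq (sq_nonneg _)
    have := pow_eq_zero_iff (n := 2) (by norm_num) |>.mp this
    linarith
  have hdconst : ∀ x, d x = d (y ⟨0, hm⟩) := by
    intro x
    induction hconn (y ⟨0, hm⟩) x with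
    | refl => rfl
    | tail _ step ih => rw [hedge _ _ step, ih]
  funext v
  have h1 : d v = 0 := by
    rw [hdconst v]
    simp [hd, hfb, hgb]
  have : (f v - g v) / 2 = 0 := h1
  linarith

open Filter in
/-- Main convergence lemma: finite harmonic extensions of fixed boundary data
converge pointwise to an energy-minimizing extension. -/
lemma main_conv
    (hcs : ∀ x y, c x y = c y x) (hc0 : ∀ x y, 0 ≤ c x y)
    (hconn : ∀ x z, Relation.ReflTransGen (fun a b => 0 < c a b) x z)
    (hπ : ∀ x, Summable fun z => c x z)
    {m : ℕ} (hm : 1 ≤ m) (y : Fin m → V) (hyinj : Function.Injective y)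
    (W : ℕ → Finset V) (E : ℕ → Set (V × V))
    (hEsym : ∀ n a b, (a, b) ∈ E n → (b, a) ∈ E n)
    (hEadj : ∀ n a b, (a, b) ∈ E n → 0 < c a b ∧ a ∈ W n ∧ b ∈ W n)
    (hWmono : ∀ n, W n ⊆ W (n + 1)) (hEmono : ∀ n, E n ⊆ E (n + 1))
    (hEcov : ∀ a b, 0 < c a b → ∃ n, (a, b) ∈ E n)
    (hyW : ∀ n k, y k ∈ W n)
    (φ : Fin m → ℝ) (u : ℕ → V → ℝ)
    (hub : ∀ n j, u n (y j) = φ j)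
    (huh : ∀ n, ∀ x ∈ W n, (∀ j, x ≠ y j) →
      ∑ w ∈ W n, (if (x, w) ∈ E n then c x w * (u n w - u n x) else 0) = 0) :
    ∃ g : V → ℝ, (∀ x, Tendsto (fun n => u n x) atTop (nhds (g x))) ∧
      (∀ j, g (y j) = φ j) ∧
      (∀ f : V → ℝ, (∀ j, f (y j) = φ j) → energy c g ≤ energy c f) := by
  have hWle : ∀ {n p}, n ≤ p → W n ⊆ W p := fun {n p} h =>
    (monotone_nat_of_le_succ (fun k => hWmono k)) h
  have hEle : ∀ {n p}, n ≤ p → E n ⊆ E p := fun {n p} h =>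
    (monotone_nat_of_le_succ (fun k => hEmono k)) h
  set a : ℕ → ℝ := fun n => En' c (W n) (E n) (u n) with ha
  -- a is monotone
  have ha_mono : Monotone a := by
    intro n p hnp
    calc a n ≤ En' c (W n) (E n) (u p) :=
          En'_min hcs hc0 (W n) (E n) (hEsym n) y (u n) (u p) (huh n)
            (fun j => by rw [hub, hub])
      _ ≤ a p := En'_mono hc0 (hWle hnp) (hEle hnp) (u p)
  -- key upper bound against arbitrary competitors
  have hkey : ∀ f : V → ℝ, (∀ j, f (y j) = φ j) → ∀ n,
      ENNReal.ofReal (a n) ≤ 2 * energy c f := by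
    intro f hf n
    calc ENNReal.ofReal (a n) ≤ ENNReal.ofReal (En' c (W n) (E n) f) :=
          ENNReal.ofReal_le_ofReal
            (En'_min hcs hc0 (W n) (E n) (hEsym n) y (u n) f (huh n)
              (fun j => by rw [hf, hub]))
      _ ≤ 2 * energy c f := ofReal_En'_le hc0 (W n) (E n) f
  -- a finite-support competitor
  set f0 : V → ℝ := fun v => ∑ k : Fin m, if v = y k then φ k else 0 with hf0
  have hf0b : ∀ j, f0 (y j) = φ j := by
    intro j
    simp only [hf0]
    rw [Finset.sum_eq_single j (fun k _ hkj => if_neg (fun h => hkj ((hyinj h).symm)))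
      (fun h => absurd (Finset.mem_univ j) h)]
    simp
  have hf0fin : energy c f0 ≠ ⊤ := by
    refine energy_ne_top hcs hc0 hπ f0 (Set.Finite.subset (Set.finite_range y) ?_)
    intro v hv
    simp only [Function.mem_support, hf0] at hv
    by_contra hvr
    refine hv (Finset.sum_eq_zero fun k _ => ?_)
    rw [if_neg (fun h => hvr ⟨k, h.symm⟩)]
  -- a is bounded above
  have ha_bdd : BddAbove (Set.range a) := by
    refine ⟨(2 * energy c f0).toReal, ?_⟩
    rintro _ ⟨n, rfl⟩
    exact (ENNReal.ofReal_le_iff_le_toReal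
      (ENNReal.mul_ne_top (by norm_num) hf0fin)).mp (hkey f0 hf0b n)
  set ℓ : ℝ := ⨆ n, a n with hℓ
  have haℓ : Tendsto a atTop (nhds ℓ) := tendsto_atTop_ciSup ha_mono ha_bdd
  have haleℓ : ∀ n, a n ≤ ℓ := fun n => le_ciSup ha_bdd n
  -- L3 : energy of differences
  have hL3 : ∀ N p q : ℕ, N ≤ p → N ≤ q →
      En' c (W N) (E N) (fun v => u p v - u q v) ≤ 4 * (ℓ - a N) := by
    intro N p q hNp hNq
    set md : V → ℝ := fun v => (u p v + u q v) / 2 with hmd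
    have par : En' c (W N) (E N) (fun v => u p v - u q v)
        = 2 * En' c (W N) (E N) (u p) + 2 * En' c (W N) (E N) (u q)
          - 4 * En' c (W N) (E N) md := by
      simp only [En', Finset.mul_sum, ← Finset.sum_add_distrib, ← Finset.sum_sub_distrib]
      refine Finset.sum_congr rfl fun pr _ => ?_
      by_cases hE : pr ∈ E N <;> simp only [hmd, hE, if_true, if_false] <;> ring
    have h1 : En' c (W N) (E N) (u p) ≤ a p := En'_mono hc0 (hWle hNp) (hEle hNp) (u p)
    have h2 : En' c (W N) (E N) (u q) ≤ a q := En'_mono hc0 (hWle hNq) (hEle hNq) (u q)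
    have h3 : a N ≤ En' c (W N) (E N) md :=
      En'_min hcs hc0 (W N) (E N) (hEsym N) y (u N) md (huh N)
        (fun j => by simp [hmd, hub])
    have h4 := haleℓ p
    have h5 := haleℓ q
    linarith
  -- Cauchy pointwise, by induction along paths
  have hcauchy : ∀ x, CauchySeq (fun n => u n x) := by
    intro x
    induction hconn (y ⟨0, hm⟩) x with
    | refl =>
        have : (fun n => u n (y ⟨0, hm⟩)) = fun _ => φ ⟨0, hm⟩ :=
          funext fun n => hub n _
        rw [this]
        exact cauchySeq_const _
    | @tail b x' hpath step ih =>
        obtain ⟨N0, hN0⟩ := hEcov b x' step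
        have hdiff : CauchySeq (fun n => u n x' - u n b) := by
          rw [Metric.cauchySeq_iff]
          intro ε hε
          have hcpos : 0 < c b x' * ε ^ 2 := mul_pos step (by positivity)
          have htend : Tendsto (fun N => 4 * (ℓ - a N)) atTop (nhds 0) := by
            have := (tendsto_const_nhds (x := ℓ) (f := atTop (α := ℕ))).sub haℓ
            have h4 := this.const_mul (4 : ℝ)
            simpa using h4
          have hev : ∀ᶠ N in atTop, 4 * (ℓ - a N) < c b x' * ε ^ 2 :=
            htend.eventually (Filter.Tendsto.eventually_lt_const hcpos tendsto_id) |>.mono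
              (fun _ h => h)
          obtain ⟨N, hN4, hNge⟩ := (hev.and (eventually_ge_atTop N0)).exists
          refine ⟨N, fun p hp q hq => ?_⟩
          set dv : V → ℝ := fun v => u p v - u q v with hdv
          have hEN : (b, x') ∈ E N := hEle hNge hN0
          obtain ⟨-, hbW, hxW'⟩ := hEadj N b x' hEN
          have hmem : (b, x') ∈ W N ×ˢ W N := Finset.mem_product.mpr ⟨hbW, hxW'⟩
          have hterm : c b x' * (dv x' - dv b) ^ 2 ≤ En' c (W N) (E N) dv := by
            have := Finset.single_le_sum
              (f := fun pr : V × V =>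
                if pr ∈ E N then c pr.1 pr.2 * (dv pr.2 - dv pr.1) ^ 2 else 0)
              (fun pr _ => En'_term_nonneg hc0 (E N) dv pr) hmem
            simp only [if_pos hEN] at this
            simpa [En'] using this
          have hL := hL3 N p q hp hq
          have hsq : (dv x' - dv b) ^ 2 < ε ^ 2 := by
            have h1 : c b x' * (dv x' - dv b) ^ 2 < c b x' * ε ^ 2 := by
              calc c b x' * (dv x' - dv b) ^ 2 ≤ En' c (W N) (E N) dv := hterm
                _ ≤ 4 * (ℓ - a N) := hL
                _ < c b x' * ε ^ 2 := hN4
            exact lt_of_mul_lt_mul_left h1 step.le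
          rw [Real.dist_eq]
          have habs : |dv x' - dv b| < ε := by
            have : |dv x' - dv b| ^ 2 < ε ^ 2 := by rw [sq_abs]; exact hsq
            exact lt_of_pow_lt_pow_left₀ 2 hε.le this
          calc |u p x' - u p b - (u q x' - u q b)| = |dv x' - dv b| := by
                rw [hdv]; ring_nf
            _ < ε := habs
        have hfun : (fun n => u n x') = fun n => (u n x' - u n b) + u n b :=
          funext fun n => by ring
        rw [hfun]
        exact hdiff.add ih
  -- limit function
  have hglim : ∀ x, ∃ l, Tendsto (fun n => u n x) atTop (nhds l) :=
    fun x => cauchySeq_tendsto_of_complete (hcauchy x)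
  choose g hg using hglim
  refine ⟨g, hg, ?_, ?_⟩
  · intro j
    refine tendsto_nhds_unique (hg (y j)) ?_
    have : (fun n => u n (y j)) = fun _ => φ j := funext fun n => hub n j
    rw [this]
    exact tendsto_const_nhds
  · intro f hf
    -- 2 * energy g ≤ 2 * energy f via finite pieces
    have h2 : 2 * energy c g ≤ 2 * energy c f := by
      rw [two_energy (c := c) g, ENNReal.tsum_eq_iSup_sum]
      refine iSup_le fun F => ?_
      set F' : Finset (V × V) := F.filter (fun p => 0 < c p.1 p.2) with hF'
      have hFF' : ∑ p ∈ F, ENNReal.ofReal (c p.1 p.2 * (g p.2 - g p.1) ^ 2)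
          = ∑ p ∈ F', ENNReal.ofReal (c p.1 p.2 * (g p.2 - g p.1) ^ 2) := by
        refine (Finset.sum_filter_of_ne ?_).symm
        intro p _ hne
        by_contra hnotpos
        have : c p.1 p.2 = 0 := le_antisymm (not_lt.mp hnotpos) (hc0 _ _)
        exact hne (by rw [this]; simp)
      rw [hFF']
      -- choose a level containing all edges of F'
      have hFE : ∀ p ∈ F', ∃ n, p ∈ E n := by
        intro p hp
        exact hEcov p.1 p.2 (Finset.mem_filter.mp hp).2
      choose Np hNp using hFE
      set NN : ℕ := F'.attach.sup (fun p => Np p.1 p.2) with hNN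
      have hFin : ∀ n, NN ≤ n → ∀ p ∈ F', p ∈ E n := by
        intro n hn p hp
        refine hEle (le_trans ?_ hn) (hNp p hp)
        exact Finset.le_sup (f := fun p : {x // x ∈ F'} => Np p.1 p.2)
          (Finset.mem_attach F' ⟨p, hp⟩)
      -- finite sums along u n are dominated by a n
      have hdom : ∀ n, NN ≤ n →
          ∑ p ∈ F', ENNReal.ofReal (c p.1 p.2 * (u n p.2 - u n p.1) ^ 2)
            ≤ ENNReal.ofReal (a n) := by
        intro n hn
        have hsub : F' ⊆ W n ×ˢ W n := by
          intro p hp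
          obtain ⟨-, h1, h2⟩ := hEadj n p.1 p.2 (hFin n hn p hp)
          exact Finset.mem_product.mpr ⟨h1, h2⟩
        have : ENNReal.ofReal (a n)
            = ∑ p ∈ W n ×ˢ W n, ENNReal.ofReal
              (if p ∈ E n then c p.1 p.2 * (u n p.2 - u n p.1) ^ 2 else 0) := by
          rw [ha]
          exact ENNReal.ofReal_sum_of_nonneg fun p _ => En'_term_nonneg hc0 (E n) (u n) p
        rw [this]
        calc ∑ p ∈ F', ENNReal.ofReal (c p.1 p.2 * (u n p.2 - u n p.1) ^ 2)
            = ∑ p ∈ F', ENNReal.ofReal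
              (if p ∈ E n then c p.1 p.2 * (u n p.2 - u n p.1) ^ 2 else 0) := by
              refine Finset.sum_congr rfl fun p hp => ?_
              rw [if_pos (hFin n hn p hp)]
          _ ≤ _ := Finset.sum_le_sum_of_subset hsub
      -- take limits
      have hlim : Tendsto (fun n => ∑ p ∈ F',
          ENNReal.ofReal (c p.1 p.2 * (u n p.2 - u n p.1) ^ 2)) atTop
          (nhds (∑ p ∈ F', ENNReal.ofReal (c p.1 p.2 * (g p.2 - g p.1) ^ 2))) := by
        refine tendsto_finset_sum F' fun p _ => ?_
        refine (ENNReal.continuous_ofReal.tendsto _).comp ?_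
        have h1 : Tendsto (fun n => u n p.2 - u n p.1) atTop (nhds (g p.2 - g p.1)) :=
          (hg p.2).sub (hg p.1)
        exact (tendsto_const_nhds.mul ((h1.pow 2)))
      refine le_of_tendsto hlim ?_
      filter_upwards [eventually_ge_atTop NN] with n hn
      exact le_trans (hdom n hn) (hkey f hf n)
    exact (ENNReal.mul_le_mul_iff_right (by norm_num) (by norm_num)).mp h2

lemma sum_ite_eval {m : ℕ} (y : Fin m → V) (hyinj : Function.Injective y)
    (β : Fin m → ℝ) (j : Fin m) :
    ∑ k : Fin m, (if y j = y k then β k else 0) = β j := by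
  rw [Finset.sum_eq_single j (fun k _ hkj => if_neg fun h => hkj ((hyinj h).symm))
    (fun h => absurd (Finset.mem_univ j) h)]
  simp

lemma sum_coef_eval {m : ℕ} (y : Fin m → V) (β : Fin m → ℝ) (h : Fin m → V → ℝ)
    (hb : ∀ k, h k (y k) = 1 ∧ ∀ j, j ≠ k → h k (y j) = 0) (j : Fin m) :
    ∑ k : Fin m, β k * h k (y j) = β j := by
  rw [Finset.sum_eq_single j
    (fun k _ hkj => by rw [(hb k).2 j hkj.symm, mul_zero])
    (fun h => absurd (Finset.mem_univ j) h)]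
  rw [(hb j).1, mul_one]

end Aux

/-- The paper's Lemma 5.5: pointwise convergence of the Tutte embeddings of an
exhaustion by finite connected subgraphs to the Tutte embedding of the infinite
graph. Here `∂ = {y 0, …, y (m-1)}` is a finite enumerated boundary set,
`x̂ ∉ ∂` is a marked vertex, `hbdry k = h^{𝟙_{y k}}` are the energy-minimizing
harmonic-measure functions, `H` is the Tutte embedding of the infinite graph
(boundary values on the unit circle determined by harmonic measure from `x̂`, and
energy-minimizing real and imaginary parts off `∂`), and `Hn n` is the analogous
Tutte embedding inside the finite subgraph `(W n, E n)` built from the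
`(W n, E n)`-harmonic functions `hfin n k`. -/
theorem stmt15 {V : Type*} [Countable V] [Infinite V]
    (c : V → V → ℝ) (hc : Conductance c)
    (m : ℕ) (hm : 1 ≤ m) (y : Fin m → V) (hyinj : Function.Injective y)
    (xhat : V) (hxhat : ∀ k, xhat ≠ y k)
    -- the energy-minimizing harmonic-measure functions `h^{𝟙_{y k}}` for `∂`
    (hbdry : Fin m → V → ℝ)
    (hbdryb : ∀ k, hbdry k (y k) = 1 ∧ ∀ j, j ≠ k → hbdry k (y j) = 0)
    (hbdrym : ∀ k, ∀ f : V → ℝ,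
      (f (y k) = 1 ∧ ∀ j, j ≠ k → f (y j) = 0) → energy c (hbdry k) ≤ energy c f)
    -- the Tutte embedding `H` of the infinite graph
    (H : V → ℂ)
    (hHb : ∀ k, H (y k) =
      Complex.exp (2 * Real.pi * Complex.I *
        ((∑ j ∈ Finset.Iic k, hbdry j xhat : ℝ) : ℂ)))
    (hHre : ∀ f : V → ℝ, (∀ k, f (y k) = (H (y k)).re) →
      energy c (fun v => (H v).re) ≤ energy c f)
    (hHim : ∀ f : V → ℝ, (∀ k, f (y k) = (H (y k)).im) →
      energy c (fun v => (H v).im) ≤ energy c f)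
    -- an exhaustion by finite connected subgraphs, all containing `∂ ∪ {x̂}`
    (W : ℕ → Finset V) (E : ℕ → Set (V × V))
    (hEsym : ∀ n x' y', (x', y') ∈ E n → (y', x') ∈ E n)
    (hEadj : ∀ n x' y', (x', y') ∈ E n → 0 < c x' y' ∧ x' ∈ W n ∧ y' ∈ W n)
    (hWconn : ∀ n, ∀ x' ∈ W n, ∀ y' ∈ W n,
      Relation.ReflTransGen (fun a b => (a, b) ∈ E n) x' y')
    (hWmono : ∀ n, W n ⊆ W (n + 1)) (hEmono : ∀ n, E n ⊆ E (n + 1))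
    (hWcov : ∀ x', ∃ n, x' ∈ W n)
    (hEcov : ∀ x' y', 0 < c x' y' → ∃ n, (x', y') ∈ E n)
    (hyW : ∀ n k, y k ∈ W n) (hxW : ∀ n, xhat ∈ W n)
    -- the `(W n, E n)`-harmonic analogues `h_n^{y_k}` of the `hbdry k`
    (hfin : ℕ → Fin m → V → ℝ)
    (hfinb : ∀ n k, hfin n k (y k) = 1 ∧ ∀ j, j ≠ k → hfin n k (y j) = 0)
    (hfinharm : ∀ n k, ∀ x' ∈ W n, (∀ j, x' ≠ y j) →
      ∑ w ∈ W n, (if (x', w) ∈ E n then c x' w * (hfin n k w - hfin n k x') else 0) = 0)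
    -- the Tutte embeddings `Hn n` of the finite subgraphs
    (Hn : ℕ → V → ℂ)
    (hHnb : ∀ n k, Hn n (y k) =
      Complex.exp (2 * Real.pi * Complex.I *
        ((∑ j ∈ Finset.Iic k, hfin n j xhat : ℝ) : ℂ)))
    (hHnre : ∀ n, ∀ x' ∈ W n, (∀ j, x' ≠ y j) →
      ∑ w ∈ W n, (if (x', w) ∈ E n then c x' w * ((Hn n w).re - (Hn n x').re) else 0) = 0)
    (hHnim : ∀ n, ∀ x' ∈ W n, (∀ j, x' ≠ y j) →
      ∑ w ∈ W n, (if (x', w) ∈ E n then c x' w * ((Hn n w).im - (Hn n x').im) else 0) = 0) :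
    ∀ x : V, Filter.Tendsto (fun n => Hn n x) Filter.atTop (nhds (H x)) := by
  obtain ⟨hcs, hc0, hdiag, hconn, hπ⟩ := hc
  have hWle : ∀ {n p : ℕ}, n ≤ p → W n ⊆ W p := fun {n p} h =>
    (monotone_nat_of_le_succ (fun k => hWmono k)) h
  -- Step A: pointwise convergence of the finite harmonic-measure functions
  have stepA : ∀ k x, Filter.Tendsto (fun n => hfin n k x) Filter.atTop
      (nhds (hbdry k x)) := by
    intro k
    set φk : Fin m → ℝ := fun j => if j = k then 1 else 0 with hφk
    obtain ⟨gk, hgt, hgb, hgm⟩ := main_conv hcs hc0 hconn hπ hm y hyinj W E hEsym hEadj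
      hWmono hEmono hEcov hyW φk (fun n => hfin n k)
      (fun n j => by
        by_cases hj : j = k
        · subst hj; simp [hφk, (hfinb n j).1]
        · simp [hφk, hj, (hfinb n k).2 j hj])
      (fun n => hfinharm n k)
    have hbb : ∀ j, hbdry k (y j) = φk j := by
      intro j
      by_cases hj : j = k
      · subst hj; simp [hφk, (hbdryb j).1]
      · simp [hφk, hj, (hbdryb k).2 j hj]
    have hbm : ∀ f' : V → ℝ, (∀ j, f' (y j) = φk j) →
        energy c (hbdry k) ≤ energy c f' := by
      intro f' hf'
      refine hbdrym k f' ⟨by simpa [hφk] using hf' k, fun j hj => ?_⟩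
      rw [hf' j, hφk]
      simp [hj]
    have hbfin : energy c (hbdry k) ≠ ⊤ := by
      set f0k : V → ℝ := fun v => if v = y k then 1 else 0 with hf0k
      have hcond : f0k (y k) = 1 ∧ ∀ j, j ≠ k → f0k (y j) = 0 := by
        constructor
        · simp [hf0k]
        · intro j hj
          simp only [hf0k]
          rw [if_neg (fun h => hj (hyinj h))]
      refine ne_top_of_le_ne_top (energy_ne_top hcs hc0 hπ f0k ?_) (hbdrym k f0k hcond)
      refine Set.Finite.subset (Set.finite_singleton (y k)) ?_
      intro v hv
      simp only [Function.mem_support, hf0k] at hv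
      by_contra hne
      exact hv (if_neg hne)
    have hEQ : hbdry k = gk :=
      min_unique hc0 hconn hm y φk (hbdry k) gk hbb hgb hbm hgm hbfin
    intro x
    rw [hEQ]
    exact hgt x
  -- Step B: convergence of the boundary values of the finite Tutte embeddings
  have stepB : ∀ k, Filter.Tendsto (fun n => Hn n (y k)) Filter.atTop
      (nhds (H (y k))) := by
    intro k
    have hfn : (fun n => Hn n (y k)) = fun n => Complex.exp (2 * Real.pi * Complex.I *
        ((∑ j ∈ Finset.Iic k, hfin n j xhat : ℝ) : ℂ)) := funext fun n => hHnb n k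
    rw [hfn, hHb k]
    have hsum : Filter.Tendsto (fun n => (∑ j ∈ Finset.Iic k, hfin n j xhat : ℝ))
        Filter.atTop (nhds (∑ j ∈ Finset.Iic k, hbdry j xhat)) :=
      tendsto_finset_sum _ fun j _ => stepA j xhat
    have h1 : Filter.Tendsto (fun n => ((∑ j ∈ Finset.Iic k, hfin n j xhat : ℝ) : ℂ))
        Filter.atTop (nhds ((∑ j ∈ Finset.Iic k, hbdry j xhat : ℝ) : ℂ)) :=
      (Complex.continuous_ofReal.tendsto _).comp hsum
    exact (Complex.continuous_exp.tendsto _).comp (h1.const_mul _)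
  -- Step C: the infinite Tutte embedding is the harmonic-measure combination
  have stepC : ∀ (β : Fin m → ℝ),
      (∀ f : V → ℝ, (∀ j, f (y j) = β j) →
        energy c (fun v => ∑ k, β k * hbdry k v) ≤ energy c f) ∧
      (∀ j, (∑ k, β k * hbdry k (y j)) = β j) := by
    intro β
    obtain ⟨g, hgt, hgb, hgm⟩ := main_conv hcs hc0 hconn hπ hm y hyinj W E hEsym hEadj
      hWmono hEmono hEcov hyW β (fun n v => ∑ k, β k * hfin n k v)
      (fun n j => sum_coef_eval y β (fun k => hfin n k) (hfinb n) j)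
      (fun n x' hx' hb => harm_sum (W n) (E n) β (fun k => hfin n k) x'
        (fun k => hfinharm n k x' hx' hb))
    have hgeq : g = fun v => ∑ k, β k * hbdry k v := by
      funext x
      refine tendsto_nhds_unique (hgt x) ?_
      exact tendsto_finset_sum _ fun k _ => (stepA k x).const_mul (β k)
    rw [hgeq] at hgm hgb
    exact ⟨hgm, hgb⟩
  have hmin_comb : ∀ (β : Fin m → ℝ) (f : V → ℝ), (∀ j, f (y j) = β j) →
      (∀ f' : V → ℝ, (∀ j, f' (y j) = β j) → energy c f ≤ energy c f') → f =
      fun v => ∑ k, β k * hbdry k v := by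
    intro β f hfb hfm
    have hfe : energy c f ≠ ⊤ := by
      set f1 : V → ℝ := fun v => ∑ k : Fin m, if v = y k then β k else 0 with hf1
      have hf1b : ∀ j, f1 (y j) = β j := fun j => sum_ite_eval y hyinj β j
      refine ne_top_of_le_ne_top (energy_ne_top hcs hc0 hπ f1 ?_) (hfm f1 hf1b)
      refine Set.Finite.subset (Set.finite_range y) ?_
      intro v hv
      simp only [Function.mem_support, hf1] at hv
      by_contra hvr
      refine hv (Finset.sum_eq_zero fun k _ => ?_)
      rw [if_neg (fun h => hvr ⟨k, h.symm⟩)]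
    exact min_unique hc0 hconn hm y β f (fun v => ∑ k, β k * hbdry k v)
      hfb (stepC β).2 hfm (stepC β).1 hfe
  have hreC : (fun v => (H v).re) = fun v => ∑ k, (H (y k)).re * hbdry k v :=
    hmin_comb (fun k => (H (y k)).re) (fun v => (H v).re) (fun j => rfl) hHre
  have himC : (fun v => (H v).im) = fun v => ∑ k, (H (y k)).im * hbdry k v :=
    hmin_comb (fun k => (H (y k)).im) (fun v => (H v).im) (fun j => rfl) hHim
  -- final assembly
  intro x
  obtain ⟨N, hNx⟩ := hWcov x
  have hre_ev : ∀ᶠ n in Filter.atTop,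
      (Hn n x).re = ∑ k, (Hn n (y k)).re * hfin n k x := by
    filter_upwards [Filter.eventually_ge_atTop N] with n hn
    exact finite_unique hcs hc0 (W n) (E n) (hEsym n) (fun a b h => hEadj n a b h)
      hm y (hyW n) (hWconn n) (fun v => (Hn n v).re)
      (fun v => ∑ k, (Hn n (y k)).re * hfin n k v) (hHnre n)
      (fun x' hx' hb => harm_sum (W n) (E n) (fun k => (Hn n (y k)).re)
        (fun k => hfin n k) x' (fun k => hfinharm n k x' hx' hb))
      (fun j => (sum_coef_eval y (fun k => (Hn n (y k)).re)
        (fun k => hfin n k) (hfinb n) j).symm)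
      x (hWle hn hNx)
  have him_ev : ∀ᶠ n in Filter.atTop,
      (Hn n x).im = ∑ k, (Hn n (y k)).im * hfin n k x := by
    filter_upwards [Filter.eventually_ge_atTop N] with n hn
    exact finite_unique hcs hc0 (W n) (E n) (hEsym n) (fun a b h => hEadj n a b h)
      hm y (hyW n) (hWconn n) (fun v => (Hn n v).im)
      (fun v => ∑ k, (Hn n (y k)).im * hfin n k v) (hHnim n)
      (fun x' hx' hb => harm_sum (W n) (E n) (fun k => (Hn n (y k)).im)
        (fun k => hfin n k) x' (fun k => hfinharm n k x' hx' hb))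
      (fun j => (sum_coef_eval y (fun k => (Hn n (y k)).im)
        (fun k => hfin n k) (hfinb n) j).symm)
      x (hWle hn hNx)
  have hre_lim : Filter.Tendsto (fun n => ∑ k, (Hn n (y k)).re * hfin n k x)
      Filter.atTop (nhds ((H x).re)) := by
    rw [show (H x).re = ∑ k, (H (y k)).re * hbdry k x from congrFun hreC x]
    exact tendsto_finset_sum _ fun k _ =>
      ((Complex.continuous_re.tendsto _).comp (stepB k)).mul (stepA k x)
  have him_lim : Filter.Tendsto (fun n => ∑ k, (Hn n (y k)).im * hfin n k x)
      Filter.atTop (nhds ((H x).im)) := by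
    rw [show (H x).im = ∑ k, (H (y k)).im * hbdry k x from congrFun himC x]
    exact tendsto_finset_sum _ fun k _ =>
      ((Complex.continuous_im.tendsto _).comp (stepB k)).mul (stepA k x)
  have hre : Filter.Tendsto (fun n => (Hn n x).re) Filter.atTop (nhds ((H x).re)) :=
    hre_lim.congr' (hre_ev.mono fun n h => h.symm)
  have him : Filter.Tendsto (fun n => (Hn n x).im) Filter.atTop (nhds ((H x).im)) :=
    him_lim.congr' (him_ev.mono fun n h => h.symm)
  have hcomb : Filter.Tendsto
      (fun n => (((Hn n x).re : ℂ)) + ((Hn n x).im : ℂ) * Complex.I)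
      Filter.atTop (nhds (((H x).re : ℂ) + ((H x).im : ℂ) * Complex.I)) :=
    (((Complex.continuous_ofReal.tendsto _).comp hre)).add
      ((((Complex.continuous_ofReal.tendsto _).comp him)).mul_const Complex.I)
  have heqf : (fun n => (((Hn n x).re : ℂ)) + ((Hn n x).im : ℂ) * Complex.I)
      = fun n => Hn n x := funext fun n => Complex.re_add_im _
  rw [heqf] at hcomb
  rw [← Complex.re_add_im (H x)]
  exact hcomb
end
end

section
/- Let f : V → ℝ with Energy(f) < ∞ and let x ∈ V be such that Σ_{y ∈ V} c(x,y)(f(y) − f(x)) ≠ 0 (this sum converges absolutely because f has finite energy). Define f̃ : V → ℝ by f̃(z) := f(z) for z ≠ x and f̃(x) := π(x)⁻¹ Σ_{y ∈ V} c(x,y) f(y). Then Energy(f̃) < Energy(f); in particular, replacing the value of a finite-energy function at a point where it fails to be discrete harmonic by the conductance-weighted average of its neighboring values strictly decreases the Dirichlet energy. (The strict energy-decrease step proved in the paper in the course of establishing Proposition 1.3.) -/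
open scoped ENNReal

noncomputable section

open scoped Classical

/-- Split the energy double sum into twice the row at `x` plus the rest. -/
lemma energy_split {V : Type*} (c : V → V → ℝ)
    (hsym : ∀ a b, c a b = c b a) (hdiag : ∀ a, c a a = 0) (h : V → ℝ) (x : V) :
    ∑' z : V, ∑' y : V, ENNReal.ofReal (c z y * (h y - h z) ^ 2)
      = 2 * (∑' y : V, ENNReal.ofReal (c x y * (h y - h x) ^ 2))
        + ∑' z : V, (if z = x then 0 else
            ∑' y : V, (if y = x then 0 else ENNReal.ofReal (c z y * (h y - h z) ^ 2))) := by
  set G : V → ℝ≥0∞ := fun z => ∑' y : V, ENNReal.ofReal (c z y * (h y - h z) ^ 2) with hG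
  rw [ENNReal.tsum_eq_add_tsum_ite (f := G) x]
  have hterm : ∀ z : V, (if z = x then 0 else G z)
      = (if z = x then 0 else ENNReal.ofReal (c z x * (h x - h z) ^ 2))
        + (if z = x then 0 else
            ∑' y : V, (if y = x then 0 else ENNReal.ofReal (c z y * (h y - h z) ^ 2))) := by
    intro z
    by_cases hz : z = x
    · simp [hz]
    · simp only [hz, if_false, hG]
      rw [ENNReal.tsum_eq_add_tsum_ite (b := x)]
  calc G x + ∑' z, (if z = x then 0 else G z)
      = G x + ((∑' z : V, (if z = x then 0 else ENNReal.ofReal (c z x * (h x - h z) ^ 2)))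
          + ∑' z : V, (if z = x then 0 else
              ∑' y : V, (if y = x then 0 else ENNReal.ofReal (c z y * (h y - h z) ^ 2)))) := by
        rw [tsum_congr hterm, ENNReal.tsum_add]
    _ = G x + (G x + ∑' z : V, (if z = x then 0 else
              ∑' y : V, (if y = x then 0 else ENNReal.ofReal (c z y * (h y - h z) ^ 2)))) := by
        congr 2
        refine (tsum_congr fun z => ?_).symm
        by_cases hz : z = x
        · simp [hz, hdiag]
        · simp only [hz, if_false]
          rw [hsym x z]
          ring_nf
    _ = _ := by rw [← add_assoc, two_mul]

/-- Strict energy decrease: if a finite-energy function `f` fails to be discrete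
harmonic at `x` (i.e. `Σ_y c(x,y)(f(y) - f(x)) ≠ 0`), then replacing its value at
`x` by the conductance-weighted average `π(x)⁻¹ Σ_y c(x,y) f(y)` of its neighboring
values strictly decreases the Dirichlet energy. -/
theorem stmt16 {V : Type*} [Countable V] [Infinite V]
    (c : V → V → ℝ) (hc : Conductance c)
    (f : V → ℝ) (hE : energy c f < ⊤) (x : V)
    (hx : ∑' y, c x y * (f y - f x) ≠ 0) :
    energy c (fun z => if z = x then (∑' y, c x y * f y) / (∑' y, c x y) else f z) <
      energy c f := by
  obtain ⟨hsym, hnn, hdiag, hconn, hπ⟩ := hc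
  set g : V → ℝ := fun z => if z = x then (∑' y, c x y * f y) / (∑' y, c x y) else f z with hg
  set P : ℝ := ∑' y, c x y with hP
  set a : ℝ := (∑' y, c x y * f y) / P with ha
  set u : V → ℝ := fun y => f y - f x with hu
  set D : ℝ := ∑' y, c x y * u y with hD
  have hπx : Summable fun y => c x y := hπ x
  -- P > 0
  have hPpos : 0 < P := by
    obtain ⟨y, hy⟩ := exists_ne x
    obtain ⟨z, hz, -⟩ := (Relation.ReflTransGen.cases_head (hconn x y)).resolve_left (Ne.symm hy)
    exact lt_of_lt_of_le hz (Summable.le_tsum hπx z fun j _ => hnn x j)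
  -- finiteness of the double sum
  have hT : (∑' z : V, ∑' y : V, ENNReal.ofReal (c z y * (f y - f z) ^ 2)) ≠ ⊤ := by
    intro h
    rw [energy, h, ENNReal.mul_top (by norm_num)] at hE
    exact absurd hE (lt_irrefl _)
  have hGx : (∑' y : V, ENNReal.ofReal (c x y * (f y - f x) ^ 2)) ≠ ⊤ :=
    (ENNReal.lt_top_of_tsum_ne_top hT x).ne
  -- summability facts
  have hSm2 : Summable fun y => c x y * u y ^ 2 := by
    refine (ENNReal.summable_toReal hGx).congr fun y => ?_
    rw [ENNReal.toReal_ofReal (mul_nonneg (hnn x y) (sq_nonneg _))]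
  have hSm1 : Summable fun y => c x y * u y := by
    refine Summable.of_abs (Summable.of_nonneg_of_le (fun y => abs_nonneg _)
      (fun y => ?_) (hπx.add hSm2))
    rw [abs_mul, abs_of_nonneg (hnn x y)]
    have h1 : |u y| ≤ 1 + u y ^ 2 := by nlinarith [sq_nonneg (|u y| - 1), sq_abs (u y)]
    calc c x y * |u y| ≤ c x y * (1 + u y ^ 2) := by
          exact mul_le_mul_of_nonneg_left h1 (hnn x y)
      _ = c x y + c x y * u y ^ 2 := by ring
  have hSmf : Summable fun y => c x y * f y := by
    refine (hSm1.add (hπx.mul_right (f x))).congr fun y => ?_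
    simp only [hu]; ring
  have hDne : D ≠ 0 := hx
  set s : ℝ := f x - a with hs
  have hPa : P * a = ∑' y, c x y * f y := by
    rw [ha, mul_div_cancel₀ _ hPpos.ne']
  have hPs : P * s = -D := by
    have h2 : D = (∑' y, c x y * f y) - P * f x := by
      rw [hD]
      have : (fun y => c x y * u y) = fun y => c x y * f y - c x y * f x := by
        funext y; simp only [hu]; ring
      rw [this, Summable.tsum_sub hSmf (hπx.mul_right (f x)), tsum_mul_right, hP]
    rw [hs]; rw [h2, ← hPa]; ring
  have hsval : s = -(D / P) := by
    rw [← neg_div, eq_div_iff hPpos.ne']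
    linear_combination hPs
  -- the quadratic identity
  set E0 : ℝ := ∑' y, c x y * u y ^ 2 with hE0
  have hfa : (fun y => c x y * (f y - a) ^ 2)
      = fun y => c x y * u y ^ 2 + (2 * s) * (c x y * u y) + s ^ 2 * c x y := by
    funext y; simp only [hu, hs]; ring
  have hSma : Summable fun y => c x y * (f y - a) ^ 2 := by
    rw [hfa]
    exact (hSm2.add (hSm1.mul_left _)).add (hπx.mul_left _)
  have hSa : (∑' y, c x y * (f y - a) ^ 2) = E0 + (2 * s) * D + s ^ 2 * P := by
    rw [hfa, Summable.tsum_add (hSm2.add (hSm1.mul_left _)) (hπx.mul_left _),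
      Summable.tsum_add hSm2 (hSm1.mul_left _), tsum_mul_left, tsum_mul_left]
  have hkey : (∑' y, c x y * (f y - a) ^ 2) = E0 - D ^ 2 / P := by
    rw [hSa, hsval]
    field_simp
    ring
  have hE0pos : (∑' y, c x y * (f y - a) ^ 2) < E0 := by
    rw [hkey]
    have : 0 < D ^ 2 / P := div_pos (by positivity) hPpos
    linarith
  have hSanonneg : 0 ≤ ∑' y, c x y * (f y - a) ^ 2 :=
    tsum_nonneg fun y => mul_nonneg (hnn x y) (sq_nonneg _)
  -- rows
  have hrowg : (∑' y : V, ENNReal.ofReal (c x y * (g y - g x) ^ 2))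
      = ENNReal.ofReal (∑' y, c x y * (f y - a) ^ 2) := by
    rw [ENNReal.ofReal_tsum_of_nonneg (fun y => mul_nonneg (hnn x y) (sq_nonneg _)) hSma]
    refine tsum_congr fun y => ?_
    by_cases hy : y = x
    · simp [hy, hdiag]
    · simp [hg, hy, ha]
  have hrowf : (∑' y : V, ENNReal.ofReal (c x y * (f y - f x) ^ 2))
      = ENNReal.ofReal E0 := by
    rw [hE0, ENNReal.ofReal_tsum_of_nonneg (fun y => mul_nonneg (hnn x y) (sq_nonneg _)) hSm2]
  -- rest is the same for f and g
  set Q : ℝ≥0∞ := ∑' z : V, (if z = x then 0 else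
      ∑' y : V, (if y = x then 0 else ENNReal.ofReal (c z y * (f y - f z) ^ 2))) with hQ
  have hrest : (∑' z : V, (if z = x then 0 else
      ∑' y : V, (if y = x then 0 else ENNReal.ofReal (c z y * (g y - g z) ^ 2)))) = Q := by
    refine tsum_congr fun z => ?_
    by_cases hz : z = x
    · simp [hz]
    · simp only [hz, if_false]
      refine tsum_congr fun y => ?_
      by_cases hy : y = x
      · simp [hy]
      · simp [hy, hz, hg]
  have half2 : (1 / 2 : ℝ≥0∞) * 2 = 1 := by
    rw [one_div, ENNReal.inv_mul_cancel two_ne_zero ENNReal.ofNat_ne_top]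
  have henergy : ∀ (h : V → ℝ), (∑' z : V, (if z = x then 0 else
      ∑' y : V, (if y = x then 0 else ENNReal.ofReal (c z y * (h y - h z) ^ 2)))) = Q →
      energy c h = (∑' y : V, ENNReal.ofReal (c x y * (h y - h x) ^ 2)) + (1 / 2) * Q := by
    intro h hQ'
    rw [energy, energy_split c hsym hdiag h x, hQ', mul_add, ← mul_assoc, half2, one_mul]
  have hEf : energy c f = ENNReal.ofReal E0 + (1 / 2) * Q := by
    rw [henergy f rfl, hrowf]
  have hEg : energy c g = ENNReal.ofReal (∑' y, c x y * (f y - a) ^ 2) + (1 / 2) * Q := by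
    rw [henergy g hrest, hrowg]
  have hQtop : (1 / 2 : ℝ≥0∞) * Q ≠ ⊤ := by
    intro h
    rw [hEf, h, add_top] at hE
    exact absurd hE (lt_irrefl _)
  rw [hEf, hEg]
  exact ENNReal.add_lt_add_right hQtop
    ((ENNReal.ofReal_lt_ofReal_iff (lt_of_le_of_lt hSanonneg hE0pos)).mpr hE0pos)
end
end
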